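/- arXiv:1210.2068 — 4 statements merged into one kernel-verified Lean document; each statement's English description precedes it below -/
import Mathlib

section
/- Let F be a Finsler structure on U, g̃ a Riemannian metric on U, and a : U → ℝⁿ a smooth vector field that is nowhere zero and parallel with respect to g̃ (∂a^i/∂x^j + γ̃^i_{jl} a^l = 0 for all i, j). Assume (F²)_{||h} = ( g_{pq} a^p y^q ) · y_h on U × (ℝⁿ∖{0}) for every h. Then the identity map id : (U,g) → (U,g̃) is proper biharmonic: its tension τ^i = −(n/2) a^i is nowhere zero (so id is not harmonic), τ is parallel with respect to g̃ (τ^i_{||j} := ∂τ^i/∂x^j + γ̃^i_{jl} τ^l = 0), and the biharmonic equation g^{jk}( τ^i_{||j||k} − Γ^l_{jk} τ^i_{||l} − R̃_j~^i~_{lk} τ^l ) = 0 holds on U × (ℝⁿ∖{0}), where τ^i_{||j||k} := ∂_k τ^i_{||j} + γ̃^i_{kl} τ^l_{||j} − γ̃^l_{jk} τ^i_{||l} and Γ^l_{jk} are any functions. -/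
noncomputable section

open scoped BigOperators

/-- Partial derivative of a function on `Fin k → ℝ` in the `i`-th coordinate direction. -/
def pd {k : ℕ} {E : Type*} [NormedAddCommGroup E] [NormedSpace ℝ E]
    (f : (Fin k → ℝ) → E) (i : Fin k) (x : Fin k → ℝ) : E :=
  fderiv ℝ f x (Pi.single i 1)

/-- The fundamental tensor `g_{ij}(x,y) = (1/2) ∂²(F²)/∂y^i∂y^j` of a Finsler function. -/
def gF {n : ℕ} (F : (Fin n → ℝ) → (Fin n → ℝ) → ℝ) (i j : Fin n)
    (x y : Fin n → ℝ) : ℝ :=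
  (1 / 2) * pd (fun y' => pd (fun y'' => (F x y'') ^ 2) j y') i y

/-- The fundamental tensor as a matrix. -/
def gMat {n : ℕ} (F : (Fin n → ℝ) → (Fin n → ℝ) → ℝ) (x y : Fin n → ℝ) :
    Matrix (Fin n) (Fin n) ℝ :=
  Matrix.of fun i j => gF F i j x y

/-- The inverse fundamental tensor `g^{ij}`. -/
def gInv {n : ℕ} (F : (Fin n → ℝ) → (Fin n → ℝ) → ℝ) (i j : Fin n)
    (x y : Fin n → ℝ) : ℝ :=
  (gMat F x y)⁻¹ i j

/-- `y_h := (1/2) ∂(F²)/∂y^h`. -/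
def yLow {n : ℕ} (F : (Fin n → ℝ) → (Fin n → ℝ) → ℝ) (h : Fin n)
    (x y : Fin n → ℝ) : ℝ :=
  (1 / 2) * pd (fun y' => (F x y') ^ 2) h y

/-- A Finsler structure on an open set `U ⊆ ℝⁿ`, in coordinates. -/
structure IsFinsler {n : ℕ} (U : Set (Fin n → ℝ))
    (F : (Fin n → ℝ) → (Fin n → ℝ) → ℝ) : Prop where
  isOpen : IsOpen U
  cont : ContinuousOn (fun p : (Fin n → ℝ) × (Fin n → ℝ) => F p.1 p.2) (U ×ˢ Set.univ)
  smooth : ContDiffOn ℝ (⊤ : ℕ∞) (fun p : (Fin n → ℝ) × (Fin n → ℝ) => F p.1 p.2)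
    (U ×ˢ {y | y ≠ 0})
  homog : ∀ x ∈ U, ∀ y : Fin n → ℝ, ∀ l : ℝ, 0 < l → F x (l • y) = l * F x y
  posdef : ∀ x ∈ U, ∀ y : Fin n → ℝ, y ≠ 0 → (gMat F x y).PosDef

/-- The spray coefficients `G^i` of a Finsler structure:
`2G^i = (1/2) g^{ih}( ∂²(F²)/∂y^h∂x^k · y^k − ∂(F²)/∂x^h )`. -/
def spray {n : ℕ} (F : (Fin n → ℝ) → (Fin n → ℝ) → ℝ) (i : Fin n)
    (x y : Fin n → ℝ) : ℝ :=
  (1 / 4) * ∑ h, gInv F i h x y *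
    ((∑ k, pd (fun x' => pd (fun y' => (F x' y') ^ 2) h y) k x * y k)
      - pd (fun x' => (F x' y) ^ 2) h x)

/-- The Cartan nonlinear connection `G^i_j := ∂G^i/∂y^j`. -/
def nCart {n : ℕ} (F : (Fin n → ℝ) → (Fin n → ℝ) → ℝ) (i j : Fin n)
    (x y : Fin n → ℝ) : ℝ :=
  pd (fun y' => spray F i x y') j y

/-- The adapted (horizontal) derivation `δ_i := ∂/∂x^i − G^j_i ∂/∂y^j` acting on
functions of `(x,y)`. -/
def hder {n : ℕ} (F : (Fin n → ℝ) → (Fin n → ℝ) → ℝ) (i : Fin n)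
    (f : (Fin n → ℝ) → (Fin n → ℝ) → ℝ) (x y : Fin n → ℝ) : ℝ :=
  pd (fun x' => f x' y) i x - ∑ j, nCart F j i x y * pd (fun y' => f x y') j y

/-- The Chern–Rund connection coefficients
`Γ^i_{jk} := (1/2) g^{ih}( δ_k g_{hj} + δ_j g_{hk} − δ_h g_{jk} )`. -/
def chern {n : ℕ} (F : (Fin n → ℝ) → (Fin n → ℝ) → ℝ) (i j k : Fin n)
    (x y : Fin n → ℝ) : ℝ :=
  (1 / 2) * ∑ h, gInv F i h x y *
    (hder F k (gF F h j) x y + hder F j (gF F h k) x y - hder F h (gF F j k) x y)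

/-- `G^i_{jk} := ∂²G^i/∂y^j∂y^k`. -/
def sprayH {n : ℕ} (F : (Fin n → ℝ) → (Fin n → ℝ) → ℝ) (i j k : Fin n)
    (x y : Fin n → ℝ) : ℝ :=
  pd (fun y' => pd (fun y'' => spray F i x y'') k y') j y

/-- The torsion trace `P_i := P^j_{ij} = G^j_{ij} − Γ^j_{ij}`. -/
def pOne {n : ℕ} (F : (Fin n → ℝ) → (Fin n → ℝ) → ℝ) (i : Fin n)
    (x y : Fin n → ℝ) : ℝ :=
  ∑ j, (sprayH F j i j x y - chern F j i j x y)
/-- A Riemannian metric on an open set of `ℝ^m`, in coordinates. -/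
structure IsRiemann {m : ℕ} (Ut : Set (Fin m → ℝ))
    (gt : (Fin m → ℝ) → Matrix (Fin m) (Fin m) ℝ) : Prop where
  isOpen : IsOpen Ut
  smooth : ∀ i j, ContDiffOn ℝ (⊤ : ℕ∞) (fun x => gt x i j) Ut
  symm : ∀ x ∈ Ut, (gt x).IsSymm
  posdef : ∀ x ∈ Ut, (gt x).PosDef

/-- The Christoffel symbols `γ̃^i_{jk}` of a Riemannian metric in coordinates. -/
def christ {m : ℕ} (gt : (Fin m → ℝ) → Matrix (Fin m) (Fin m) ℝ)
    (i j k : Fin m) (x : Fin m → ℝ) : ℝ :=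
  (1 / 2) * ∑ h, (gt x)⁻¹ i h *
    (pd (fun x' => gt x' h j) k x + pd (fun x' => gt x' h k) j x
      - pd (fun x' => gt x' j k) h x)
/-- The horizontal derivation `δ̃_j := ∂/∂x^j − γ̃^k_{jl} y^l ∂/∂y^k` of a Riemannian
metric, acting on functions of `(x,y)`; `f_{||j} := δ̃_j f`. -/
def rhder {n : ℕ} (gt : (Fin n → ℝ) → Matrix (Fin n) (Fin n) ℝ) (j : Fin n)
    (f : (Fin n → ℝ) → (Fin n → ℝ) → ℝ) (x y : Fin n → ℝ) : ℝ :=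
  pd (fun x' => f x' y) j x
    - ∑ k, (∑ l, christ gt k j l x * y l) * pd (fun y' => f x y') k y
/-- The curvature tensor `R̃_j{}^i{}_{kl}` of a Riemannian metric in coordinates. -/
def rcurv {m : ℕ} (gt : (Fin m → ℝ) → Matrix (Fin m) (Fin m) ℝ)
    (j i k l : Fin m) (x : Fin m → ℝ) : ℝ :=
  pd (fun x' => christ gt i j k x') l x - pd (fun x' => christ gt i j l x') k x
    + ∑ h, christ gt h j k x * christ gt i h l x
    - ∑ h, christ gt h j l x * christ gt i h k x

/-- The tension of the identity map `id : (U,g) → (U,g̃)`: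
`τ^i(x,y) := g^{jk}( γ̃^i_{jk} − G^i_{jk} )`. -/
def tauId {n : ℕ} (F : (Fin n → ℝ) → (Fin n → ℝ) → ℝ)
    (gt : (Fin n → ℝ) → Matrix (Fin n) (Fin n) ℝ) (i : Fin n)
    (x y : Fin n → ℝ) : ℝ :=
  ∑ j, ∑ k, gInv F j k x y * (christ gt i j k x - sprayH F i j k x y)

/-- `τ^i_{||j} := ∂τ^i/∂x^j + γ̃^i_{jl} τ^l`. -/
def tauIdCov {n : ℕ} (F : (Fin n → ℝ) → (Fin n → ℝ) → ℝ)
    (gt : (Fin n → ℝ) → Matrix (Fin n) (Fin n) ℝ) (i j : Fin n)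
    (x y : Fin n → ℝ) : ℝ :=
  pd (fun x' => tauId F gt i x' y) j x + ∑ l, christ gt i j l x * tauId F gt l x y

/-- `τ^i_{||j||k} := ∂_k τ^i_{||j} + γ̃^i_{kl} τ^l_{||j} − γ̃^l_{jk} τ^i_{||l}`. -/
def tauIdCov2 {n : ℕ} (F : (Fin n → ℝ) → (Fin n → ℝ) → ℝ)
    (gt : (Fin n → ℝ) → Matrix (Fin n) (Fin n) ℝ) (i j k : Fin n)
    (x y : Fin n → ℝ) : ℝ :=
  pd (fun x' => tauIdCov F gt i j x' y) k x
    + ∑ l, christ gt i k l x * tauIdCov F gt l j x y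
    - ∑ l, christ gt l j k x * tauIdCov F gt i l x y


namespace Aux

section PD
variable {k : ℕ}

lemma pd_congr {f g : (Fin k → ℝ) → ℝ} {x : Fin k → ℝ} (h : f =ᶠ[nhds x] g) (i : Fin k) :
    pd f i x = pd g i x := by unfold pd; rw [h.fderiv_eq]

lemma pd_of_hasFDerivAt {f : (Fin k → ℝ) → ℝ} {x : Fin k → ℝ}
    {L : (Fin k → ℝ) →L[ℝ] ℝ} (h : HasFDerivAt f L x) (i : Fin k) :
    pd f i x = L (Pi.single i 1) := by unfold pd; rw [h.fderiv]

lemma pd_const (c : ℝ) (i : Fin k) (x : Fin k → ℝ) : pd (fun _ => c) i x = 0 := by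
  unfold pd; rw [fderiv_fun_const]; rfl

lemma pd_add {f g : (Fin k → ℝ) → ℝ} {x : Fin k → ℝ}
    (hf : DifferentiableAt ℝ f x) (hg : DifferentiableAt ℝ g x) (i : Fin k) :
    pd (fun y => f y + g y) i x = pd f i x + pd g i x := by
  unfold pd; rw [fderiv_fun_add hf hg]; rfl

lemma pd_sub {f g : (Fin k → ℝ) → ℝ} {x : Fin k → ℝ}
    (hf : DifferentiableAt ℝ f x) (hg : DifferentiableAt ℝ g x) (i : Fin k) :
    pd (fun y => f y - g y) i x = pd f i x - pd g i x := by
  unfold pd; rw [fderiv_fun_sub hf hg]; rfl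

lemma pd_mul {f g : (Fin k → ℝ) → ℝ} {x : Fin k → ℝ}
    (hf : DifferentiableAt ℝ f x) (hg : DifferentiableAt ℝ g x) (i : Fin k) :
    pd (fun y => f y * g y) i x = pd f i x * g x + f x * pd g i x := by
  unfold pd; rw [fderiv_fun_mul hf hg]; simp; ring

lemma pd_const_mul {f : (Fin k → ℝ) → ℝ} {x : Fin k → ℝ} (c : ℝ)
    (hf : DifferentiableAt ℝ f x) (i : Fin k) :
    pd (fun y => c * f y) i x = c * pd f i x := by
  unfold pd; rw [fderiv_const_mul hf]; rfl

lemma pd_sum {ι : Type*} {s : Finset ι} {f : ι → (Fin k → ℝ) → ℝ} {x : Fin k → ℝ}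
    (hf : ∀ i ∈ s, DifferentiableAt ℝ (f i) x) (j : Fin k) :
    pd (fun y => ∑ i ∈ s, f i y) j x = ∑ i ∈ s, pd (f i) j x := by
  unfold pd; rw [fderiv_fun_sum hf]; simp

lemma pd_coord (q j : Fin k) (x : Fin k → ℝ) :
    pd (fun y => y q) j x = if q = j then 1 else 0 := by
  unfold pd
  rw [show (fun y : Fin k → ℝ => y q)
      = ⇑(ContinuousLinearMap.proj (R := ℝ) (φ := fun _ : Fin k => ℝ) q) from rfl,
    ContinuousLinearMap.fderiv]
  simp [Pi.single_apply]

lemma fderiv_apply_eq_sum_pd {f : (Fin k → ℝ) → ℝ} {x v : Fin k → ℝ} :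
    fderiv ℝ f x v = ∑ q, v q * pd f q x := by
  have hv : v = ∑ q, v q • (Pi.single q (1:ℝ) : Fin k → ℝ) := by
    funext r; simp [Pi.single_apply]
  conv_lhs => rw [hv]
  rw [map_sum]
  refine Finset.sum_congr rfl fun q _ => ?_
  rw [map_smul]; rfl

lemma contDiffOn_pd {f : (Fin k → ℝ) → ℝ} {s : Set (Fin k → ℝ)}
    (hf : ContDiffOn ℝ (⊤ : ℕ∞) f s) (hs : IsOpen s) (i : Fin k) :
    ContDiffOn ℝ (⊤ : ℕ∞) (fun x => pd f i x) s := by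
  have h1 : ContDiffOn ℝ (⊤ : ℕ∞) (fderiv ℝ f) s := by
    have := hf.fderiv_of_isOpen hs (m := (⊤ : ℕ∞)) (by norm_cast)
    exact this
  exact h1.clm_apply contDiffOn_const

lemma pd_comm {f : (Fin k → ℝ) → ℝ} {x : Fin k → ℝ}
    (hf : ContDiffAt ℝ (⊤ : ℕ∞) f x) (i j : Fin k) :
    pd (fun y => pd f j y) i x = pd (fun y => pd f i y) j x := by
  have hsym : IsSymmSndFDerivAt ℝ f x := by
    apply ContDiffAt.isSymmSndFDerivAt (n := ((⊤:ℕ∞) : WithTop ℕ∞))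
    · exact_mod_cast hf
    · rw [show ((⊤:ℕ∞) : WithTop ℕ∞) = (⊤:ℕ∞) from rfl]
      rw [minSmoothness_of_isRCLikeNormedField]; exact WithTop.coe_le_coe.mpr le_top
  have hdf : DifferentiableAt ℝ (fderiv ℝ f) x :=
    (hf.fderiv_right (m := (⊤:ℕ∞)) (by norm_cast)).differentiableAt
      (by simp)
  have key : ∀ v w : Fin k → ℝ,
      fderiv ℝ (fun y => fderiv ℝ f y v) x w = fderiv ℝ (fderiv ℝ f) x w v := by
    intro v w
    rw [fderiv_clm_apply hdf (differentiableAt_const v)]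
    simp
  show fderiv ℝ (fun y => fderiv ℝ f y (Pi.single j 1)) x (Pi.single i 1) = _
  rw [key, hsym]
  rw [← key]
  rfl

end PD

section Prod
variable {n : ℕ}

abbrev X (n : ℕ) := Fin n → ℝ

lemma hasFDerivAt_mkLeft (y : X n) (x : X n) :
    HasFDerivAt (fun x' : X n => (x', y))
      ((ContinuousLinearMap.id ℝ (X n)).prod 0) x :=
  HasFDerivAt.prodMk (hasFDerivAt_id x) (hasFDerivAt_const y x)

lemma hasFDerivAt_mkRight (x : X n) (y : X n) :
    HasFDerivAt (fun y' : X n => (x, y'))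
      ((0 : X n →L[ℝ] X n).prod (ContinuousLinearMap.id ℝ (X n))) y :=
  HasFDerivAt.prodMk (hasFDerivAt_const x y) (hasFDerivAt_id y)

lemma pd_left {W : X n × X n → ℝ} {x y : X n} (hW : DifferentiableAt ℝ W (x, y)) (k : Fin n) :
    pd (fun x' => W (x', y)) k x = fderiv ℝ W (x, y) (Pi.single k 1, 0) := by
  have h := hW.hasFDerivAt.comp x (hasFDerivAt_mkLeft y x)
  unfold pd
  rw [show (fun x' => W (x', y)) = W ∘ (fun x' => (x', y)) from rfl, h.fderiv]
  rfl

lemma pd_right {W : X n × X n → ℝ} {x y : X n} (hW : DifferentiableAt ℝ W (x, y)) (h : Fin n) :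
    pd (fun y' => W (x, y')) h y = fderiv ℝ W (x, y) (0, Pi.single h 1) := by
  have hh := hW.hasFDerivAt.comp y (hasFDerivAt_mkRight x y)
  unfold pd
  rw [show (fun y' => W (x, y')) = W ∘ (fun y' => (x, y')) from rfl, hh.fderiv]
  rfl

lemma contDiffAt_left {W : X n × X n → ℝ} {x y : X n}
    (hW : ContDiffAt ℝ (⊤ : ℕ∞) W (x, y)) :
    ContDiffAt ℝ (⊤ : ℕ∞) (fun y' => W (x, y')) y :=
  hW.comp y (ContDiffAt.prodMk (contDiffAt_const (c := x)) contDiffAt_id)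

lemma contDiffAt_right {W : X n × X n → ℝ} {x y : X n}
    (hW : ContDiffAt ℝ (⊤ : ℕ∞) W (x, y)) :
    ContDiffAt ℝ (⊤ : ℕ∞) (fun x' => W (x', y)) x :=
  hW.comp x (ContDiffAt.prodMk contDiffAt_id (contDiffAt_const (c := y)))

lemma pd_comm_mixed {W : X n × X n → ℝ} {x y : X n}
    (hW : ContDiffAt ℝ (⊤ : ℕ∞) W (x, y)) (k h : Fin n) :
    pd (fun x' => pd (fun y' => W (x', y')) h y) k x
      = pd (fun y' => pd (fun x' => W (x', y')) k x) h y := by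
  obtain ⟨u, hu, hWu⟩ : ∃ u ∈ nhds (x, y), ContDiffOn ℝ 2 W u :=
    hW.contDiffOn (m := 2)
      (by rw [show ((⊤:ℕ∞) : WithTop ℕ∞) = (⊤:ℕ∞) from rfl]
          exact WithTop.coe_le_coe.mpr le_top) (by simp)
  rcases mem_nhds_iff.1 hu with ⟨v, hvu, hv, hxyv⟩
  have hWv : ContDiffOn ℝ 2 W v := hWu.mono hvu
  have hdiff : ∀ p ∈ v, DifferentiableAt ℝ W p := fun p hp =>
    ((hWv p hp).contDiffAt (hv.mem_nhds hp)).differentiableAt two_ne_zero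
  have hsym : IsSymmSndFDerivAt ℝ W (x, y) := by
    apply ContDiffAt.isSymmSndFDerivAt (n := ((⊤:ℕ∞) : WithTop ℕ∞))
    · exact_mod_cast hW
    · rw [show ((⊤:ℕ∞) : WithTop ℕ∞) = (⊤:ℕ∞) from rfl]
      rw [minSmoothness_of_isRCLikeNormedField]; exact WithTop.coe_le_coe.mpr le_top
  have hdW : DifferentiableAt ℝ (fderiv ℝ W) (x, y) :=
    (hW.fderiv_right (m := (⊤:ℕ∞)) (by norm_cast)).differentiableAt
      (by simp)
  have hL : pd (fun x' => pd (fun y' => W (x', y')) h y) k x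
      = fderiv ℝ (fderiv ℝ W) (x, y) (Pi.single k 1, 0) (0, Pi.single h 1) := by
    have e1 : (fun x' => pd (fun y' => W (x', y')) h y)
        =ᶠ[nhds x] (fun x' => fderiv ℝ W (x', y) (0, Pi.single h 1)) := by
      have : ∀ᶠ x' in nhds x, (x', y) ∈ v := by
        have : Continuous (fun x' : X n => (x', y)) := by fun_prop
        exact this.continuousAt.preimage_mem_nhds (hv.mem_nhds hxyv)
      filter_upwards [this] with x' hx'
      exact pd_right (hdiff _ hx') h
    rw [pd_congr e1 k]
    have hd2 : DifferentiableAt ℝ (fun x' : X n => fderiv ℝ W (x', y)) x :=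
      hdW.comp x (hasFDerivAt_mkLeft y x).differentiableAt
    unfold pd
    rw [fderiv_clm_apply hd2 (differentiableAt_const _)]
    simp only [ContinuousLinearMap.add_apply, ContinuousLinearMap.comp_apply,
      ContinuousLinearMap.flip_apply, fderiv_const, Pi.zero_apply,
      ContinuousLinearMap.comp_zero, ContinuousLinearMap.zero_apply, add_zero,
      ContinuousLinearMap.zero_comp]
    have h2 := (hdW.hasFDerivAt.comp x (hasFDerivAt_mkLeft y x))
    rw [show (fun x' : X n => fderiv ℝ W (x', y)) = (fderiv ℝ W) ∘ (fun x' => (x', y)) from rfl,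
      h2.fderiv]
    simp
  have hR : pd (fun y' => pd (fun x' => W (x', y')) k x) h y
      = fderiv ℝ (fderiv ℝ W) (x, y) (0, Pi.single h 1) (Pi.single k 1, 0) := by
    have e1 : (fun y' => pd (fun x' => W (x', y')) k x)
        =ᶠ[nhds y] (fun y' => fderiv ℝ W (x, y') (Pi.single k 1, 0)) := by
      have : ∀ᶠ y' in nhds y, (x, y') ∈ v := by
        have : Continuous (fun y' : X n => (x, y')) := by fun_prop
        exact this.continuousAt.preimage_mem_nhds (hv.mem_nhds hxyv)
      filter_upwards [this] with y' hy'
      exact pd_left (hdiff _ hy') k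
    rw [pd_congr e1 h]
    have hd2 : DifferentiableAt ℝ (fun y' : X n => fderiv ℝ W (x, y')) y :=
      hdW.comp y (hasFDerivAt_mkRight x y).differentiableAt
    unfold pd
    rw [fderiv_clm_apply hd2 (differentiableAt_const _)]
    simp only [ContinuousLinearMap.add_apply, ContinuousLinearMap.comp_apply,
      ContinuousLinearMap.flip_apply, fderiv_const, Pi.zero_apply,
      ContinuousLinearMap.comp_zero, ContinuousLinearMap.zero_apply, add_zero,
      ContinuousLinearMap.zero_comp]
    have h2 := (hdW.hasFDerivAt.comp y (hasFDerivAt_mkRight x y))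
    rw [show (fun y' : X n => fderiv ℝ W (x, y')) = (fderiv ℝ W) ∘ (fun y' => (x, y')) from rfl,
      h2.fderiv]
    simp
  rw [hL, hR, hsym]

lemma euler {f : X n → ℝ} {y : X n} (d : ℕ) (hd : DifferentiableAt ℝ f y)
    (hom : ∀ l : ℝ, 0 < l → f (l • y) = l ^ d * f y) :
    ∑ q, y q * pd f q y = d * f y := by
  have h1 : HasDerivAt (fun l : ℝ => l • y) y 1 := by
    simpa using (hasDerivAt_id (1:ℝ)).smul_const y
  have h2 : HasDerivAt (fun l : ℝ => f (l • y)) (fderiv ℝ f y y) 1 := by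
    have hd' : HasFDerivAt f (fderiv ℝ f y) ((1:ℝ) • y) := by rw [one_smul]; exact hd.hasFDerivAt
    exact hd'.comp_hasDerivAt 1 h1
  have h3 : HasDerivAt (fun l : ℝ => l ^ d * f y) ((d : ℝ) * f y) 1 := by
    simpa using (hasDerivAt_pow d (1:ℝ)).mul_const (f y)
  have heq : (fun l : ℝ => f (l • y)) =ᶠ[nhds 1] (fun l : ℝ => l ^ d * f y) := by
    filter_upwards [eventually_gt_nhds (by norm_num : (0:ℝ) < 1)] with l hl
    exact hom l hl
  have h4 : HasDerivAt (fun l : ℝ => f (l • y)) ((d : ℝ) * f y) 1 :=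
    h3.congr_of_eventuallyEq heq
  have := h2.unique h4
  rw [← fderiv_apply_eq_sum_pd, this]

lemma pd_homog {f : X n → ℝ} (d : ℕ)
    (hf : ∀ y' : X n, y' ≠ 0 → DifferentiableAt ℝ f y')
    (hom : ∀ y' : X n, y' ≠ 0 → ∀ l : ℝ, 0 < l → f (l • y') = l ^ d * f y')
    {y : X n} (hy : y ≠ 0) {l : ℝ} (hl : 0 < l) (k : Fin n) :
    l * pd f k (l • y) = l ^ d * pd f k y := by
  have hly : l • y ≠ 0 := smul_ne_zero hl.ne' hy
  have hA : ∀ y₀ : X n, y₀ ≠ 0 → fderiv ℝ (fun y' => f (l • y')) y₀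
      = l • fderiv ℝ f (l • y₀) := by
    intro y₀ hy₀
    have hc : HasFDerivAt (fun y' : X n => l • y') (l • ContinuousLinearMap.id ℝ (X n)) y₀ :=
      (hasFDerivAt_id y₀).const_smul l
    have := ((hf _ (smul_ne_zero hl.ne' hy₀)).hasFDerivAt.comp y₀ hc).fderiv
    rw [show ((fun y' : X n => f (l • y')) = f ∘ (fun y' : X n => l • y')) from rfl, this]
    ext v; simp
  have e1 : (fun y' : X n => f (l • y')) =ᶠ[nhds y] (fun y' => l ^ d * f y') := by
    filter_upwards [isOpen_ne.mem_nhds (show y ≠ 0 from hy)] with y' hy'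
    exact hom y' hy' l hl
  have e2 : fderiv ℝ (fun y' : X n => f (l • y')) y = fderiv ℝ (fun y' => l ^ d * f y') y :=
    e1.fderiv_eq
  have e3 : fderiv ℝ (fun y' : X n => l ^ d * f y') y = l ^ d • fderiv ℝ f y := by
    rw [show (fun y' : X n => l ^ d * f y') = (fun y' : X n => l ^ d • f y') from rfl]
    exact fderiv_fun_const_smul (hf y hy) (l ^ d)
  have := hA y hy
  rw [e2, e3] at this
  have := congrArg (fun (L : X n →L[ℝ] ℝ) => L (Pi.single k 1)) this
  simp only [ContinuousLinearMap.smul_apply, smul_eq_mul] at this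
  unfold pd
  rw [← this]

end Prod

section Main
variable {n : ℕ}

/-- lowered Christoffel symbols -/
def lowG (gt : (Fin n → ℝ) → Matrix (Fin n) (Fin n) ℝ) (m j k : Fin n) (x : Fin n → ℝ) : ℝ :=
  (1 / 2) * (pd (fun x' => gt x' m j) k x + pd (fun x' => gt x' m k) j x
    - pd (fun x' => gt x' j k) m x)

variable {U : Set (Fin n → ℝ)} {gt : (Fin n → ℝ) → Matrix (Fin n) (Fin n) ℝ}

lemma det_smooth {M : (Fin n → ℝ) → Matrix (Fin n) (Fin n) ℝ} {s : Set (Fin n → ℝ)}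
    (hM : ∀ i j, ContDiffOn ℝ (⊤:ℕ∞) (fun x => M x i j) s) :
    ContDiffOn ℝ (⊤:ℕ∞) (fun x => (M x).det) s := by
  have h : (fun x => (M x).det)
      = fun x => ∑ σ : Equiv.Perm (Fin n), ((Equiv.Perm.sign σ : ℤ) : ℝ) * ∏ i, M x (σ i) i := by
    funext x; rw [Matrix.det_apply]
    refine Finset.sum_congr rfl fun σ _ => ?_
    simp [Units.smul_def, zsmul_eq_mul]
  rw [h]
  exact ContDiffOn.sum fun σ _ =>
    contDiffOn_const.mul (contDiffOn_prod fun i _ => hM (σ i) i)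

lemma posdef_det_ne (hg : IsRiemann U gt) {x : Fin n → ℝ} (hx : x ∈ U) :
    (gt x).det ≠ 0 := (hg.posdef x hx).det_pos.ne'

lemma inv_smooth (hg : IsRiemann U gt) (i j : Fin n) :
    ContDiffOn ℝ (⊤:ℕ∞) (fun x => (gt x)⁻¹ i j) U := by
  have hgt : ∀ i j, ContDiffOn ℝ (⊤:ℕ∞) (fun x => gt x i j) U := fun i j =>
    (hg.smooth i j).of_le (by simp)
  have hdet : ContDiffOn ℝ (⊤:ℕ∞) (fun x => (gt x).det) U := det_smooth hgt
  have hadj : ContDiffOn ℝ (⊤:ℕ∞) (fun x => (gt x).adjugate i j) U := by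
    have h : (fun x => (gt x).adjugate i j)
        = fun x => ((gt x).updateRow j (Pi.single i 1)).det := by
      funext x; rw [Matrix.adjugate_apply]
    rw [h]
    refine det_smooth fun p q => ?_
    by_cases hp : p = j
    · subst hp; simp only [Matrix.updateRow_self]; exact contDiffOn_const
    · simp only [Matrix.updateRow_apply, if_neg hp]; exact hgt p q
  have h : (fun x => (gt x)⁻¹ i j) = fun x => ((gt x).det)⁻¹ * (gt x).adjugate i j := by
    funext x
    rw [Matrix.inv_def, Ring.inverse_eq_inv', Matrix.smul_apply, smul_eq_mul]
  rw [h]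
  exact (hdet.inv fun x hx => posdef_det_ne hg hx).mul hadj

lemma gt_smooth (hg : IsRiemann U gt) (i j : Fin n) :
    ContDiffOn ℝ (⊤:ℕ∞) (fun x => gt x i j) U := (hg.smooth i j).of_le (by simp)

lemma christ_smooth (hg : IsRiemann U gt) (i j k : Fin n) :
    ContDiffOn ℝ (⊤:ℕ∞) (christ gt i j k) U := by
  unfold christ
  refine contDiffOn_const.mul (ContDiffOn.sum fun h _ => (inv_smooth hg i h).mul ?_)
  exact ((contDiffOn_pd (gt_smooth hg h j) hg.isOpen k).add
    (contDiffOn_pd (gt_smooth hg h k) hg.isOpen j)).sub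
    (contDiffOn_pd (gt_smooth hg j k) hg.isOpen h)

lemma pd_gt_symm (hg : IsRiemann U gt) {x : Fin n → ℝ} (hx : x ∈ U) (p q r : Fin n) :
    pd (fun x' => gt x' p q) r x = pd (fun x' => gt x' q p) r x := by
  refine pd_congr ?_ r
  filter_upwards [hg.isOpen.mem_nhds hx] with x' hx'
  exact ((hg.symm x' hx').apply p q).symm

lemma christ_symm (hg : IsRiemann U gt) {x : Fin n → ℝ} (hx : x ∈ U) (i j k : Fin n) :
    christ gt i j k x = christ gt i k j x := by
  unfold christ
  congr 1
  refine Finset.sum_congr rfl fun h _ => ?_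
  rw [pd_gt_symm hg hx j k h]
  ring

lemma gt_mul_inv (hg : IsRiemann U gt) {x : Fin n → ℝ} (hx : x ∈ U) (i j : Fin n) :
    ∑ h, gt x i h * (gt x)⁻¹ h j = if i = j then 1 else 0 := by
  have h1 : gt x * (gt x)⁻¹ = 1 :=
    Matrix.mul_nonsing_inv _ ((Matrix.isUnit_iff_isUnit_det _).mp (hg.posdef x hx).isUnit)
  have := congrFun (congrFun h1 i) j
  rwa [Matrix.mul_apply, Matrix.one_apply] at this

lemma gt_inv_mul (hg : IsRiemann U gt) {x : Fin n → ℝ} (hx : x ∈ U) (i j : Fin n) :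
    ∑ h, (gt x)⁻¹ i h * gt x h j = if i = j then 1 else 0 := by
  have h1 : (gt x)⁻¹ * gt x = 1 :=
    Matrix.nonsing_inv_mul _ ((Matrix.isUnit_iff_isUnit_det _).mp (hg.posdef x hx).isUnit)
  have := congrFun (congrFun h1 i) j
  rwa [Matrix.mul_apply, Matrix.one_apply] at this

lemma lowG_symm (hg : IsRiemann U gt) {x : Fin n → ℝ} (hx : x ∈ U) (m j k : Fin n) :
    lowG gt m j k x = lowG gt m k j x := by
  unfold lowG
  rw [pd_gt_symm hg hx j k m]
  ring

lemma lowG_smooth (hg : IsRiemann U gt) (m j k : Fin n) :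
    ContDiffOn ℝ (⊤:ℕ∞) (lowG gt m j k) U := by
  unfold lowG
  refine contDiffOn_const.mul ?_
  exact ((contDiffOn_pd (gt_smooth hg m j) hg.isOpen k).add
    (contDiffOn_pd (gt_smooth hg m k) hg.isOpen j)).sub
    (contDiffOn_pd (gt_smooth hg j k) hg.isOpen m)

lemma lower (hg : IsRiemann U gt) {x : Fin n → ℝ} (hx : x ∈ U) (m j k : Fin n) :
    ∑ i, gt x m i * christ gt i j k x = lowG gt m j k x := by
  unfold christ lowG
  set S : Fin n → ℝ := fun h => pd (fun x' => gt x' h j) k x + pd (fun x' => gt x' h k) j x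
    - pd (fun x' => gt x' j k) h x with hS
  have step : ∀ i, gt x m i * ((1/2) * ∑ h, (gt x)⁻¹ i h * S h)
      = ∑ h, (1/2) * (gt x m i * (gt x)⁻¹ i h) * S h := by
    intro i
    rw [Finset.mul_sum, Finset.mul_sum]
    exact Finset.sum_congr rfl fun h _ => by ring
  rw [Finset.sum_congr rfl fun i _ => step i, Finset.sum_comm]
  have step2 : ∀ h, (∑ i, (1/2) * (gt x m i * (gt x)⁻¹ i h) * S h)
      = (1/2) * (if m = h then 1 else 0) * S h := by
    intro h
    rw [show (1/2) * (if m = h then (1:ℝ) else 0) * S h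
        = ∑ i, (1/2) * (gt x m i * (gt x)⁻¹ i h) * S h from ?_]
    · rw [← Finset.sum_mul, ← Finset.mul_sum, gt_mul_inv hg hx m h]
  rw [Finset.sum_congr rfl fun h _ => step2 h]
  simp [S]

lemma compat (hg : IsRiemann U gt) {x : Fin n → ℝ} (hx : x ∈ U) (m i l : Fin n) :
    pd (fun x' => gt x' m i) l x = lowG gt m l i x + lowG gt i l m x := by
  unfold lowG
  rw [pd_gt_symm hg hx l i m, pd_gt_symm hg hx l m i, pd_gt_symm hg hx i m l]
  ring

lemma christ_diffAt (hg : IsRiemann U gt) {x : Fin n → ℝ} (hx : x ∈ U) (i j k : Fin n) :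
    DifferentiableAt ℝ (christ gt i j k) x :=
  ((christ_smooth hg i j k).contDiffAt (hg.isOpen.mem_nhds hx)).differentiableAt
    (by simp)

lemma gt_diffAt (hg : IsRiemann U gt) {x : Fin n → ℝ} (hx : x ∈ U) (i j : Fin n) :
    DifferentiableAt ℝ (fun x' => gt x' i j) x :=
  ((gt_smooth hg i j).contDiffAt (hg.isOpen.mem_nhds hx)).differentiableAt
    (by simp)

lemma lowG_diffAt (hg : IsRiemann U gt) {x : Fin n → ℝ} (hx : x ∈ U) (m j k : Fin n) :
    DifferentiableAt ℝ (lowG gt m j k) x :=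
  ((lowG_smooth hg m j k).contDiffAt (hg.isOpen.mem_nhds hx)).differentiableAt
    (by simp)

lemma prodrule_lower (hg : IsRiemann U gt) {x : Fin n → ℝ} (hx : x ∈ U) (m j k l : Fin n) :
    ∑ i, gt x m i * pd (christ gt i j k) l x
      = pd (lowG gt m j k) l x
        - ∑ i, (lowG gt m l i x + lowG gt i l m x) * christ gt i j k x := by
  have e1 : (fun x' => ∑ i, gt x' m i * christ gt i j k x') =ᶠ[nhds x] lowG gt m j k := by
    filter_upwards [hg.isOpen.mem_nhds hx] with x' hx'
    exact lower hg hx' m j k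
  have e2 : pd (fun x' => ∑ i, gt x' m i * christ gt i j k x') l x
      = pd (lowG gt m j k) l x := pd_congr e1 l
  rw [pd_sum (fun i _ => (gt_diffAt hg hx m i).fun_mul (christ_diffAt hg hx i j k)) l] at e2
  have e3 : ∀ i, pd (fun x' => gt x' m i * christ gt i j k x') l x
      = (lowG gt m l i x + lowG gt i l m x) * christ gt i j k x
        + gt x m i * pd (christ gt i j k) l x := by
    intro i
    rw [pd_mul (gt_diffAt hg hx m i) (christ_diffAt hg hx i j k) l, compat hg hx m i l]
  rw [Finset.sum_congr rfl fun i _ => e3 i, Finset.sum_add_distrib] at e2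
  linarith [e2]

lemma lR_formula (hg : IsRiemann U gt) {x : Fin n → ℝ} (hx : x ∈ U) (j m k l : Fin n) :
    ∑ i, gt x m i * rcurv gt j i k l x
      = pd (lowG gt m j k) l x - pd (lowG gt m j l) k x
        - ∑ i, lowG gt i l m x * christ gt i j k x
        + ∑ i, lowG gt i k m x * christ gt i j l x := by
  unfold rcurv
  have expand : ∀ i, gt x m i * (pd (fun x' => christ gt i j k x') l x
        - pd (fun x' => christ gt i j l x') k x
        + ∑ h, christ gt h j k x * christ gt i h l x
        - ∑ h, christ gt h j l x * christ gt i h k x)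
      = gt x m i * pd (christ gt i j k) l x - gt x m i * pd (christ gt i j l) k x
        + gt x m i * (∑ h, christ gt h j k x * christ gt i h l x)
        - gt x m i * (∑ h, christ gt h j l x * christ gt i h k x) := by
    intro i; ring
  rw [Finset.sum_congr rfl fun i _ => expand i]
  rw [Finset.sum_sub_distrib, Finset.sum_add_distrib, Finset.sum_sub_distrib]
  rw [prodrule_lower hg hx m j k l, prodrule_lower hg hx m j l k]
  -- quadratic terms
  have q1 : ∑ i, gt x m i * (∑ h, christ gt h j k x * christ gt i h l x)
      = ∑ h, lowG gt m h l x * christ gt h j k x := by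
    have : ∀ i, gt x m i * (∑ h, christ gt h j k x * christ gt i h l x)
        = ∑ h, christ gt h j k x * (gt x m i * christ gt i h l x) := by
      intro i; rw [Finset.mul_sum]; exact Finset.sum_congr rfl fun h _ => by ring
    rw [Finset.sum_congr rfl fun i _ => this i, Finset.sum_comm]
    refine Finset.sum_congr rfl fun h _ => ?_
    rw [← Finset.mul_sum, lower hg hx m h l]
    ring
  have q2 : ∑ i, gt x m i * (∑ h, christ gt h j l x * christ gt i h k x)
      = ∑ h, lowG gt m h k x * christ gt h j l x := by
    have : ∀ i, gt x m i * (∑ h, christ gt h j l x * christ gt i h k x)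
        = ∑ h, christ gt h j l x * (gt x m i * christ gt i h k x) := by
      intro i; rw [Finset.mul_sum]; exact Finset.sum_congr rfl fun h _ => by ring
    rw [Finset.sum_congr rfl fun i _ => this i, Finset.sum_comm]
    refine Finset.sum_congr rfl fun h _ => ?_
    rw [← Finset.mul_sum, lower hg hx m h k]
    ring
  rw [q1, q2]
  have r1 : ∑ i, (lowG gt m l i x + lowG gt i l m x) * christ gt i j k x
      = ∑ i, lowG gt m i l x * christ gt i j k x + ∑ i, lowG gt i l m x * christ gt i j k x := by
    rw [← Finset.sum_add_distrib]
    refine Finset.sum_congr rfl fun i _ => ?_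
    rw [lowG_symm hg hx m l i]
    ring
  have r2 : ∑ i, (lowG gt m k i x + lowG gt i k m x) * christ gt i j l x
      = ∑ i, lowG gt m i k x * christ gt i j l x + ∑ i, lowG gt i k m x * christ gt i j l x := by
    rw [← Finset.sum_add_distrib]
    refine Finset.sum_congr rfl fun i _ => ?_
    rw [lowG_symm hg hx m k i]
    ring
  rw [r1, r2]
  ring

lemma lR_antisym (hg : IsRiemann U gt) {x : Fin n → ℝ} (hx : x ∈ U) (j m k l : Fin n) :
    ∑ i, gt x m i * rcurv gt j i k l x + ∑ i, gt x j i * rcurv gt m i k l x = 0 := by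
  rw [lR_formula hg hx j m k l, lR_formula hg hx m j k l]
  -- derivative part
  have hsum1 : pd (lowG gt m j k) l x + pd (lowG gt j m k) l x
      = pd (fun x' => pd (fun x'' => gt x'' m j) k x') l x := by
    have hadd : pd (fun x' => lowG gt m j k x' + lowG gt j m k x') l x
        = pd (lowG gt m j k) l x + pd (lowG gt j m k) l x :=
      pd_add (lowG_diffAt hg hx m j k) (lowG_diffAt hg hx j m k) l
    rw [← hadd]
    refine pd_congr ?_ l
    filter_upwards [hg.isOpen.mem_nhds hx] with x' hx'
    rw [lowG_symm hg hx' m j k, lowG_symm hg hx' j m k, ← compat hg hx' m j k]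
  have hsum2 : pd (lowG gt m j l) k x + pd (lowG gt j m l) k x
      = pd (fun x' => pd (fun x'' => gt x'' m j) l x') k x := by
    have hadd : pd (fun x' => lowG gt m j l x' + lowG gt j m l x') k x
        = pd (lowG gt m j l) k x + pd (lowG gt j m l) k x :=
      pd_add (lowG_diffAt hg hx m j l) (lowG_diffAt hg hx j m l) k
    rw [← hadd]
    refine pd_congr ?_ k
    filter_upwards [hg.isOpen.mem_nhds hx] with x' hx'
    rw [lowG_symm hg hx' m j l, lowG_symm hg hx' j m l, ← compat hg hx' m j l]
  have hcomm : pd (fun x' => pd (fun x'' => gt x'' m j) k x') l x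
      = pd (fun x' => pd (fun x'' => gt x'' m j) l x') k x :=
    pd_comm ((gt_smooth hg m j).contDiffAt (hg.isOpen.mem_nhds hx)) l k
  have cancel : ∀ p q r p' q' r' : Fin n,
      (∀ i, lowG gt i p q x = ∑ h, gt x i h * christ gt h p' q' x) →
      (∀ i, lowG gt i r p' x = ∑ h, gt x i h * christ gt h r' p x) → True := fun _ _ _ _ _ _ _ _ => trivial
  have swap : ∀ (A B : Fin n → Fin n → ℝ),
      ∑ i, (∑ h, gt x i h * A h i) = ∑ i, (∑ h, gt x i h * A h i) := fun _ _ => rfl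
  have cancel1 : ∑ i, lowG gt i l m x * christ gt i j k x
      = ∑ i, lowG gt i k j x * christ gt i m l x := by
    have e : ∀ i : Fin n, lowG gt i l m x = ∑ h, gt x i h * christ gt h m l x := by
      intro i; rw [lowG_symm hg hx i l m, ← lower hg hx i m l]
    have e' : ∀ h : Fin n, lowG gt h k j x = ∑ i, gt x h i * christ gt i j k x := by
      intro h; rw [lowG_symm hg hx h k j, ← lower hg hx h j k]
    calc ∑ i, lowG gt i l m x * christ gt i j k x
        = ∑ i, ∑ h, gt x i h * christ gt h m l x * christ gt i j k x :=
          Finset.sum_congr rfl fun i _ => by rw [e i, Finset.sum_mul]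
      _ = ∑ h, ∑ i, gt x i h * christ gt h m l x * christ gt i j k x := Finset.sum_comm
      _ = ∑ h, (∑ i, gt x h i * christ gt i j k x) * christ gt h m l x := by
          refine Finset.sum_congr rfl fun h _ => ?_
          rw [Finset.sum_mul]
          refine Finset.sum_congr rfl fun i _ => ?_
          rw [(hg.symm x hx).apply h i]
          ring
      _ = ∑ h, lowG gt h k j x * christ gt h m l x :=
          Finset.sum_congr rfl fun h _ => by rw [← e' h]
  have cancel2 : ∑ i, lowG gt i k m x * christ gt i j l x
      = ∑ i, lowG gt i l j x * christ gt i m k x := by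
    have e : ∀ i : Fin n, lowG gt i k m x = ∑ h, gt x i h * christ gt h m k x := by
      intro i; rw [lowG_symm hg hx i k m, ← lower hg hx i m k]
    have e' : ∀ h : Fin n, lowG gt h l j x = ∑ i, gt x h i * christ gt i j l x := by
      intro h; rw [lowG_symm hg hx h l j, ← lower hg hx h j l]
    calc ∑ i, lowG gt i k m x * christ gt i j l x
        = ∑ i, ∑ h, gt x i h * christ gt h m k x * christ gt i j l x :=
          Finset.sum_congr rfl fun i _ => by rw [e i, Finset.sum_mul]
      _ = ∑ h, ∑ i, gt x i h * christ gt h m k x * christ gt i j l x := Finset.sum_comm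
      _ = ∑ h, (∑ i, gt x h i * christ gt i j l x) * christ gt h m k x := by
          refine Finset.sum_congr rfl fun h _ => ?_
          rw [Finset.sum_mul]
          refine Finset.sum_congr rfl fun i _ => ?_
          rw [(hg.symm x hx).apply h i]
          ring
      _ = ∑ h, lowG gt h l j x * christ gt h m k x :=
          Finset.sum_congr rfl fun h _ => by rw [← e' h]
  linarith [hsum1, hsum2, hcomm, cancel1, cancel2]

lemma pd_christ_symm (hg : IsRiemann U gt) {x : Fin n → ℝ} (hx : x ∈ U) (i j k l : Fin n) :
    pd (fun x' => christ gt i j k x') l x = pd (fun x' => christ gt i k j x') l x := by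
  refine pd_congr ?_ l
  filter_upwards [hg.isOpen.mem_nhds hx] with x' hx'
  exact christ_symm hg hx' i j k

lemma rcurv_bianchi (hg : IsRiemann U gt) {x : Fin n → ℝ} (hx : x ∈ U) (i j k l : Fin n) :
    rcurv gt j i k l x + rcurv gt k i l j x + rcurv gt l i j k x = 0 := by
  have hq : ∀ p q r : Fin n, ∑ h, christ gt h p q x * christ gt i h r x
      = ∑ h, christ gt h q p x * christ gt i h r x := by
    intro p q r
    exact Finset.sum_congr rfl fun h _ => by rw [christ_symm hg hx h p q]
  unfold rcurv
  linarith [pd_christ_symm hg hx i k j l, pd_christ_symm hg hx i l j k,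
    pd_christ_symm hg hx i l k j, hq j k l, hq k l j, hq l j k]

lemma rcurv_alt (gt : (Fin n → ℝ) → Matrix (Fin n) (Fin n) ℝ) (x : Fin n → ℝ) (i j k l : Fin n) :
    rcurv gt j i k l x = - rcurv gt j i l k x := by
  unfold rcurv
  ring

lemma pair_symm_abstract (R : Fin n → Fin n → Fin n → Fin n → ℝ)
    (hA1 : ∀ a b c d, R a b c d = - R b a c d)
    (hA2 : ∀ a b c d, R a b c d = - R a b d c)
    (hB : ∀ a b c d, R a b c d + R c b d a + R d b a c = 0)
    (a b c d : Fin n) : R a b c d = R c d a b := by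
  linarith [hB a b c d, hB b a c d, hB a c b d, hB b c a d, hB a d b c, hB b d a c,
    hB c a d b, hB d a c b, hB c b d a, hB d b c a, hB c d a b, hB d c a b,
    hA1 a b c d, hA1 c b d a, hA1 d b a c, hA1 c d a b, hA1 a c b d, hA1 b c a d,
    hA1 a d b c, hA1 b d a c, hA1 c a d b, hA1 d a c b, hA1 d c a b, hA1 b a c d,
    hA2 a b c d, hA2 b a c d, hA2 c d a b, hA2 d c a b, hA2 a b d c, hA2 b a d c,
    hA2 c d b a, hA2 d c b a, hA2 a c b d, hA2 c a b d, hA2 b d a c, hA2 d b a c,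
    hA2 a d b c, hA2 d a b c, hA2 b c a d, hA2 c b a d]

lemma curv_contract (hg : IsRiemann U gt) {a : (Fin n → ℝ) → Fin n → ℝ}
    (ha : ∀ i, ContDiffOn ℝ (⊤ : ℕ∞) (fun x => a x i) U)
    (hapar : ∀ i j : Fin n, ∀ x ∈ U,
      pd (fun x' => a x' i) j x + ∑ l, christ gt i j l x * a x l = 0)
    {x : Fin n → ℝ} (hx : x ∈ U) (i j k : Fin n) :
    ∑ m, rcurv gt j i m k x * a x m = 0 := by
  classical
  have hle1 : ((⊤:ℕ∞) : WithTop ℕ∞) ≠ 0 := by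
    simp
  have haDiff : ∀ (p : Fin n) (x' : Fin n → ℝ), x' ∈ U →
      DifferentiableAt ℝ (fun x'' => a x'' p) x' := fun p x' hx' =>
    (((ha p).of_le (by simp)).contDiffAt (hg.isOpen.mem_nhds hx')).differentiableAt hle1
  have hpdaDiff : ∀ (p q : Fin n), DifferentiableAt ℝ (fun x' => pd (fun x'' => a x'' p) q x') x :=
    fun p q => ((contDiffOn_pd ((ha p).of_le (by simp)) hg.isOpen q).contDiffAt
      (hg.isOpen.mem_nhds hx)).differentiableAt hle1
  -- the differentiated parallel equation
  have hEE : ∀ i j k : Fin n,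
      pd (fun x' => pd (fun x'' => a x'' i) j x') k x
        + ∑ l, pd (fun x' => christ gt i j l x') k x * a x l
        = ∑ l, christ gt i j l x * (∑ h, christ gt l k h x * a x h) := by
    intro i j k
    have e0 : (fun x' => pd (fun x'' => a x'' i) j x' + ∑ l, christ gt i j l x' * a x' l)
        =ᶠ[nhds x] (fun _ => (0:ℝ)) := by
      filter_upwards [hg.isOpen.mem_nhds hx] with x' hx'
      exact hapar i j x' hx'
    have e1 : pd (fun x' => pd (fun x'' => a x'' i) j x'
        + ∑ l, christ gt i j l x' * a x' l) k x = 0 := by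
      rw [pd_congr e0 k, pd_const]
    rw [pd_add (hpdaDiff i j)
      (DifferentiableAt.fun_sum fun l _ => (christ_diffAt hg hx i j l).fun_mul (haDiff l x hx)) k] at e1
    rw [pd_sum (fun l _ => (christ_diffAt hg hx i j l).fun_mul (haDiff l x hx)) k] at e1
    have e2 : ∀ l : Fin n, pd (fun x' => christ gt i j l x' * a x' l) k x
        = pd (fun x' => christ gt i j l x') k x * a x l
          + christ gt i j l x * pd (fun x' => a x' l) k x :=
      fun l => pd_mul (christ_diffAt hg hx i j l) (haDiff l x hx) k
    rw [Finset.sum_congr rfl (fun l _ => e2 l), Finset.sum_add_distrib] at e1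
    have e3 : ∀ l : Fin n, christ gt i j l x * pd (fun x' => a x' l) k x
        = - (christ gt i j l x * (∑ h, christ gt l k h x * a x h)) := by
      intro l
      have h4 := hapar l k x hx
      have hpd : pd (fun x' => a x' l) k x = - ∑ h, christ gt l k h x * a x h := by linarith
      rw [hpd]; ring
    rw [Finset.sum_congr rfl (fun l _ => e3 l), Finset.sum_neg_distrib] at e1
    linarith [e1]
  have hKey : ∀ i j k : Fin n,
      ∑ l, pd (fun x' => christ gt i j l x') k x * a x l
        - ∑ l, pd (fun x' => christ gt i k l x') j x * a x l
      = ∑ l, christ gt i j l x * (∑ h, christ gt l k h x * a x h)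
        - ∑ l, christ gt i k l x * (∑ h, christ gt l j h x * a x h) := by
    intro i j k
    have h1 := hEE i j k
    have h2 := hEE i k j
    have hcl : pd (fun x' => pd (fun x'' => a x'' i) j x') k x
        = pd (fun x' => pd (fun x'' => a x'' i) k x') j x :=
      pd_comm (((ha i).of_le (by simp)).contDiffAt (hg.isOpen.mem_nhds hx)) k j
    linarith
  -- contraction of a in the first slot of the curvature vanishes
  have T1 : ∀ i j k : Fin n, ∑ m, rcurv gt m i j k x * a x m = 0 := by
    intro i j k
    have expand : ∀ m : Fin n, rcurv gt m i j k x * a x m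
        = pd (fun x' => christ gt i j m x') k x * a x m
          - pd (fun x' => christ gt i k m x') j x * a x m
          + (∑ h, christ gt h m j x * christ gt i h k x) * a x m
          - (∑ h, christ gt h m k x * christ gt i h j x) * a x m := by
      intro m
      unfold rcurv
      rw [pd_christ_symm hg hx i m j k, pd_christ_symm hg hx i m k j]
      ring
    rw [Finset.sum_congr rfl fun m _ => expand m]
    rw [Finset.sum_sub_distrib, Finset.sum_add_distrib, Finset.sum_sub_distrib]
    have A1 : ∑ m, (∑ h, christ gt h m j x * christ gt i h k x) * a x m
        = ∑ l, christ gt i k l x * (∑ h, christ gt l j h x * a x h) := by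
      calc ∑ m, (∑ h, christ gt h m j x * christ gt i h k x) * a x m
          = ∑ m, ∑ h, christ gt h m j x * christ gt i h k x * a x m := by
            refine Finset.sum_congr rfl fun m _ => ?_; rw [Finset.sum_mul]
        _ = ∑ h, ∑ m, christ gt h m j x * christ gt i h k x * a x m := Finset.sum_comm
        _ = ∑ h, christ gt i k h x * (∑ m, christ gt h j m x * a x m) := by
            refine Finset.sum_congr rfl fun h _ => ?_
            rw [Finset.mul_sum]
            refine Finset.sum_congr rfl fun m _ => ?_
            rw [christ_symm hg hx h m j, christ_symm hg hx i h k]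
            ring
    have A2 : ∑ m, (∑ h, christ gt h m k x * christ gt i h j x) * a x m
        = ∑ l, christ gt i j l x * (∑ h, christ gt l k h x * a x h) := by
      calc ∑ m, (∑ h, christ gt h m k x * christ gt i h j x) * a x m
          = ∑ m, ∑ h, christ gt h m k x * christ gt i h j x * a x m := by
            refine Finset.sum_congr rfl fun m _ => ?_; rw [Finset.sum_mul]
        _ = ∑ h, ∑ m, christ gt h m k x * christ gt i h j x * a x m := Finset.sum_comm
        _ = ∑ h, christ gt i j h x * (∑ m, christ gt h k m x * a x m) := by
            refine Finset.sum_congr rfl fun h _ => ?_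
            rw [Finset.mul_sum]
            refine Finset.sum_congr rfl fun m _ => ?_
            rw [christ_symm hg hx h m k, christ_symm hg hx i h j]
            ring
    have hsub : ∑ m, pd (fun x' => christ gt i j m x') k x * a x m
        - ∑ m, pd (fun x' => christ gt i k m x') j x * a x m
      = ∑ l, christ gt i j l x * (∑ h, christ gt l k h x * a x h)
        - ∑ l, christ gt i k l x * (∑ h, christ gt l j h x * a x h) := hKey i j k
    linarith [A1, A2, hsub]
  -- lowered curvature and pair symmetry
  set lR : Fin n → Fin n → Fin n → Fin n → ℝ :=
    fun j m k l => ∑ i', gt x m i' * rcurv gt j i' k l x with hlR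
  have A1 : ∀ a b c d : Fin n, lR a b c d = - lR b a c d := by
    intro p q r t
    have := lR_antisym hg hx p q r t
    simp only [hlR]
    linarith
  have A2 : ∀ a b c d : Fin n, lR a b c d = - lR a b d c := by
    intro p q r t
    simp only [hlR]
    rw [← Finset.sum_neg_distrib]
    refine Finset.sum_congr rfl fun i' _ => ?_
    rw [rcurv_alt gt x i' p r t]
    ring
  have B : ∀ a b c d : Fin n, lR a b c d + lR c b d a + lR d b a c = 0 := by
    intro p q r t
    simp only [hlR]
    rw [← Finset.sum_add_distrib, ← Finset.sum_add_distrib]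
    refine Finset.sum_eq_zero fun i' _ => ?_
    have := rcurv_bianchi hg hx i' p r t
    linear_combination (gt x q i') * this
  have PS := pair_symm_abstract lR A1 A2 B
  -- finish
  have hvanish : ∀ p : Fin n, ∑ q, gt x p q * (∑ m, rcurv gt j q m k x * a x m) = 0 := by
    intro p
    have c1 : ∑ q, gt x p q * (∑ m, rcurv gt j q m k x * a x m)
        = ∑ m, lR j p m k * a x m := by
      calc ∑ q, gt x p q * (∑ m, rcurv gt j q m k x * a x m)
          = ∑ q, ∑ m, gt x p q * rcurv gt j q m k x * a x m := by
            refine Finset.sum_congr rfl fun q _ => ?_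
            rw [Finset.mul_sum]
            exact Finset.sum_congr rfl fun m _ => by ring
        _ = ∑ m, ∑ q, gt x p q * rcurv gt j q m k x * a x m := Finset.sum_comm
        _ = ∑ m, lR j p m k * a x m := by
            refine Finset.sum_congr rfl fun m _ => ?_
            simp only [hlR]
            rw [Finset.sum_mul]
    have c2 : ∀ m : Fin n, lR j p m k = lR m k j p := fun m => PS j p m k
    have c3 : ∑ m, lR m k j p * a x m = ∑ q, gt x k q * (∑ m, rcurv gt m q j p x * a x m) := by
      calc ∑ m, lR m k j p * a x m
          = ∑ m, ∑ q, gt x k q * rcurv gt m q j p x * a x m := by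
            refine Finset.sum_congr rfl fun m _ => ?_
            simp only [hlR]
            rw [Finset.sum_mul]
        _ = ∑ q, ∑ m, gt x k q * rcurv gt m q j p x * a x m := Finset.sum_comm
        _ = ∑ q, gt x k q * (∑ m, rcurv gt m q j p x * a x m) := by
            refine Finset.sum_congr rfl fun q _ => ?_
            rw [Finset.mul_sum]
            exact Finset.sum_congr rfl fun m _ => by ring
    rw [c1, Finset.sum_congr rfl fun m _ => by rw [c2 m], c3]
    refine Finset.sum_eq_zero fun q _ => ?_
    rw [T1 q j p, mul_zero]
  -- invert the metric
  have final : ∑ m, rcurv gt j i m k x * a x m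
      = ∑ p, (gt x)⁻¹ i p * (∑ q, gt x p q * (∑ m, rcurv gt j q m k x * a x m)) := by
    set v : Fin n → ℝ := fun q => ∑ m, rcurv gt j q m k x * a x m with hv
    calc v i = ∑ q, (if i = q then 1 else 0) * v q := by simp
      _ = ∑ q, (∑ p, (gt x)⁻¹ i p * gt x p q) * v q := by
          refine Finset.sum_congr rfl fun q _ => ?_
          rw [gt_inv_mul hg hx i q]
      _ = ∑ q, ∑ p, (gt x)⁻¹ i p * gt x p q * v q := by
          refine Finset.sum_congr rfl fun q _ => ?_
          rw [Finset.sum_mul]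
      _ = ∑ p, ∑ q, (gt x)⁻¹ i p * gt x p q * v q := Finset.sum_comm
      _ = ∑ p, (gt x)⁻¹ i p * (∑ q, gt x p q * v q) := by
          refine Finset.sum_congr rfl fun p _ => ?_
          rw [Finset.mul_sum]
          exact Finset.sum_congr rfl fun q _ => by ring
  rw [final]
  refine Finset.sum_eq_zero fun p _ => ?_
  rw [hvanish p, mul_zero]

variable {F : (Fin n → ℝ) → (Fin n → ℝ) → ℝ}

lemma hle1' : ((⊤:ℕ∞) : WithTop ℕ∞) ≠ 0 := by
  simp

lemma W2_smooth (hF : IsFinsler U F) :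
    ContDiffOn ℝ (⊤:ℕ∞) (fun p : (Fin n → ℝ) × (Fin n → ℝ) => (F p.1 p.2)^2)
      (U ×ˢ {y : Fin n → ℝ | y ≠ 0}) :=
  (hF.smooth.of_le (by simp)).pow 2

lemma u_smoothOn (hF : IsFinsler U F) {x : Fin n → ℝ} (hx : x ∈ U) :
    ContDiffOn ℝ (⊤:ℕ∞) (fun y' => (F x y')^2) {y' : Fin n → ℝ | y' ≠ 0} := by
  have h := (W2_smooth hF).comp
    ((contDiff_const.prodMk contDiff_id).contDiffOn
      (s := {y' : Fin n → ℝ | y' ≠ 0}))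
    (fun y' hy' => Set.mk_mem_prod hx hy')
  exact h

lemma u_contDiffAt (hF : IsFinsler U F) {x y : Fin n → ℝ} (hx : x ∈ U) (hy : y ≠ 0) :
    ContDiffAt ℝ (⊤:ℕ∞) (fun y' => (F x y')^2) y :=
  (u_smoothOn hF hx).contDiffAt (isOpen_ne.mem_nhds hy)

lemma pdu_smoothOn (hF : IsFinsler U F) {x : Fin n → ℝ} (hx : x ∈ U) (q : Fin n) :
    ContDiffOn ℝ (⊤:ℕ∞) (fun y' => pd (fun y'' => (F x y'')^2) q y')
      {y' : Fin n → ℝ | y' ≠ 0} :=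
  contDiffOn_pd (u_smoothOn hF hx) isOpen_ne q

lemma gF_smoothOn (hF : IsFinsler U F) {x : Fin n → ℝ} (hx : x ∈ U) (i j : Fin n) :
    ContDiffOn ℝ (⊤:ℕ∞) (fun y' => gF F i j x y') {y' : Fin n → ℝ | y' ≠ 0} := by
  unfold gF
  exact contDiffOn_const.mul (contDiffOn_pd (pdu_smoothOn hF hx j) isOpen_ne i)

lemma gF_symm (hF : IsFinsler U F) {x y : Fin n → ℝ} (hx : x ∈ U) (hy : y ≠ 0) (i j : Fin n) :
    gF F i j x y = gF F j i x y := by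
  unfold gF
  rw [pd_comm (u_contDiffAt hF hx hy) i j]

lemma gInv_mul_gF (hF : IsFinsler U F) {x y : Fin n → ℝ} (hx : x ∈ U) (hy : y ≠ 0) (i j : Fin n) :
    ∑ h, gInv F i h x y * gF F h j x y = if i = j then 1 else 0 := by
  have h1 : (gMat F x y)⁻¹ * gMat F x y = 1 :=
    Matrix.nonsing_inv_mul _ ((Matrix.isUnit_iff_isUnit_det _).mp (hF.posdef x hx y hy).isUnit)
  have := congrFun (congrFun h1 i) j
  rw [Matrix.mul_apply, Matrix.one_apply] at this
  exact this

lemma gF_mul_gInv (hF : IsFinsler U F) {x y : Fin n → ℝ} (hx : x ∈ U) (hy : y ≠ 0) (i j : Fin n) :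
    ∑ h, gF F i h x y * gInv F h j x y = if i = j then 1 else 0 := by
  have h1 : gMat F x y * (gMat F x y)⁻¹ = 1 :=
    Matrix.mul_nonsing_inv _ ((Matrix.isUnit_iff_isUnit_det _).mp (hF.posdef x hx y hy).isUnit)
  have := congrFun (congrFun h1 i) j
  rw [Matrix.mul_apply, Matrix.one_apply] at this
  exact this


lemma coord_diffAt (q : Fin n) (y : Fin n → ℝ) :
    DifferentiableAt ℝ (fun y' : Fin n → ℝ => y' q) y := by
  exact (ContinuousLinearMap.proj (R := ℝ) (φ := fun _ : Fin n => ℝ) q).differentiableAt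

lemma u_diffAt (hF : IsFinsler U F) {x y : Fin n → ℝ} (hx : x ∈ U) (hy : y ≠ 0) :
    DifferentiableAt ℝ (fun y' => (F x y')^2) y :=
  (u_contDiffAt hF hx hy).differentiableAt hle1'

lemma pdu_diffAt (hF : IsFinsler U F) {x y : Fin n → ℝ} (hx : x ∈ U) (hy : y ≠ 0) (q : Fin n) :
    DifferentiableAt ℝ (fun y' => pd (fun y'' => (F x y'')^2) q y') y :=
  ((pdu_smoothOn hF hx q).contDiffAt (isOpen_ne.mem_nhds hy)).differentiableAt hle1'

lemma pdpdu_diffAt (hF : IsFinsler U F) {x y : Fin n → ℝ} (hx : x ∈ U) (hy : y ≠ 0) (p q : Fin n) :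
    DifferentiableAt ℝ (fun y' => pd (fun y'' => pd (fun y₃ => (F x y₃)^2) q y'') p y') y :=
  ((contDiffOn_pd (pdu_smoothOn hF hx q) isOpen_ne p).contDiffAt
    (isOpen_ne.mem_nhds hy)).differentiableAt hle1'

lemma gF_diffAt (hF : IsFinsler U F) {x y : Fin n → ℝ} (hx : x ∈ U) (hy : y ≠ 0) (p q : Fin n) :
    DifferentiableAt ℝ (fun y' => gF F p q x y') y :=
  ((gF_smoothOn hF hx p q).contDiffAt (isOpen_ne.mem_nhds hy)).differentiableAt hle1'

lemma u_homog (hF : IsFinsler U F) {x : Fin n → ℝ} (hx : x ∈ U) :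
    ∀ y' : Fin n → ℝ, ∀ l : ℝ, 0 < l → (F x (l • y'))^2 = l^2 * (F x y')^2 := by
  intro y' l hl
  rw [hF.homog x hx y' l hl]
  ring

lemma pdu_homog (hF : IsFinsler U F) {x : Fin n → ℝ} (hx : x ∈ U) (k : Fin n) :
    ∀ y' : Fin n → ℝ, y' ≠ 0 → ∀ l : ℝ, 0 < l →
      pd (fun y'' => (F x y'')^2) k (l • y') = l * pd (fun y'' => (F x y'')^2) k y' := by
  intro y' hy' l hl
  have h := pd_homog 2 (fun y₀ hy₀ => u_diffAt hF hx hy₀)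
    (fun y₀ _ l₀ hl₀ => u_homog hF hx y₀ l₀ hl₀) hy' hl k
  have hl0 : l ≠ 0 := hl.ne'
  field_simp at h ⊢
  nlinarith [h]

lemma gF_homog (hF : IsFinsler U F) {x : Fin n → ℝ} (hx : x ∈ U) (p q : Fin n) :
    ∀ y' : Fin n → ℝ, y' ≠ 0 → ∀ l : ℝ, 0 < l → gF F p q x (l • y') = gF F p q x y' := by
  intro y' hy' l hl
  unfold gF
  have h := pd_homog 1 (fun y₀ hy₀ => pdu_diffAt hF hx hy₀ q)
    (fun y₀ hy₀ l₀ hl₀ => by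
      rw [pdu_homog hF hx q y₀ hy₀ l₀ hl₀]; ring) hy' hl p
  have hl0 : l ≠ 0 := hl.ne'
  rw [pow_one] at h
  have : pd (fun y' => pd (fun y'' => (F x y'')^2) q y') p (l • y')
      = pd (fun y' => pd (fun y'' => (F x y'')^2) q y') p y' := by
    exact mul_left_cancel₀ hl0 h
  rw [this]

lemma pd_pdu_eq_two_gF (hF : IsFinsler U F) (x : Fin n → ℝ) (y : Fin n → ℝ) (h p : Fin n) :
    pd (fun y' => pd (fun y'' => (F x y'')^2) p y') h y = 2 * gF F h p x y := by
  unfold gF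
  ring

lemma yLow_eq (x y : Fin n → ℝ) (k : Fin n) :
    yLow F k x y = (1/2) * pd (fun y'' => (F x y'')^2) k y := rfl

lemma pd_yLow (hF : IsFinsler U F) {x y : Fin n → ℝ} (hx : x ∈ U) (hy : y ≠ 0) (h k : Fin n) :
    pd (fun y' => yLow F k x y') h y = gF F h k x y := by
  have e : (fun y' => yLow F k x y') = fun y' => (1/2) * pd (fun y'' => (F x y'')^2) k y' := rfl
  rw [e, pd_const_mul (1/2) (pdu_diffAt hF hx hy k) h]
  unfold gF
  ring

lemma gF_third (hF : IsFinsler U F) {x y : Fin n → ℝ} (hx : x ∈ U) (hy : y ≠ 0) (p q h : Fin n) :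
    pd (fun y' => gF F p q x y') h y = pd (fun y' => gF F p h x y') q y := by
  have e1 : (fun y' => gF F p q x y')
      = fun y' => (1/2) * pd (fun y'' => pd (fun y₃ => (F x y₃)^2) q y'') p y' := rfl
  have e2 : (fun y' => gF F p h x y')
      = fun y' => (1/2) * pd (fun y'' => pd (fun y₃ => (F x y₃)^2) h y'') p y' := rfl
  rw [e1, e2, pd_const_mul (1/2) (pdpdu_diffAt hF hx hy p q) h,
    pd_const_mul (1/2) (pdpdu_diffAt hF hx hy p h) q]
  congr 1
  -- pd_h pd_p w_q = pd_q pd_p w_h  where w_r = pd u r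
  have s1 : pd (fun y' => pd (fun y'' => pd (fun y₃ => (F x y₃)^2) q y'') p y') h y
      = pd (fun y' => pd (fun y'' => pd (fun y₃ => (F x y₃)^2) q y'') h y') p y :=
    pd_comm ((pdu_smoothOn hF hx q).contDiffAt (isOpen_ne.mem_nhds hy)) h p
  have s2 : pd (fun y' => pd (fun y'' => pd (fun y₃ => (F x y₃)^2) q y'') h y') p y
      = pd (fun y' => pd (fun y'' => pd (fun y₃ => (F x y₃)^2) h y'') q y') p y := by
    refine pd_congr ?_ p
    filter_upwards [isOpen_ne.mem_nhds (show y ≠ 0 from hy)] with y' hy'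
    exact pd_comm (u_contDiffAt hF hx hy') h q
  have s3 : pd (fun y' => pd (fun y'' => pd (fun y₃ => (F x y₃)^2) h y'') q y') p y
      = pd (fun y' => pd (fun y'' => pd (fun y₃ => (F x y₃)^2) h y'') p y') q y :=
    pd_comm ((pdu_smoothOn hF hx h).contDiffAt (isOpen_ne.mem_nhds hy)) p q
  rw [s1, s2, s3]

lemma euler_gF (hF : IsFinsler U F) {x y : Fin n → ℝ} (hx : x ∈ U) (hy : y ≠ 0) (p h : Fin n) :
    ∑ q, y q * pd (fun y' => gF F p h x y') q y = 0 := by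
  have := euler (f := fun y' => gF F p h x y') 0 (gF_diffAt hF hx hy p h)
    (fun l hl => by
      show gF F p h x (l • y) = l ^ 0 * gF F p h x y
      rw [gF_homog hF hx p h y hy l hl, pow_zero, one_mul])
  simpa using this

lemma euler_pdu (hF : IsFinsler U F) {x y : Fin n → ℝ} (hx : x ∈ U) (hy : y ≠ 0) (h : Fin n) :
    ∑ k, y k * pd (fun y' => pd (fun y'' => (F x y'')^2) h y') k y
      = pd (fun y'' => (F x y'')^2) h y := by
  have h2 := euler (f := fun y' => pd (fun y'' => (F x y'')^2) h y') 1
    (pdu_diffAt hF hx hy h)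
    (fun l hl => by
      show pd (fun y'' => (F x y'')^2) h (l • y) = l ^ 1 * pd (fun y'' => (F x y'')^2) h y
      rw [pdu_homog hF hx h y hy l hl, pow_one])
  simpa using h2

lemma euler_gF_low (hF : IsFinsler U F) {x y : Fin n → ℝ} (hx : x ∈ U) (hy : y ≠ 0) (h : Fin n) :
    ∑ k, gF F h k x y * y k = yLow F h x y := by
  have e1 : ∀ k, gF F h k x y = gF F k h x y := fun k => gF_symm hF hx hy h k
  have h2 := euler (f := fun y' => pd (fun y'' => (F x y'')^2) h y') 1
    (pdu_diffAt hF hx hy h)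
    (fun l hl => by
      show pd (fun y'' => (F x y'')^2) h (l • y) = l ^ 1 * pd (fun y'' => (F x y'')^2) h y
      rw [pdu_homog hF hx h y hy l hl, pow_one])
  rw [yLow_eq]
  have e3 : ∀ k, gF F k h x y
      = (1/2) * pd (fun y' => pd (fun y'' => (F x y'')^2) h y') k y := fun k => rfl
  calc ∑ k, gF F h k x y * y k
      = ∑ k, (1/2) * (y k * pd (fun y' => pd (fun y'' => (F x y'')^2) h y') k y) := by
        refine Finset.sum_congr rfl fun k _ => ?_
        rw [e1 k, e3 k]; ring
    _ = (1/2) * ∑ k, y k * pd (fun y' => pd (fun y'' => (F x y'')^2) h y') k y := by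
        rw [Finset.mul_sum]
    _ = (1/2) * pd (fun y'' => (F x y'')^2) h y := by
        rw [show ∑ k, y k * pd (fun y' => pd (fun y'' => (F x y'')^2) h y') k y
            = (1:ℝ) * pd (fun y'' => (F x y'')^2) h y from by simpa using h2]
        ring

lemma euler_u (hF : IsFinsler U F) {x y : Fin n → ℝ} (hx : x ∈ U) (hy : y ≠ 0) :
    ∑ k, yLow F k x y * y k = (F x y)^2 := by
  have h2 := euler (f := fun y' => (F x y')^2) 2 (u_diffAt hF hx hy)
    (fun l hl => u_homog hF hx y l hl)
  calc ∑ k, yLow F k x y * y k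
      = (1/2) * ∑ k, y k * pd (fun y'' => (F x y'')^2) k y := by
        rw [Finset.mul_sum]
        refine Finset.sum_congr rfl fun k _ => ?_
        rw [yLow_eq]; ring
    _ = (F x y)^2 := by rw [h2]; push_cast; ring

lemma spray_formula (hF : IsFinsler U F) (hg : IsRiemann U gt)
    {a : (Fin n → ℝ) → Fin n → ℝ}
    (hFa : ∀ x ∈ U, ∀ y : Fin n → ℝ, y ≠ 0 → ∀ h : Fin n,
      rhder gt h (fun u v => (F u v) ^ 2) x y
        = (∑ p, ∑ q, gF F p q x y * a x p * y q) * yLow F h x y)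
    {x y : Fin n → ℝ} (hx : x ∈ U) (hy : y ≠ 0) (i : Fin n) :
    spray F i x y = (1/2) * (∑ p, ∑ q, christ gt i p q x * y p * y q)
      + (1/4) * (F x y)^2 * a x i := by
  classical
  have hWxy : ContDiffAt ℝ (⊤:ℕ∞) (fun p : (Fin n → ℝ) × (Fin n → ℝ) => (F p.1 p.2)^2) (x, y) :=
    (W2_smooth hF).contDiffAt ((hF.isOpen.prod isOpen_ne).mem_nhds (Set.mk_mem_prod hx hy))
  -- mixed second derivative symmetry
  have hA : ∀ k h : Fin n, pd (fun x' => pd (fun y' => (F x' y')^2) h y) k x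
      = pd (fun y' => pd (fun x' => (F x' y')^2) k x) h y :=
    fun k h => pd_comm_mixed (W := fun p : (Fin n → ℝ) × (Fin n → ℝ) => (F p.1 p.2)^2) hWxy k h
  -- the hypothesis, unfolded
  have hInner : ∀ (y' : Fin n → ℝ), y' ≠ 0 → ∀ k : Fin n,
      pd (fun x' => (F x' y')^2) k x
        = (∑ p, (∑ l, christ gt p k l x * y' l) * pd (fun y'' => (F x y'')^2) p y')
          + (∑ p, ∑ q, gF F p q x y' * a x p * y' q) * yLow F k x y' := by
    intro y' hy' k
    have h0 := hFa x hx y' hy' k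
    unfold rhder at h0
    linarith [h0]
  -- derivative of the inner expression
  have hDer : ∀ h k : Fin n,
      pd (fun y' => pd (fun x' => (F x' y')^2) k x) h y
        = (∑ p, christ gt p k h x * pd (fun y'' => (F x y'')^2) p y)
          + (∑ p, (∑ l, christ gt p k l x * y l) * (2 * gF F h p x y))
          + (∑ p, gF F p h x y * a x p) * yLow F k x y
          + (∑ p, ∑ q, gF F p q x y * a x p * y q) * gF F h k x y := by
    intro h k
    have e0 : (fun y' => pd (fun x' => (F x' y')^2) k x)
        =ᶠ[nhds y] (fun y' =>
          (∑ p, (∑ l, christ gt p k l x * y' l) * pd (fun y'' => (F x y'')^2) p y')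
          + (∑ p, ∑ q, gF F p q x y' * a x p * y' q) * yLow F k x y') := by
      filter_upwards [isOpen_ne.mem_nhds (show y ≠ 0 from hy)] with y' hy'
      exact hInner y' hy' k
    rw [pd_congr e0 h]
    -- differentiability pieces
    have dcoord : ∀ q : Fin n, DifferentiableAt ℝ (fun y' : Fin n → ℝ => y' q) y :=
      fun q => coord_diffAt q y
    have dlin : ∀ p : Fin n, DifferentiableAt ℝ
        (fun y' : Fin n → ℝ => ∑ l, christ gt p k l x * y' l) y :=
      fun p => DifferentiableAt.fun_sum fun l _ => (differentiableAt_const _).fun_mul (dcoord l)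
    have dterm : ∀ p : Fin n, DifferentiableAt ℝ
        (fun y' => (∑ l, christ gt p k l x * y' l) * pd (fun y'' => (F x y'')^2) p y') y :=
      fun p => (dlin p).fun_mul (pdu_diffAt hF hx hy p)
    have dPhiTerm : ∀ p q : Fin n, DifferentiableAt ℝ
        (fun y' => gF F p q x y' * a x p * y' q) y :=
      fun p q => ((gF_diffAt hF hx hy p q).fun_mul (differentiableAt_const _)).fun_mul (dcoord q)
    have dPhi : DifferentiableAt ℝ (fun y' => ∑ p, ∑ q, gF F p q x y' * a x p * y' q) y :=
      DifferentiableAt.fun_sum fun p _ => DifferentiableAt.fun_sum fun q _ => dPhiTerm p q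
    have dyLow : DifferentiableAt ℝ (fun y' => yLow F k x y') y := by
      have : (fun y' => yLow F k x y')
          = fun y' => (1/2) * pd (fun y'' => (F x y'')^2) k y' := rfl
      rw [this]
      exact (differentiableAt_const _).fun_mul (pdu_diffAt hF hx hy k)
    rw [pd_add (DifferentiableAt.fun_sum fun p _ => dterm p) (dPhi.fun_mul dyLow) h]
    -- first summand
    have e1 : pd (fun y' => ∑ p, (∑ l, christ gt p k l x * y' l)
        * pd (fun y'' => (F x y'')^2) p y') h y
        = (∑ p, christ gt p k h x * pd (fun y'' => (F x y'')^2) p y)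
          + (∑ p, (∑ l, christ gt p k l x * y l) * (2 * gF F h p x y)) := by
      rw [pd_sum (fun p _ => dterm p) h]
      rw [← Finset.sum_add_distrib]
      refine Finset.sum_congr rfl fun p _ => ?_
      rw [pd_mul (dlin p) (pdu_diffAt hF hx hy p) h]
      have e2 : pd (fun y' : Fin n → ℝ => ∑ l, christ gt p k l x * y' l) h y
          = christ gt p k h x := by
        rw [pd_sum (fun l _ => (differentiableAt_const _).fun_mul (dcoord l)) h]
        rw [Finset.sum_congr rfl fun l _ => pd_const_mul (christ gt p k l x) (dcoord l) h]
        rw [Finset.sum_congr rfl fun l _ => by rw [pd_coord l h]]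
        simp
      rw [e2, pd_pdu_eq_two_gF hF x y h p]
    -- second summand
    have e3 : pd (fun y' => (∑ p, ∑ q, gF F p q x y' * a x p * y' q) * yLow F k x y') h y
        = (∑ p, gF F p h x y * a x p) * yLow F k x y
          + (∑ p, ∑ q, gF F p q x y * a x p * y q) * gF F h k x y := by
      rw [pd_mul dPhi dyLow h, pd_yLow hF hx hy h k]
      have e4 : pd (fun y' => ∑ p, ∑ q, gF F p q x y' * a x p * y' q) h y
          = ∑ p, gF F p h x y * a x p := by
        rw [pd_sum (fun p _ => DifferentiableAt.fun_sum fun q _ => dPhiTerm p q) h]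
        have e5 : ∀ p : Fin n, pd (fun y' => ∑ q, gF F p q x y' * a x p * y' q) h y
            = gF F p h x y * a x p := by
          intro p
          rw [pd_sum (fun q _ => dPhiTerm p q) h]
          have e6 : ∀ q : Fin n, pd (fun y' => gF F p q x y' * a x p * y' q) h y
              = (pd (fun y' => gF F p q x y') h y * a x p) * y q
                + (gF F p q x y * a x p) * (if q = h then 1 else 0) := by
            intro q
            rw [pd_mul ((gF_diffAt hF hx hy p q).fun_mul (differentiableAt_const _)) (dcoord q) h,
              pd_mul (gF_diffAt hF hx hy p q) (differentiableAt_const _) h,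
              pd_const, pd_coord q h]
            ring
          rw [Finset.sum_congr rfl fun q _ => e6 q, Finset.sum_add_distrib]
          have e7 : ∑ q, (pd (fun y' => gF F p q x y') h y * a x p) * y q = 0 := by
            have : ∀ q : Fin n, (pd (fun y' => gF F p q x y') h y * a x p) * y q
                = a x p * (y q * pd (fun y' => gF F p h x y') q y) := by
              intro q
              rw [gF_third hF hx hy p q h]
              ring
            rw [Finset.sum_congr rfl fun q _ => this q, ← Finset.mul_sum,
              euler_gF hF hx hy p h, mul_zero]
          rw [e7, zero_add]
          simp
        rw [Finset.sum_congr rfl fun p _ => e5 p]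
      rw [e4]
    rw [e1, e3]
    ring
  -- assemble the bracket
  have hbracket : ∀ h : Fin n,
      (∑ k, pd (fun x' => pd (fun y' => (F x' y')^2) h y) k x * y k)
          - pd (fun x' => (F x' y)^2) h x
        = 2 * (∑ p, gF F h p x y * (∑ k, ∑ l, christ gt p k l x * y k * y l))
          + (F x y)^2 * (∑ p, gF F p h x y * a x p) := by
    intro h
    have hBh := hInner y hy h
    have hsum : ∑ k, pd (fun x' => pd (fun y' => (F x' y')^2) h y) k x * y k
        = ∑ k, ((∑ p, christ gt p k h x * pd (fun y'' => (F x y'')^2) p y)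
          + (∑ p, (∑ l, christ gt p k l x * y l) * (2 * gF F h p x y))
          + (∑ p, gF F p h x y * a x p) * yLow F k x y
          + (∑ p, ∑ q, gF F p q x y * a x p * y q) * gF F h k x y) * y k := by
      refine Finset.sum_congr rfl fun k _ => ?_
      rw [hA k h, hDer h k]
    rw [hsum, hBh]
    -- expand everything into four sums
    have ex : ∀ k : Fin n, ((∑ p, christ gt p k h x * pd (fun y'' => (F x y'')^2) p y)
          + (∑ p, (∑ l, christ gt p k l x * y l) * (2 * gF F h p x y))
          + (∑ p, gF F p h x y * a x p) * yLow F k x y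
          + (∑ p, ∑ q, gF F p q x y * a x p * y q) * gF F h k x y) * y k
        = (∑ p, christ gt p k h x * pd (fun y'' => (F x y'')^2) p y) * y k
          + (∑ p, (∑ l, christ gt p k l x * y l) * (2 * gF F h p x y)) * y k
          + (∑ p, gF F p h x y * a x p) * (yLow F k x y * y k)
          + (∑ p, ∑ q, gF F p q x y * a x p * y q) * (gF F h k x y * y k) := by
      intro k; ring
    rw [Finset.sum_congr rfl fun k _ => ex k]
    rw [Finset.sum_add_distrib, Finset.sum_add_distrib, Finset.sum_add_distrib]
    -- term (cancels with B part 1)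
    have t1 : ∑ k, (∑ p, christ gt p k h x * pd (fun y'' => (F x y'')^2) p y) * y k
        = ∑ p, (∑ l, christ gt p h l x * y l) * pd (fun y'' => (F x y'')^2) p y := by
      calc ∑ k, (∑ p, christ gt p k h x * pd (fun y'' => (F x y'')^2) p y) * y k
          = ∑ k, ∑ p, christ gt p k h x * pd (fun y'' => (F x y'')^2) p y * y k := by
            refine Finset.sum_congr rfl fun k _ => ?_; rw [Finset.sum_mul]
        _ = ∑ p, ∑ k, christ gt p k h x * pd (fun y'' => (F x y'')^2) p y * y k :=
            Finset.sum_comm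
        _ = ∑ p, (∑ l, christ gt p h l x * y l) * pd (fun y'' => (F x y'')^2) p y := by
            refine Finset.sum_congr rfl fun p _ => ?_
            rw [Finset.sum_mul]
            refine Finset.sum_congr rfl fun k _ => ?_
            rw [christ_symm hg hx p k h]
            ring
    -- quadratic term
    have t2 : ∑ k, (∑ p, (∑ l, christ gt p k l x * y l) * (2 * gF F h p x y)) * y k
        = 2 * (∑ p, gF F h p x y * (∑ k, ∑ l, christ gt p k l x * y k * y l)) := by
      simp only [Finset.mul_sum, Finset.sum_mul]
      rw [Finset.sum_comm]
      refine Finset.sum_congr rfl fun p _ => Finset.sum_congr rfl fun k _ =>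
        Finset.sum_congr rfl fun l _ => by ring
    -- Euler terms
    have t3 : ∑ k, (∑ p, gF F p h x y * a x p) * (yLow F k x y * y k)
        = (∑ p, gF F p h x y * a x p) * (F x y)^2 := by
      rw [← Finset.mul_sum]
      rw [euler_u hF hx hy]
    have t4 : ∑ k, (∑ p, ∑ q, gF F p q x y * a x p * y q) * (gF F h k x y * y k)
        = (∑ p, ∑ q, gF F p q x y * a x p * y q) * yLow F h x y := by
      rw [← Finset.mul_sum]
      rw [euler_gF_low hF hx hy h]
    rw [t1, t2, t3, t4]
    ring
  -- final assembly
  unfold spray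
  rw [Finset.sum_congr rfl fun h _ => by rw [hbracket h]]
  set Γ : Fin n → ℝ := fun p => ∑ k, ∑ l, christ gt p k l x * y k * y l with hΓ
  have helper : ∀ (c d e : ℝ) (f g : Fin n → ℝ),
      c * (d * (∑ p, f p) + e * (∑ p, g p)) = ∑ p, (c * (d * f p) + c * (e * g p)) := by
    intro c d e f g
    calc c * (d * (∑ p, f p) + e * (∑ p, g p))
        = c * d * (∑ p, f p) + c * e * (∑ p, g p) := by ring
      _ = (∑ p, c * d * f p) + (∑ p, c * e * g p) := by rw [Finset.mul_sum, Finset.mul_sum]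
      _ = ∑ p, (c * (d * f p) + c * (e * g p)) := by
          rw [← Finset.sum_add_distrib]
          exact Finset.sum_congr rfl fun p _ => by ring
  have hsym2 : ∀ h : Fin n, (∑ p, gF F p h x y * a x p) = ∑ p, gF F h p x y * a x p :=
    fun h => Finset.sum_congr rfl fun p _ => by rw [gF_symm hF hx hy p h]
  have hstep : ∀ h : Fin n, gInv F i h x y
        * (2 * (∑ p, gF F h p x y * Γ p) + (F x y)^2 * (∑ p, gF F p h x y * a x p))
      = ∑ p, (gInv F i h x y * (2 * (gF F h p x y * Γ p))
          + gInv F i h x y * ((F x y)^2 * (gF F h p x y * a x p))) := by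
    intro h
    rw [hsym2 h]
    exact helper _ _ _ _ _
  rw [Finset.sum_congr rfl fun h _ => hstep h, Finset.sum_comm]
  have hcontract : ∀ p : Fin n,
      (∑ h, (gInv F i h x y * (2 * (gF F h p x y * Γ p))
          + gInv F i h x y * ((F x y)^2 * (gF F h p x y * a x p))))
      = (if i = p then 1 else 0) * (2 * Γ p + (F x y)^2 * a x p) := by
    intro p
    rw [← gInv_mul_gF hF hx hy i p, Finset.sum_mul]
    refine Finset.sum_congr rfl fun h _ => by ring
  rw [Finset.sum_congr rfl fun p _ => hcontract p]
  simp only [ite_mul, one_mul, zero_mul, Finset.sum_ite_eq, Finset.mem_univ, if_true]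
  simp only [hΓ]
  ring
lemma sprayH_formula (hF : IsFinsler U F) (hg : IsRiemann U gt)
    {a : (Fin n → ℝ) → Fin n → ℝ}
    (hFa : ∀ x ∈ U, ∀ y : Fin n → ℝ, y ≠ 0 → ∀ h : Fin n,
      rhder gt h (fun u v => (F u v) ^ 2) x y
        = (∑ p, ∑ q, gF F p q x y * a x p * y q) * yLow F h x y)
    {x y : Fin n → ℝ} (hx : x ∈ U) (hy : y ≠ 0) (i j k : Fin n) :
    sprayH F i j k x y = christ gt i j k x + (1/2) * a x i * gF F j k x y := by
  classical
  have dcoord : ∀ (q : Fin n) (y₀ : Fin n → ℝ), DifferentiableAt ℝ (fun y' : Fin n → ℝ => y' q) y₀ :=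
    fun q y₀ => coord_diffAt q y₀
  -- the spray as an explicit function of y near y
  have hQ : ∀ y' : Fin n → ℝ, y' ≠ 0 → spray F i x y'
      = (1/2) * (∑ p, ∑ q, christ gt i p q x * y' p * y' q)
        + ((1/4) * a x i) * (F x y')^2 := by
    intro y' hy'
    rw [spray_formula hF hg hFa hx hy' i]
    ring
  -- first derivative of the explicit function, at any y'' ≠ 0
  have hQ' : ∀ y'' : Fin n → ℝ, y'' ≠ 0 →
      pd (fun y' => spray F i x y') k y''
        = (1/2) * ((∑ q, christ gt i k q x * y'' q) + (∑ p, christ gt i p k x * y'' p))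
          + ((1/4) * a x i) * pd (fun y' => (F x y')^2) k y'' := by
    intro y'' hy''
    have e0 : (fun y' => spray F i x y')
        =ᶠ[nhds y''] (fun y' => (1/2) * (∑ p, ∑ q, christ gt i p q x * y' p * y' q)
          + ((1/4) * a x i) * (F x y')^2) := by
      filter_upwards [isOpen_ne.mem_nhds (show y'' ≠ 0 from hy'')] with y₀ hy₀
      exact hQ y₀ hy₀
    rw [pd_congr e0 k]
    have dquad : ∀ p q : Fin n, DifferentiableAt ℝ
        (fun y' : Fin n → ℝ => christ gt i p q x * y' p * y' q) y'' :=
      fun p q => ((differentiableAt_const _).fun_mul (dcoord p y'')).fun_mul (dcoord q y'')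
    have dP : DifferentiableAt ℝ
        (fun y' : Fin n → ℝ => ∑ p, ∑ q, christ gt i p q x * y' p * y' q) y'' :=
      DifferentiableAt.fun_sum fun p _ => DifferentiableAt.fun_sum fun q _ => dquad p q
    rw [pd_add ((differentiableAt_const _).fun_mul dP)
      ((differentiableAt_const _).fun_mul (u_diffAt hF hx hy'')) k]
    rw [pd_const_mul (1/2) dP k, pd_const_mul ((1/4) * a x i) (u_diffAt hF hx hy'') k]
    have e1 : pd (fun y' : Fin n → ℝ => ∑ p, ∑ q, christ gt i p q x * y' p * y' q) k y''
        = (∑ q, christ gt i k q x * y'' q) + (∑ p, christ gt i p k x * y'' p) := by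
      rw [pd_sum (fun p _ => DifferentiableAt.fun_sum fun q _ => dquad p q) k]
      have e2 : ∀ p : Fin n, pd (fun y' : Fin n → ℝ => ∑ q, christ gt i p q x * y' p * y' q) k y''
          = ∑ q, (christ gt i p q x * (if p = k then 1 else 0) * y'' q
            + christ gt i p q x * y'' p * (if q = k then 1 else 0)) := by
        intro p
        rw [pd_sum (fun q _ => dquad p q) k]
        refine Finset.sum_congr rfl fun q _ => ?_
        rw [pd_mul ((differentiableAt_const _).fun_mul (dcoord p y'')) (dcoord q y'') k,
          pd_const_mul (christ gt i p q x) (dcoord p y'') k, pd_coord p k, pd_coord q k]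
      rw [Finset.sum_congr rfl fun p _ => e2 p]
      have e3 : ∑ p, ∑ q, (christ gt i p q x * (if p = k then 1 else 0) * y'' q
            + christ gt i p q x * y'' p * (if q = k then 1 else 0))
          = ∑ p, ∑ q, (if p = k then christ gt i p q x * y'' q else 0)
            + ∑ p, ∑ q, (if q = k then christ gt i p q x * y'' p else 0) := by
        rw [← Finset.sum_add_distrib]
        refine Finset.sum_congr rfl fun p _ => ?_
        rw [← Finset.sum_add_distrib]
        refine Finset.sum_congr rfl fun q _ => ?_
        by_cases hp : p = k <;> by_cases hq : q = k <;> simp [hp, hq] <;> ring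
      rw [e3]
      congr 1
      · rw [Finset.sum_comm]
        simp [Finset.sum_ite_eq']
      · simp [Finset.sum_ite_eq']
    rw [e1]
  -- second derivative
  unfold sprayH
  have e4 : (fun y' => pd (fun y'' => spray F i x y'') k y')
      =ᶠ[nhds y] (fun y'' => (1/2) * ((∑ q, christ gt i k q x * y'' q)
          + (∑ p, christ gt i p k x * y'' p))
        + ((1/4) * a x i) * pd (fun y' => (F x y')^2) k y'') := by
    filter_upwards [isOpen_ne.mem_nhds (show y ≠ 0 from hy)] with y'' hy''
    exact hQ' y'' hy''
  rw [pd_congr e4 j]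
  have dlin1 : DifferentiableAt ℝ (fun y'' : Fin n → ℝ => ∑ q, christ gt i k q x * y'' q) y :=
    DifferentiableAt.fun_sum fun q _ => (differentiableAt_const _).fun_mul (dcoord q y)
  have dlin2 : DifferentiableAt ℝ (fun y'' : Fin n → ℝ => ∑ p, christ gt i p k x * y'' p) y :=
    DifferentiableAt.fun_sum fun p _ => (differentiableAt_const _).fun_mul (dcoord p y)
  rw [pd_add ((differentiableAt_const _).fun_mul (dlin1.fun_add dlin2))
    ((differentiableAt_const _).fun_mul (pdu_diffAt hF hx hy k)) j]
  rw [pd_const_mul (1/2) (dlin1.fun_add dlin2) j,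
    pd_const_mul ((1/4) * a x i) (pdu_diffAt hF hx hy k) j]
  rw [pd_add dlin1 dlin2 j]
  have e5 : pd (fun y'' : Fin n → ℝ => ∑ q, christ gt i k q x * y'' q) j y
      = christ gt i k j x := by
    rw [pd_sum (fun q _ => (differentiableAt_const _).fun_mul (dcoord q y)) j]
    rw [Finset.sum_congr rfl fun q _ => pd_const_mul (christ gt i k q x) (dcoord q y) j]
    rw [Finset.sum_congr rfl fun q _ => by rw [pd_coord q j]]
    simp
  have e6 : pd (fun y'' : Fin n → ℝ => ∑ p, christ gt i p k x * y'' p) j y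
      = christ gt i j k x := by
    rw [pd_sum (fun p _ => (differentiableAt_const _).fun_mul (dcoord p y)) j]
    rw [Finset.sum_congr rfl fun p _ => pd_const_mul (christ gt i p k x) (dcoord p y) j]
    rw [Finset.sum_congr rfl fun p _ => by rw [pd_coord p j]]
    simp
  rw [e5, e6, pd_pdu_eq_two_gF hF x y j k, christ_symm hg hx i k j]
  ring

lemma tau_formula (hF : IsFinsler U F) (hg : IsRiemann U gt)
    {a : (Fin n → ℝ) → Fin n → ℝ}
    (hFa : ∀ x ∈ U, ∀ y : Fin n → ℝ, y ≠ 0 → ∀ h : Fin n,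
      rhder gt h (fun u v => (F u v) ^ 2) x y
        = (∑ p, ∑ q, gF F p q x y * a x p * y q) * yLow F h x y)
    {x y : Fin n → ℝ} (hx : x ∈ U) (hy : y ≠ 0) (i : Fin n) :
    tauId F gt i x y = -((n : ℝ) / 2) * a x i := by
  unfold tauId
  calc ∑ j, ∑ k, gInv F j k x y * (christ gt i j k x - sprayH F i j k x y)
      = ∑ j, ∑ k, (-(1/2)) * a x i * (gInv F j k x y * gF F k j x y) := by
        refine Finset.sum_congr rfl fun j _ => Finset.sum_congr rfl fun k _ => ?_
        rw [sprayH_formula hF hg hFa hx hy i j k, gF_symm hF hx hy j k]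
        ring
    _ = (-(1/2)) * a x i * ∑ j, (∑ k, gInv F j k x y * gF F k j x y) := by
        rw [Finset.mul_sum]
        refine Finset.sum_congr rfl fun j _ => ?_
        rw [Finset.mul_sum]
    _ = (-(1/2)) * a x i * ∑ j : Fin n, (1:ℝ) := by
        congr 1
        refine Finset.sum_congr rfl fun j _ => ?_
        rw [gInv_mul_gF hF hx hy j j, if_pos rfl]
    _ = -((n : ℝ) / 2) * a x i := by
        simp [Finset.sum_const, Finset.card_univ]
        ring

lemma tauCov_zero (hF : IsFinsler U F) (hg : IsRiemann U gt)
    {a : (Fin n → ℝ) → Fin n → ℝ} (ha : ∀ i, ContDiffOn ℝ (⊤ : ℕ∞) (fun x => a x i) U)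
    (hapar : ∀ i j : Fin n, ∀ x ∈ U,
      pd (fun x' => a x' i) j x + ∑ l, christ gt i j l x * a x l = 0)
    (hFa : ∀ x ∈ U, ∀ y : Fin n → ℝ, y ≠ 0 → ∀ h : Fin n,
      rhder gt h (fun u v => (F u v) ^ 2) x y
        = (∑ p, ∑ q, gF F p q x y * a x p * y q) * yLow F h x y)
    {x y : Fin n → ℝ} (hx : x ∈ U) (hy : y ≠ 0) (i j : Fin n) :
    tauIdCov F gt i j x y = 0 := by
  unfold tauIdCov
  have e0 : (fun x' => tauId F gt i x' y)
      =ᶠ[nhds x] (fun x' => -((n : ℝ) / 2) * a x' i) := by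
    filter_upwards [hF.isOpen.mem_nhds hx] with x' hx'
    exact tau_formula hF hg hFa hx' hy i
  have haD : DifferentiableAt ℝ (fun x' => a x' i) x :=
    (((ha i).of_le (by simp)).contDiffAt (hg.isOpen.mem_nhds hx)).differentiableAt hle1'
  rw [pd_congr e0 j, pd_const_mul (-((n : ℝ) / 2)) haD j]
  have e1 : ∑ l, christ gt i j l x * tauId F gt l x y
      = -((n : ℝ) / 2) * ∑ l, christ gt i j l x * a x l := by
    rw [Finset.mul_sum]
    refine Finset.sum_congr rfl fun l _ => ?_
    rw [tau_formula hF hg hFa hx hy l]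
    ring
  rw [e1]
  have := hapar i j x hx
  linear_combination (-(n:ℝ)/2) * this

end Main
end Aux

/-- for a nowhere-zero `g̃`-parallel vector field `a` with
`(F²)_{||h} = ⟨a,y⟩_g · y_h`, the identity map `id : (U,g) → (U,g̃)` is proper
biharmonic: its tension equals `−(n/2) a`, is nowhere zero, is `g̃`-parallel,
and solves the biharmonic equation for arbitrary coefficients `g^{jk}`, `Γ^l_{jk}`. -/
theorem identity_proper_biharmonic_of_parallel_field {n : ℕ} (hn : 1 ≤ n)
    (U : Set (Fin n → ℝ)) (F : (Fin n → ℝ) → (Fin n → ℝ) → ℝ) (hF : IsFinsler U F)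
    (gt : (Fin n → ℝ) → Matrix (Fin n) (Fin n) ℝ) (hg : IsRiemann U gt)
    (a : (Fin n → ℝ) → Fin n → ℝ) (ha : ∀ i, ContDiffOn ℝ (⊤ : ℕ∞) (fun x => a x i) U)
    (hne : ∀ x ∈ U, a x ≠ 0)
    (hapar : ∀ i j : Fin n, ∀ x ∈ U,
      pd (fun x' => a x' i) j x + ∑ l, christ gt i j l x * a x l = 0)
    (hFa : ∀ x ∈ U, ∀ y : Fin n → ℝ, y ≠ 0 → ∀ h : Fin n,
      rhder gt h (fun u v => (F u v) ^ 2) x y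
        = (∑ p, ∑ q, gF F p q x y * a x p * y q) * yLow F h x y) :
    ∀ x ∈ U, ∀ y : Fin n → ℝ, y ≠ 0 →
      (∀ i : Fin n, tauId F gt i x y = -((n : ℝ) / 2) * a x i) ∧
      ((fun i => tauId F gt i x y) ≠ 0) ∧
      (∀ i j : Fin n, tauIdCov F gt i j x y = 0) ∧
      (∀ (gA : (Fin n → ℝ) → (Fin n → ℝ) → Fin n → Fin n → ℝ)
        (ΓA : (Fin n → ℝ) → (Fin n → ℝ) → Fin n → Fin n → Fin n → ℝ) (i : Fin n),
        ∑ j, ∑ k, gA x y j k *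
          (tauIdCov2 F gt i j k x y
            - (∑ l, ΓA x y l j k * tauIdCov F gt i l x y)
            - ∑ l, rcurv gt j i l k x * tauId F gt l x y) = 0) := by
  intro x hx y hy
  have htau : ∀ x' ∈ U, ∀ i : Fin n, tauId F gt i x' y = -((n : ℝ) / 2) * a x' i :=
    fun x' hx' i => Aux.tau_formula hF hg hFa hx' hy i
  have htcov : ∀ x' ∈ U, ∀ i j : Fin n, tauIdCov F gt i j x' y = 0 :=
    fun x' hx' i j => Aux.tauCov_zero hF hg ha hapar hFa hx' hy i j
  refine ⟨fun i => htau x hx i, ?_, fun i j => htcov x hx i j, ?_⟩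
  · -- not harmonic
    obtain ⟨i₀, hi₀⟩ := Function.ne_iff.mp (hne x hx)
    intro hcon
    have h0 := congrFun hcon i₀
    simp only [htau x hx i₀, Pi.zero_apply] at h0
    have hn' : ((n : ℝ) / 2) ≠ 0 := by
      have : (0:ℝ) < n := by exact_mod_cast Nat.lt_of_lt_of_le Nat.zero_lt_one hn
      positivity
    have := mul_eq_zero.mp h0
    rcases this with h | h
    · exact hn' (by linarith [neg_eq_zero.mp h])
    · exact hi₀ h
  · -- biharmonic equation
    intro gA ΓA i
    have hcov2 : ∀ j k : Fin n, tauIdCov2 F gt i j k x y = 0 := by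
      intro j k
      unfold tauIdCov2
      have e0 : (fun x' => tauIdCov F gt i j x' y) =ᶠ[nhds x] (fun _ => (0:ℝ)) := by
        filter_upwards [hF.isOpen.mem_nhds hx] with x' hx'
        exact htcov x' hx' i j
      rw [Aux.pd_congr e0 k, Aux.pd_const]
      simp [htcov x hx]
    refine Finset.sum_eq_zero fun j _ => Finset.sum_eq_zero fun k _ => ?_
    have h1 : ∑ l, ΓA x y l j k * tauIdCov F gt i l x y = 0 :=
      Finset.sum_eq_zero fun l _ => by rw [htcov x hx i l, mul_zero]
    have h2 : ∑ l, rcurv gt j i l k x * tauId F gt l x y = 0 := by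
      have : ∀ l, rcurv gt j i l k x * tauId F gt l x y
          = -((n : ℝ) / 2) * (rcurv gt j i l k x * a x l) := by
        intro l; rw [htau x hx l]; ring
      rw [Finset.sum_congr rfl fun l _ => this l, ← Finset.mul_sum,
        Aux.curv_contract hg ha hapar hx i j k, mul_zero]
    rw [hcov2 j k, h1, h2]
    ring
end
end

section
/- Let F be a Finsler structure on U. Then for every smooth function X = (X^i(x,y)) on U × (ℝⁿ∖{0}) one has, on U × (ℝⁿ∖{0}): (1/det g) · δ_i( X^i det g ) − G^j_{ij} X^i = δ_i X^i + Γ^i_{ik} X^k − P_i X^i, where det g denotes the determinant of the matrix (g_{ij}(x,y)). That is, the divergence of the horizontal vector field X expressed through the volume form equals its Chern–Rund covariant divergence minus P(X). -/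
noncomputable section

open scoped BigOperators

namespace FinslerAux

variable {k : ℕ}

lemma pd_congr {f g : (Fin k → ℝ) → ℝ} {x : Fin k → ℝ} (h : f =ᶠ[nhds x] g) (i : Fin k) :
    pd f i x = pd g i x := by
  unfold pd; rw [Filter.EventuallyEq.fderiv_eq h]

lemma _root_.HasFDerivAt.pd_eq {f : (Fin k → ℝ) → ℝ} {x : Fin k → ℝ}
    {f' : (Fin k → ℝ) →L[ℝ] ℝ}
    (h : HasFDerivAt f f' x) (i : Fin k) : pd f i x = f' (Pi.single i 1) := by
  rw [pd, h.fderiv]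

lemma pd_mul {f g : (Fin k → ℝ) → ℝ} {x : Fin k → ℝ} (hf : DifferentiableAt ℝ f x)
    (hg : DifferentiableAt ℝ g x) (i : Fin k) :
    pd (fun z => f z * g z) i x = pd f i x * g x + f x * pd g i x := by
  rw [pd, fderiv_fun_mul hf hg]
  simp [pd]
  ring

/-- combinatorial identity behind Jacobi's formula -/
lemma det_comb {N : ℕ} (M : Matrix (Fin N) (Fin N) ℝ) (H : Fin N → Fin N → ℝ) :
    ∑ σ : Equiv.Perm (Fin N), ((Equiv.Perm.sign σ : ℤ) : ℝ) *
        ∑ a, (∏ b ∈ Finset.univ.erase a, M (σ b) b) * H (σ a) a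
      = ∑ a, ∑ b, M.adjugate b a * H a b := by
  have key : ∀ a : Fin N,
      ∑ σ : Equiv.Perm (Fin N), ((Equiv.Perm.sign σ : ℤ) : ℝ) *
          ((∏ b ∈ Finset.univ.erase a, M (σ b) b) * H (σ a) a)
        = (M.updateCol a (fun r => H r a)).det := by
    intro a
    rw [Matrix.det_apply']
    refine Finset.sum_congr rfl fun σ _ => ?_
    congr 1
    rw [← Finset.mul_prod_erase Finset.univ _ (Finset.mem_univ a)]
    rw [Matrix.updateCol_self]
    rw [mul_comm]
    congr 1
    refine Finset.prod_congr rfl fun b hb => ?_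
    rw [Matrix.updateCol_apply, if_neg (Finset.ne_of_mem_erase hb)]
  calc ∑ σ : Equiv.Perm (Fin N), ((Equiv.Perm.sign σ : ℤ) : ℝ) *
        ∑ a, (∏ b ∈ Finset.univ.erase a, M (σ b) b) * H (σ a) a
      = ∑ a, ∑ σ : Equiv.Perm (Fin N), ((Equiv.Perm.sign σ : ℤ) : ℝ) *
          ((∏ b ∈ Finset.univ.erase a, M (σ b) b) * H (σ a) a) := by
        simp_rw [Finset.mul_sum]; exact Finset.sum_comm
    _ = ∑ a, (M.updateCol a (fun r => H r a)).det := by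
        exact Finset.sum_congr rfl fun a _ => key a
    _ = ∑ a, ∑ b, M.adjugate a b * H b a := by
        refine Finset.sum_congr rfl fun a _ => ?_
        rw [← Matrix.cramer_apply]
        have hfun : (fun r => H r a) = fun r => ∑ b, if r = b then H r a else 0 := by
          funext r; simp
        rw [hfun, ← Matrix.sum_cramer_apply]
        refine Finset.sum_congr rfl fun b _ => ?_
        have h1 : (fun r => if r = b then H r a else 0) = H b a • (Pi.single b 1 : Fin N → ℝ) := by
          funext c
          by_cases hc : c = b <;> simp [Pi.single_apply, hc]
        rw [h1, map_smul]
        have h2 : Matrix.cramer M (Pi.single b 1) a = M.adjugate a b := by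
          calc Matrix.cramer M (Pi.single b 1) a = M.transpose.adjugate b a := by
                rw [Matrix.adjugate_def]; simp [Matrix.transpose_transpose]
            _ = M.adjugate a b := by rw [← Matrix.adjugate_transpose]; rfl
        simp [h2, mul_comm]
    _ = ∑ a, ∑ b, M.adjugate b a * H a b := by
        rw [Finset.sum_comm]

lemma hasFDerivAt_detA {N : ℕ} {A : (Fin k → ℝ) → Fin N → Fin N → ℝ} {x : Fin k → ℝ}
    (hA : ∀ a b, DifferentiableAt ℝ (fun z => A z a b) x) :
    HasFDerivAt (fun z => (Matrix.of (A z)).det)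
      (∑ σ : Equiv.Perm (Fin N), ((Equiv.Perm.sign σ : ℤ) : ℝ) •
        (∑ a, (∏ b ∈ Finset.univ.erase a, A x (σ b) b) •
          fderiv ℝ (fun z => A z (σ a) a) x)) x := by
  have h1 : (fun z => (Matrix.of (A z)).det)
      = fun z => ∑ σ : Equiv.Perm (Fin N), ((Equiv.Perm.sign σ : ℤ) : ℝ) *
          ∏ a, A z (σ a) a := by
    funext z
    rw [Matrix.det_apply']
    rfl
  rw [h1]
  apply HasFDerivAt.fun_sum
  intro σ _
  exact ((HasFDerivAt.finset_prod (u := Finset.univ)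
    (fun a _ => (hA (σ a) a).hasFDerivAt)).const_mul _)

lemma pd_det {N : ℕ} {A : (Fin k → ℝ) → Fin N → Fin N → ℝ} {x : Fin k → ℝ}
    (hA : ∀ a b, DifferentiableAt ℝ (fun z => A z a b) x) (i : Fin k) :
    pd (fun z => (Matrix.of (A z)).det) i x
      = ∑ a, ∑ b, (Matrix.of (A x)).adjugate b a * pd (fun z => A z a b) i x := by
  rw [(hasFDerivAt_detA hA).pd_eq]
  have expand : (∑ σ : Equiv.Perm (Fin N), ((Equiv.Perm.sign σ : ℤ) : ℝ) •
        (∑ a, (∏ b ∈ Finset.univ.erase a, A x (σ b) b) •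
          fderiv ℝ (fun z => A z (σ a) a) x)) (Pi.single i 1)
      = ∑ σ : Equiv.Perm (Fin N), ((Equiv.Perm.sign σ : ℤ) : ℝ) *
          ∑ a, (∏ b ∈ Finset.univ.erase a, (Matrix.of (A x)) (σ b) b) *
            pd (fun z => A z (σ a) a) i x := by
    rw [ContinuousLinearMap.sum_apply]
    refine Finset.sum_congr rfl fun σ _ => ?_
    simp only [ContinuousLinearMap.smul_apply, ContinuousLinearMap.sum_apply, smul_eq_mul]
    rfl
  rw [expand]
  exact det_comb (Matrix.of (A x)) (fun a b => pd (fun z => A z a b) i x)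

lemma differentiableAt_detA {N : ℕ} {A : (Fin k → ℝ) → Fin N → Fin N → ℝ} {x : Fin k → ℝ}
    (hA : ∀ a b, DifferentiableAt ℝ (fun z => A z a b) x) :
    DifferentiableAt ℝ (fun z => (Matrix.of (A z)).det) x :=
  (hasFDerivAt_detA hA).differentiableAt




variable {n : ℕ} {U : Set (Fin n → ℝ)} {F : (Fin n → ℝ) → (Fin n → ℝ) → ℝ}
  {x y : Fin n → ℝ}

lemma omega_nhds (hF : IsFinsler U F) (hx : x ∈ U) (hy : y ≠ 0) :
    U ×ˢ {v : Fin n → ℝ | v ≠ 0} ∈ nhds (x, y) :=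
  (hF.isOpen.prod isOpen_ne).mem_nhds ⟨hx, hy⟩

lemma cda_slice1 {f : (Fin n → ℝ) × (Fin n → ℝ) → ℝ}
    (h : ContDiffAt ℝ (⊤ : ℕ∞) f (x, y)) : DifferentiableAt ℝ (fun x' => f (x', y)) x :=
  (h.differentiableAt (by simp)).comp x (differentiableAt_id.prodMk (differentiableAt_const y))

lemma cda_slice2 {f : (Fin n → ℝ) × (Fin n → ℝ) → ℝ}
    (h : ContDiffAt ℝ (⊤ : ℕ∞) f (x, y)) : DifferentiableAt ℝ (fun y' => f (x, y')) y :=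
  (h.differentiableAt (by simp)).comp y ((differentiableAt_const x).prodMk differentiableAt_id)

lemma gF_cda (hF : IsFinsler U F) (hx : x ∈ U) (hy : y ≠ 0) (a b : Fin n) :
    ContDiffAt ℝ (⊤ : ℕ∞) (fun p : (Fin n → ℝ) × (Fin n → ℝ) => gF F a b p.1 p.2) (x, y) := by
  have hsq : ∀ q : (Fin n → ℝ) × (Fin n → ℝ), q.1 ∈ U → q.2 ≠ 0 →
      ContDiffAt ℝ (⊤ : ℕ∞) (fun p : (Fin n → ℝ) × (Fin n → ℝ) => (F p.1 p.2) ^ 2) q := by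
    intro q hq1 hq2
    exact (hF.smooth.contDiffAt (omega_nhds hF hq1 hq2)).pow 2
  -- inner derivative, jointly smooth on the domain
  have hW : ∀ q : (Fin n → ℝ) × (Fin n → ℝ), q.1 ∈ U → q.2 ≠ 0 →
      ContDiffAt ℝ (⊤ : ℕ∞) (fun p : (Fin n → ℝ) × (Fin n → ℝ) =>
        fderiv ℝ (fun y'' => (F p.1 y'') ^ 2) p.2 (Pi.single b 1)) q := by
    intro q hq1 hq2
    have h1 : ContDiffAt ℝ (⊤ : ℕ∞) (fun p : (Fin n → ℝ) × (Fin n → ℝ) =>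
        fderiv ℝ (fun y'' => (F p.1 y'') ^ 2) p.2) q := by
      apply ContDiffAt.fderiv
        (f := fun (p : (Fin n → ℝ) × (Fin n → ℝ)) (y'' : Fin n → ℝ) => (F p.1 y'') ^ 2)
        (g := Prod.snd) (n := ((⊤ : ℕ∞) : WithTop ℕ∞)) _ contDiffAt_snd
          (by exact_mod_cast (le_top : (⊤ : ℕ∞) + 1 ≤ ⊤))
      have hcomp : (Function.uncurry fun (p : (Fin n → ℝ) × (Fin n → ℝ))
            (y'' : Fin n → ℝ) => (F p.1 y'') ^ 2)
          = (fun p : (Fin n → ℝ) × (Fin n → ℝ) => (F p.1 p.2) ^ 2) ∘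
            (fun r : ((Fin n → ℝ) × (Fin n → ℝ)) × (Fin n → ℝ) => (r.1.1, r.2)) := rfl
      rw [hcomp]
      exact ContDiffAt.comp _ (hsq (q.1, q.2) hq1 hq2)
        ((contDiff_fst.fst.prodMk contDiff_snd).contDiffAt)
    exact h1.clm_apply contDiffAt_const
  have houter : ContDiffAt ℝ (⊤ : ℕ∞) (fun p : (Fin n → ℝ) × (Fin n → ℝ) =>
      fderiv ℝ (fun y' => fderiv ℝ (fun y'' => (F p.1 y'') ^ 2) y' (Pi.single b 1))
        p.2 (Pi.single a 1)) (x, y) := by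
    have h1 : ContDiffAt ℝ (⊤ : ℕ∞) (fun p : (Fin n → ℝ) × (Fin n → ℝ) =>
        fderiv ℝ (fun y' => fderiv ℝ (fun y'' => (F p.1 y'') ^ 2) y' (Pi.single b 1)) p.2)
        (x, y) := by
      apply ContDiffAt.fderiv
        (f := fun (p : (Fin n → ℝ) × (Fin n → ℝ)) (y' : Fin n → ℝ) =>
          fderiv ℝ (fun y'' => (F p.1 y'') ^ 2) y' (Pi.single b 1))
        (g := Prod.snd) (n := ((⊤ : ℕ∞) : WithTop ℕ∞)) _ contDiffAt_snd
          (by exact_mod_cast (le_top : (⊤ : ℕ∞) + 1 ≤ ⊤))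
      have hcomp : (Function.uncurry fun (p : (Fin n → ℝ) × (Fin n → ℝ)) (y' : Fin n → ℝ) =>
            fderiv ℝ (fun y'' => (F p.1 y'') ^ 2) y' (Pi.single b 1))
          = (fun p : (Fin n → ℝ) × (Fin n → ℝ) =>
              fderiv ℝ (fun y'' => (F p.1 y'') ^ 2) p.2 (Pi.single b 1)) ∘
            (fun r : ((Fin n → ℝ) × (Fin n → ℝ)) × (Fin n → ℝ) => (r.1.1, r.2)) := rfl
      rw [hcomp]
      exact ContDiffAt.comp _ (hW (x, y) hx hy)
        ((contDiff_fst.fst.prodMk contDiff_snd).contDiffAt)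
    exact h1.clm_apply contDiffAt_const
  exact contDiffAt_const.mul houter




variable {n : ℕ} {U : Set (Fin n → ℝ)} {F : (Fin n → ℝ) → (Fin n → ℝ) → ℝ}
  {x y : Fin n → ℝ}

lemma gF_symm (hF : IsFinsler U F) (hx : x ∈ U) (hy : y ≠ 0) (a b : Fin n) :
    gF F a b x y = gF F b a x y := by
  have h := (hF.posdef x hx y hy).1
  have h2 := congrFun (congrFun h a) b
  simpa [Matrix.conjTranspose_apply, gMat] using h2.symm

lemma gMat_transpose (hF : IsFinsler U F) (hx : x ∈ U) (hy : y ≠ 0) :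
    (gMat F x y).transpose = gMat F x y := by
  ext a b
  exact gF_symm hF hx hy b a

lemma gInv_symm (hF : IsFinsler U F) (hx : x ∈ U) (hy : y ≠ 0) (a b : Fin n) :
    gInv F a b x y = gInv F b a x y := by
  unfold gInv
  conv_lhs => rw [← gMat_transpose hF hx hy, ← Matrix.transpose_nonsing_inv]
  rfl

lemma det_pos (hF : IsFinsler U F) (hx : x ∈ U) (hy : y ≠ 0) :
    0 < (gMat F x y).det := (hF.posdef x hx y hy).det_pos

lemma adj_eq (hF : IsFinsler U F) (hx : x ∈ U) (hy : y ≠ 0) (a b : Fin n) :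
    (gMat F x y).adjugate a b = (gMat F x y).det * gInv F a b x y := by
  have hdet := (det_pos hF hx hy).ne'
  have hinv := Matrix.inv_def (gMat F x y)
  have h2 := congrFun (congrFun hinv a) b
  unfold gInv
  rw [h2]
  simp [Ring.inverse_eq_inv', Matrix.smul_apply, smul_eq_mul]
  field_simp

/-- slice differentiability of `gF` in `x` -/
lemma gF_diff1 (hF : IsFinsler U F) (hx : x ∈ U) (hy : y ≠ 0) (a b : Fin n) :
    DifferentiableAt ℝ (fun x' => gF F a b x' y) x :=
  cda_slice1 (gF_cda hF hx hy a b)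

lemma gF_diff2 (hF : IsFinsler U F) (hx : x ∈ U) (hy : y ≠ 0) (a b : Fin n) :
    DifferentiableAt ℝ (fun y' => gF F a b x y') y :=
  cda_slice2 (gF_cda hF hx hy a b)

/-- product rule for the horizontal derivation -/
lemma hder_mul {f g : (Fin n → ℝ) → (Fin n → ℝ) → ℝ} (i : Fin n)
    (hf1 : DifferentiableAt ℝ (fun x' => f x' y) x)
    (hf2 : DifferentiableAt ℝ (fun y' => f x y') y)
    (hg1 : DifferentiableAt ℝ (fun x' => g x' y) x)
    (hg2 : DifferentiableAt ℝ (fun y' => g x y') y) :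
    hder F i (fun u v => f u v * g u v) x y
      = hder F i f x y * g x y + f x y * hder F i g x y := by
  unfold hder
  rw [pd_mul hf1 hg1]
  have hsum : ∀ j : Fin n, nCart F j i x y * pd (fun y' => f x y' * g x y') j y
      = nCart F j i x y * (pd (fun y' => f x y') j y * g x y
          + f x y * pd (fun y' => g x y') j y) := by
    intro j
    rw [pd_mul hf2 hg2]
  rw [Finset.sum_congr rfl fun j _ => hsum j]
  have e1 : ∑ j, nCart F j i x y *
        (pd (fun y' => f x y') j y * g x y + f x y * pd (fun y' => g x y') j y)
      = (∑ j, nCart F j i x y * pd (fun y' => f x y') j y) * g x y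
        + f x y * (∑ j, nCart F j i x y * pd (fun y' => g x y') j y) := by
    rw [Finset.sum_mul, Finset.mul_sum, ← Finset.sum_add_distrib]
    exact Finset.sum_congr rfl fun j _ => by ring
  rw [e1]
  ring

/-- congruence for the horizontal derivation: functions agreeing on the domain -/
lemma hder_congr (hF : IsFinsler U F) (hx : x ∈ U) (hy : y ≠ 0)
    {f g : (Fin n → ℝ) → (Fin n → ℝ) → ℝ} (i : Fin n)
    (h : ∀ u ∈ U, ∀ v : Fin n → ℝ, v ≠ 0 → f u v = g u v) :
    hder F i f x y = hder F i g x y := by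
  unfold hder
  have h1 : (fun x' => f x' y) =ᶠ[nhds x] fun x' => g x' y := by
    filter_upwards [hF.isOpen.mem_nhds hx] with u hu
    exact h u hu y hy
  have h2 : ∀ j : Fin n, pd (fun y' => f x y') j y = pd (fun y' => g x y') j y := by
    intro j
    refine pd_congr ?_ j
    filter_upwards [isOpen_ne.mem_nhds hy] with v hv
    exact h x hx v hv
  rw [pd_congr h1]
  simp_rw [h2]



lemma det_diff1 (hF : IsFinsler U F) (hx : x ∈ U) (hy : y ≠ 0) :
    DifferentiableAt ℝ (fun x' => (gMat F x' y).det) x :=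
  differentiableAt_detA (A := fun z a b => gF F a b z y)
    (fun a b => gF_diff1 hF hx hy a b)

lemma det_diff2 (hF : IsFinsler U F) (hx : x ∈ U) (hy : y ≠ 0) :
    DifferentiableAt ℝ (fun y' => (gMat F x y').det) y :=
  differentiableAt_detA (A := fun z a b => gF F a b x z)
    (fun a b => gF_diff2 hF hx hy a b)

/-- Jacobi's formula for the horizontal derivation -/
lemma hder_det (hF : IsFinsler U F) (hx : x ∈ U) (hy : y ≠ 0) (i : Fin n) :
    hder F i (fun u v => (gMat F u v).det) x y
      = ∑ a, ∑ b, (gMat F x y).adjugate b a * hder F i (gF F a b) x y := by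
  have h1 : pd (fun x' => (gMat F x' y).det) i x
      = ∑ a, ∑ b, (gMat F x y).adjugate b a * pd (fun x' => gF F a b x' y) i x :=
    pd_det (A := fun z a b => gF F a b z y) (fun a b => gF_diff1 hF hx hy a b) i
  have h2 : ∀ j : Fin n, pd (fun y' => (gMat F x y').det) j y
      = ∑ a, ∑ b, (gMat F x y).adjugate b a * pd (fun y' => gF F a b x y') j y :=
    fun j => pd_det (A := fun z a b => gF F a b x z) (fun a b => gF_diff2 hF hx hy a b) j
  show pd (fun x' => (gMat F x' y).det) i x
      - ∑ j, nCart F j i x y * pd (fun y' => (gMat F x y').det) j y = _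
  rw [h1]
  simp only [h2]
  have ex : ∑ j, nCart F j i x y *
        ∑ a, ∑ b, (gMat F x y).adjugate b a * pd (fun y' => gF F a b x y') j y
      = ∑ a, ∑ b, (gMat F x y).adjugate b a *
          ∑ j, nCart F j i x y * pd (fun y' => gF F a b x y') j y := by
    simp_rw [Finset.mul_sum]
    rw [Finset.sum_comm]
    refine Finset.sum_congr rfl fun a _ => ?_
    rw [Finset.sum_comm]
    exact Finset.sum_congr rfl fun b _ => Finset.sum_congr rfl fun j _ => by ring
  rw [ex]
  have goalr : ∀ a b : Fin n, (gMat F x y).adjugate b a * hder F i (gF F a b) x y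
      = (gMat F x y).adjugate b a * pd (fun x' => gF F a b x' y) i x
        - (gMat F x y).adjugate b a *
            ∑ j, nCart F j i x y * pd (fun y' => gF F a b x y') j y := by
    intro a b
    show (gMat F x y).adjugate b a *
        (pd (fun x' => gF F a b x' y) i x
          - ∑ j, nCart F j i x y * pd (fun y' => gF F a b x y') j y) = _
    ring
  rw [← Finset.sum_sub_distrib]
  refine Finset.sum_congr rfl fun a _ => ?_
  rw [← Finset.sum_sub_distrib]
  refine Finset.sum_congr rfl fun b _ => ?_
  exact (goalr a b).symm

lemma hJ (hF : IsFinsler U F) (hx : x ∈ U) (hy : y ≠ 0) (i : Fin n) :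
    hder F i (fun u v => (gMat F u v).det) x y
      = (gMat F x y).det * ∑ a, ∑ b, gInv F b a x y * hder F i (gF F a b) x y := by
  rw [hder_det hF hx hy i, Finset.mul_sum]
  refine Finset.sum_congr rfl fun a _ => ?_
  rw [Finset.mul_sum]
  refine Finset.sum_congr rfl fun b _ => ?_
  rw [adj_eq hF hx hy b a]
  ring

/-- trace of Chern-Rund coefficients -/
lemma hT (hF : IsFinsler U F) (hx : x ∈ U) (hy : y ≠ 0) (i : Fin n) :
    (∑ a, ∑ b, gInv F b a x y * hder F i (gF F a b) x y)
      = (∑ k, chern F k k i x y) + (∑ k, chern F k i k x y) := by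
  have hswap : ∀ (j a b : Fin n), hder F j (gF F a b) x y = hder F j (gF F b a) x y :=
    fun j a b => hder_congr hF hx hy j (fun u hu v hv => gF_symm hF hu hv a b)
  have hL : (∑ a, ∑ b, gInv F b a x y * hder F i (gF F a b) x y)
      = ∑ k, ∑ h, gInv F k h x y * hder F i (gF F h k) x y := by
    refine Finset.sum_congr rfl fun a _ => Finset.sum_congr rfl fun b _ => ?_
    rw [gInv_symm hF hx hy b a, hswap i a b]
  have hs3 : (∑ k, ∑ h, gInv F k h x y * hder F h (gF F k i) x y)
      = ∑ k, ∑ h, gInv F k h x y * hder F k (gF F h i) x y := by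
    rw [Finset.sum_comm]
    refine Finset.sum_congr rfl fun a _ => Finset.sum_congr rfl fun b _ => ?_
    rw [gInv_symm hF hx hy b a]
  have hs3' : (∑ k, ∑ h, gInv F k h x y * hder F h (gF F i k) x y)
      = ∑ k, ∑ h, gInv F k h x y * hder F k (gF F h i) x y := by
    rw [Finset.sum_comm]
    refine Finset.sum_congr rfl fun a _ => Finset.sum_congr rfl fun b _ => ?_
    rw [gInv_symm hF hx hy b a, hswap a i b]
  have per1 : ∀ k : Fin n, chern F k k i x y
      = (1/2) * ((∑ h, gInv F k h x y * hder F i (gF F h k) x y)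
          + (∑ h, gInv F k h x y * hder F k (gF F h i) x y)
          - (∑ h, gInv F k h x y * hder F h (gF F k i) x y)) := by
    intro k
    show (1/2) * ∑ h, gInv F k h x y *
        (hder F i (gF F h k) x y + hder F k (gF F h i) x y - hder F h (gF F k i) x y) = _
    rw [← Finset.sum_add_distrib, ← Finset.sum_sub_distrib]
    congr 1
    exact Finset.sum_congr rfl fun h _ => by ring
  have per2 : ∀ k : Fin n, chern F k i k x y
      = (1/2) * ((∑ h, gInv F k h x y * hder F k (gF F h i) x y)
          + (∑ h, gInv F k h x y * hder F i (gF F h k) x y)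
          - (∑ h, gInv F k h x y * hder F h (gF F i k) x y)) := by
    intro k
    show (1/2) * ∑ h, gInv F k h x y *
        (hder F k (gF F h i) x y + hder F i (gF F h k) x y - hder F h (gF F i k) x y) = _
    rw [← Finset.sum_add_distrib, ← Finset.sum_sub_distrib]
    congr 1
    exact Finset.sum_congr rfl fun h _ => by ring
  have c1 : ∑ k, chern F k k i x y
      = (1/2) * ((∑ k, ∑ h, gInv F k h x y * hder F i (gF F h k) x y)
          + (∑ k, ∑ h, gInv F k h x y * hder F k (gF F h i) x y)
          - (∑ k, ∑ h, gInv F k h x y * hder F h (gF F k i) x y)) := by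
    rw [Finset.sum_congr rfl fun k _ => per1 k, ← Finset.mul_sum]
    congr 1
    rw [← Finset.sum_add_distrib, ← Finset.sum_sub_distrib]
  have c2 : ∑ k, chern F k i k x y
      = (1/2) * ((∑ k, ∑ h, gInv F k h x y * hder F k (gF F h i) x y)
          + (∑ k, ∑ h, gInv F k h x y * hder F i (gF F h k) x y)
          - (∑ k, ∑ h, gInv F k h x y * hder F h (gF F i k) x y)) := by
    rw [Finset.sum_congr rfl fun k _ => per2 k, ← Finset.mul_sum]
    congr 1
    rw [← Finset.sum_add_distrib, ← Finset.sum_sub_distrib]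
  rw [hL, c1, c2, hs3, hs3']
  ring

end FinslerAux

open FinslerAux

/-- divergence formula. For any horizontal vector field `X = X^i δ_i`
on `U × (ℝⁿ∖{0})`,
`(1/det g) δ_i( X^i det g ) − G^j_{ij} X^i = δ_i X^i + Γ^i_{ik} X^k − P_i X^i`. -/
theorem divergence_formula {n : ℕ} (hn : 1 ≤ n) (U : Set (Fin n → ℝ))
    (F : (Fin n → ℝ) → (Fin n → ℝ) → ℝ) (hF : IsFinsler U F)
    (X : (Fin n → ℝ) → (Fin n → ℝ) → Fin n → ℝ)
    (hX : ∀ i, ContDiffOn ℝ (⊤ : ℕ∞)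
      (fun p : (Fin n → ℝ) × (Fin n → ℝ) => X p.1 p.2 i) (U ×ˢ {y | y ≠ 0})) :
    ∀ x ∈ U, ∀ y : Fin n → ℝ, y ≠ 0 →
      (1 / (gMat F x y).det) *
          (∑ i, hder F i (fun u v => X u v i * (gMat F u v).det) x y)
        - ∑ i, (∑ j, sprayH F j i j x y) * X x y i
      = ∑ i, hder F i (fun u v => X u v i) x y
        + ∑ i, ∑ k, chern F i i k x y * X x y k
        - ∑ i, pOne F i x y * X x y i := by
  intro x hx y hy
  have hD : (gMat F x y).det ≠ 0 := (det_pos hF hx hy).ne'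
  have hprod : ∀ i : Fin n, hder F i (fun u v => X u v i * (gMat F u v).det) x y
      = hder F i (fun u v => X u v i) x y * (gMat F x y).det
        + X x y i * hder F i (fun u v => (gMat F u v).det) x y := by
    intro i
    exact hder_mul (f := fun u v => X u v i) (g := fun u v => (gMat F u v).det) i
      (cda_slice1 ((hX i).contDiffAt (omega_nhds hF hx hy)))
      (cda_slice2 ((hX i).contDiffAt (omega_nhds hF hx hy)))
      (det_diff1 hF hx hy) (det_diff2 hF hx hy)
  have key : ∀ i : Fin n, hder F i (fun u v => X u v i * (gMat F u v).det) x y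
      = (hder F i (fun u v => X u v i) x y
          + X x y i * ((∑ k, chern F k k i x y) + (∑ k, chern F k i k x y)))
        * (gMat F x y).det := by
    intro i
    rw [hprod i, hJ hF hx hy i, hT hF hx hy i]
    ring
  have key2 : ∑ i, hder F i (fun u v => X u v i * (gMat F u v).det) x y
      = ((∑ i, hder F i (fun u v => X u v i) x y)
          + ∑ i, X x y i * ((∑ k, chern F k k i x y) + (∑ k, chern F k i k x y)))
        * (gMat F x y).det := by
    rw [← Finset.sum_add_distrib, Finset.sum_mul]
    exact Finset.sum_congr rfl fun i _ => key i
  rw [key2]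
  have hdiv : (1 / (gMat F x y).det) * (((∑ i, hder F i (fun u v => X u v i) x y)
        + ∑ i, X x y i * ((∑ k, chern F k k i x y) + (∑ k, chern F k i k x y)))
          * (gMat F x y).det)
      = (∑ i, hder F i (fun u v => X u v i) x y)
        + ∑ i, X x y i * ((∑ k, chern F k k i x y) + (∑ k, chern F k i k x y)) := by
    field_simp
  rw [hdiv]
  have e1 : ∑ i, pOne F i x y * X x y i
      = (∑ i, (∑ j, sprayH F j i j x y) * X x y i)
        - ∑ i, (∑ j, chern F j i j x y) * X x y i := by
    rw [← Finset.sum_sub_distrib]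
    refine Finset.sum_congr rfl fun i _ => ?_
    show (∑ j, (sprayH F j i j x y - chern F j i j x y)) * X x y i = _
    rw [Finset.sum_sub_distrib, sub_mul]
  have e2 : ∑ i, ∑ k, chern F i i k x y * X x y k
      = ∑ i, (∑ k, chern F k k i x y) * X x y i := by
    rw [Finset.sum_comm]
    exact Finset.sum_congr rfl fun i _ => by rw [Finset.sum_mul]
  have e3 : ∑ i, X x y i * ((∑ k, chern F k k i x y) + (∑ k, chern F k i k x y))
      = (∑ i, (∑ k, chern F k k i x y) * X x y i)
        + ∑ i, (∑ k, chern F k i k x y) * X x y i := by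
    rw [← Finset.sum_add_distrib]
    exact Finset.sum_congr rfl fun i _ => by ring
  rw [e1, e2, e3]
  ring
end
end

section
/- Let F be a Finsler structure on U ⊆ ℝⁿ, g̃ a Riemannian metric on an open set Ũ ⊆ ℝ^ñ, φ : U → Ũ smooth, and τ = (τ^α(x,y)) a smooth ℝ^ñ-valued function on U × (ℝⁿ∖{0}). Then, with f := ⟨τ,τ⟩, the Weitzenböck-type identity (1/2) g^{ij}( δ_i δ_j f − Γ^k_{ij} δ_k f − P_i δ_j f ) = −⟨Δτ, τ⟩ + g^{ij} ⟨D_iτ, D_jτ⟩ holds on U × (ℝⁿ∖{0}). -/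
noncomputable section

open scoped BigOperators

/-- The pullback covariant derivative
`D_i σ^α := δ_i σ^α + γ̃^α_{βγ}(φ(x)) φ^β_{,i} σ^γ` of a section
`σ = (σ^α(x,y))` of `φ⁻¹HT M̃`. -/
def pullDer {n m : ℕ} (F : (Fin n → ℝ) → (Fin n → ℝ) → ℝ)
    (gt : (Fin m → ℝ) → Matrix (Fin m) (Fin m) ℝ)
    (φ : (Fin n → ℝ) → Fin m → ℝ) (i : Fin n)
    (σ : (Fin n → ℝ) → (Fin n → ℝ) → Fin m → ℝ)
    (x y : Fin n → ℝ) (α : Fin m) : ℝ :=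
  hder F i (fun u v => σ u v α) x y
    + ∑ β, ∑ γ, christ gt α β γ (φ x) * pd (fun x' => φ x' β) i x * σ x y γ

/-- The fiberwise inner product `⟨σ,ρ⟩ := g̃_{αβ}(φ(x)) σ^α ρ^β`. -/
def fInner {n m : ℕ} (gt : (Fin m → ℝ) → Matrix (Fin m) (Fin m) ℝ)
    (φ : (Fin n → ℝ) → Fin m → ℝ)
    (σ ρ : (Fin n → ℝ) → (Fin n → ℝ) → Fin m → ℝ) (x y : Fin n → ℝ) : ℝ :=
  ∑ α, ∑ β, gt (φ x) α β * σ x y α * ρ x y β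

/-- The rough Laplacian
`(Δσ)^α := g^{ij}( −D_iD_jσ^α + Γ^k_{ij} D_kσ^α + P_i D_jσ^α )`. -/
def roughLap {n m : ℕ} (F : (Fin n → ℝ) → (Fin n → ℝ) → ℝ)
    (gt : (Fin m → ℝ) → Matrix (Fin m) (Fin m) ℝ)
    (φ : (Fin n → ℝ) → Fin m → ℝ)
    (σ : (Fin n → ℝ) → (Fin n → ℝ) → Fin m → ℝ)
    (x y : Fin n → ℝ) (α : Fin m) : ℝ :=
  ∑ i, ∑ j, gInv F i j x y *
    (-pullDer F gt φ i (fun u v β => pullDer F gt φ j σ u v β) x y α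
      + ∑ k, chern F k i j x y * pullDer F gt φ k σ x y α
      + pOne F i x y * pullDer F gt φ j σ x y α)

open scoped ContDiff

section CalcLemmas

variable {k l m' : ℕ}

lemma one_le_inf : (1 : WithTop ℕ∞) ≤ ∞ := by exact_mod_cast (le_top : (1:ℕ∞) ≤ ⊤)

lemma inf_add_one : (∞ : WithTop ℕ∞) + 1 ≤ ∞ := by
  norm_num

lemma ContDiffAt.sliceL {E : Type*} [NormedAddCommGroup E] [NormedSpace ℝ E]
    {f : ((Fin k → ℝ) × (Fin l → ℝ)) → E} {p : (Fin k → ℝ) × (Fin l → ℝ)} {N : WithTop ℕ∞}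
    (hf : ContDiffAt ℝ N f p) : ContDiffAt ℝ N (fun u => f (u, p.2)) p.1 :=
  hf.comp p.1 (contDiffAt_id.prodMk contDiffAt_const)

lemma ContDiffAt.sliceR {E : Type*} [NormedAddCommGroup E] [NormedSpace ℝ E]
    {f : ((Fin k → ℝ) × (Fin l → ℝ)) → E} {p : (Fin k → ℝ) × (Fin l → ℝ)} {N : WithTop ℕ∞}
    (hf : ContDiffAt ℝ N f p) : ContDiffAt ℝ N (fun v => f (p.1, v)) p.2 :=
  hf.comp p.2 (contDiffAt_const.prodMk contDiffAt_id)

lemma pd_fst {f : ((Fin k → ℝ) × (Fin l → ℝ)) → ℝ} {p : (Fin k → ℝ) × (Fin l → ℝ)}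
    (hf : DifferentiableAt ℝ f p) (i : Fin k) :
    pd (fun u => f (u, p.2)) i p.1 = fderiv ℝ f p (Pi.single i 1, 0) := by
  have h : HasFDerivAt (fun u => f (u, p.2))
      ((fderiv ℝ f p).comp (ContinuousLinearMap.inl ℝ _ _)) p.1 :=
    (hf.hasFDerivAt).comp p.1 (hasFDerivAt_prodMk_left p.1 p.2)
  rw [pd, h.fderiv]; rfl

lemma pd_snd {f : ((Fin k → ℝ) × (Fin l → ℝ)) → ℝ} {p : (Fin k → ℝ) × (Fin l → ℝ)}
    (hf : DifferentiableAt ℝ f p) (j : Fin l) :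
    pd (fun v => f (p.1, v)) j p.2 = fderiv ℝ f p (0, Pi.single j 1) := by
  have h : HasFDerivAt (fun v => f (p.1, v))
      ((fderiv ℝ f p).comp (ContinuousLinearMap.inr ℝ _ _)) p.2 :=
    (hf.hasFDerivAt).comp p.2 (hasFDerivAt_prodMk_right p.1 p.2)
  rw [pd, h.fderiv]; rfl

lemma contDiffOn_pd_fst {f : ((Fin k → ℝ) × (Fin l → ℝ)) → ℝ}
    {Ω : Set ((Fin k → ℝ) × (Fin l → ℝ))} (hΩ : IsOpen Ω)
    (hf : ContDiffOn ℝ ∞ f Ω) (i : Fin k) :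
    ContDiffOn ℝ ∞ (fun q => pd (fun u => f (u, q.2)) i q.1) Ω := by
  have hfd : ContDiffOn ℝ ∞ (fderiv ℝ f) Ω := hf.fderiv_of_isOpen hΩ inf_add_one
  exact (hfd.clm_apply contDiffOn_const).congr (fun q hq =>
    pd_fst (((hf q hq).contDiffAt (hΩ.mem_nhds hq)).differentiableAt (by simp)) i)

lemma contDiffOn_pd_snd {f : ((Fin k → ℝ) × (Fin l → ℝ)) → ℝ}
    {Ω : Set ((Fin k → ℝ) × (Fin l → ℝ))} (hΩ : IsOpen Ω)
    (hf : ContDiffOn ℝ ∞ f Ω) (j : Fin l) :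
    ContDiffOn ℝ ∞ (fun q => pd (fun v => f (q.1, v)) j q.2) Ω := by
  have hfd : ContDiffOn ℝ ∞ (fderiv ℝ f) Ω := hf.fderiv_of_isOpen hΩ inf_add_one
  exact (hfd.clm_apply contDiffOn_const).congr (fun q hq =>
    pd_snd (((hf q hq).contDiffAt (hΩ.mem_nhds hq)).differentiableAt (by simp)) j)

lemma pd_add {c d : (Fin k → ℝ) → ℝ} {x : Fin k → ℝ}
    (hc : DifferentiableAt ℝ c x) (hd : DifferentiableAt ℝ d x) (i : Fin k) :
    pd (fun u => c u + d u) i x = pd c i x + pd d i x := by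
  unfold pd; rw [fderiv_fun_add hc hd]; rfl

lemma pd_mul {c d : (Fin k → ℝ) → ℝ} {x : Fin k → ℝ}
    (hc : DifferentiableAt ℝ c x) (hd : DifferentiableAt ℝ d x) (i : Fin k) :
    pd (fun u => c u * d u) i x = pd c i x * d x + c x * pd d i x := by
  unfold pd; rw [fderiv_fun_mul hc hd]
  simp only [ContinuousLinearMap.add_apply, ContinuousLinearMap.smul_apply, smul_eq_mul]
  ring

lemma pd_const_mul {d : (Fin k → ℝ) → ℝ} {x : Fin k → ℝ}
    (hd : DifferentiableAt ℝ d x) (b : ℝ) (i : Fin k) :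
    pd (fun u => b * d u) i x = b * pd d i x := by
  unfold pd; rw [fderiv_const_mul hd b]; rfl

lemma pd_sum {ι : Type*} {s : Finset ι} {A : ι → (Fin k → ℝ) → ℝ} {x : Fin k → ℝ}
    (h : ∀ j ∈ s, DifferentiableAt ℝ (A j) x) (i : Fin k) :
    pd (fun u => ∑ j ∈ s, A j u) i x = ∑ j ∈ s, pd (A j) i x := by
  unfold pd; rw [fderiv_fun_sum h]; rw [ContinuousLinearMap.sum_apply]

lemma pd_comp {g : (Fin m' → ℝ) → ℝ} {φ : (Fin k → ℝ) → (Fin m' → ℝ)} {x : Fin k → ℝ}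
    (hg : DifferentiableAt ℝ g (φ x)) (hφ : DifferentiableAt ℝ φ x) (i : Fin k) :
    pd (fun u => g (φ u)) i x = ∑ k', pd g k' (φ x) * pd (fun u => φ u k') i x := by
  have hcomp : fderiv ℝ (g ∘ φ) x = (fderiv ℝ g (φ x)).comp (fderiv ℝ φ x) :=
    fderiv_comp x hg hφ
  have hproj : ∀ k' : Fin m', pd (fun u => φ u k') i x = fderiv ℝ φ x (Pi.single i 1) k' := by
    intro k'
    have h : HasFDerivAt (fun u => φ u k')
        ((ContinuousLinearMap.proj k' : (Fin m' → ℝ) →L[ℝ] ℝ).comp (fderiv ℝ φ x)) x := by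
      exact (ContinuousLinearMap.proj k' :
        (Fin m' → ℝ) →L[ℝ] ℝ).hasFDerivAt.comp x hφ.hasFDerivAt
    rw [pd, h.fderiv]; rfl
  have : pd (fun u => g (φ u)) i x = fderiv ℝ g (φ x) (fderiv ℝ φ x (Pi.single i 1)) := by
    rw [pd, show (fun u => g (φ u)) = g ∘ φ from rfl, hcomp]; rfl
  rw [this]
  set v := fderiv ℝ φ x (Pi.single i 1) with hv
  have hvdecomp : v = ∑ k', (v k') • (Pi.single k' 1 : Fin m' → ℝ) := by
    funext j
    simp [Pi.single_apply, Finset.sum_ite_eq']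
  calc fderiv ℝ g (φ x) v = ∑ k', (v k') * fderiv ℝ g (φ x) (Pi.single k' 1) := by
        conv_lhs => rw [hvdecomp]
        rw [map_sum]
        exact Finset.sum_congr rfl (fun k' _ => by rw [map_smul]; rfl
        )
    _ = ∑ k', pd g k' (φ x) * pd (fun u => φ u k') i x := by
        refine Finset.sum_congr rfl (fun k' _ => ?_)
        rw [hproj k', pd]; ring

end CalcLemmas

section MatrixSmooth

variable {E : Type*} [NormedAddCommGroup E] [NormedSpace ℝ E] {t : Set E} {r : ℕ}

lemma ContDiffOn.finsetProd {ι : Type*} {s : Finset ι} {f : ι → E → ℝ}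
    (h : ∀ i ∈ s, ContDiffOn ℝ ∞ (f i) t) :
    ContDiffOn ℝ ∞ (fun x => ∏ i ∈ s, f i x) t := by
  classical
  induction s using Finset.induction_on with
  | empty => simpa using contDiffOn_const
  | insert a s' hnot ih =>
    simp only [Finset.prod_insert hnot]
    exact (h a (Finset.mem_insert_self a s')).mul
      (ih (fun i hi => h i (Finset.mem_insert_of_mem hi)))

lemma contDiffOn_det {M : E → Matrix (Fin r) (Fin r) ℝ}
    (h : ∀ i j, ContDiffOn ℝ ∞ (fun e => M e i j) t) :
    ContDiffOn ℝ ∞ (fun e => (M e).det) t := by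
  have : (fun e => (M e).det)
      = fun e => ∑ σ : Equiv.Perm (Fin r),
          ((Equiv.Perm.sign σ : ℤ) : ℝ) * ∏ i, M e (σ i) i := by
    funext e; rw [Matrix.det_apply']
  rw [this]
  exact ContDiffOn.sum fun σ _ =>
    contDiffOn_const.mul (ContDiffOn.finsetProd fun i _ => h (σ i) i)

lemma contDiffOn_adjugate {M : E → Matrix (Fin r) (Fin r) ℝ}
    (h : ∀ i j, ContDiffOn ℝ ∞ (fun e => M e i j) t) (i j : Fin r) :
    ContDiffOn ℝ ∞ (fun e => (M e).adjugate i j) t := by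
  have : (fun e => (M e).adjugate i j)
      = fun e => ((M e).updateRow j (Pi.single i 1)).det := by
    funext e; rw [Matrix.adjugate_apply]
  rw [this]
  refine contDiffOn_det (fun a b => ?_)
  by_cases hab : a = j
  · subst hab
    simpa [Matrix.updateRow_apply] using (contDiffOn_const :
      ContDiffOn ℝ ∞ (fun _ : E => (Pi.single i 1 : Fin r → ℝ) b) t)
  · simpa [Matrix.updateRow_apply, hab] using h a b

lemma contDiffOn_inv_entry {M : E → Matrix (Fin r) (Fin r) ℝ}
    (h : ∀ i j, ContDiffOn ℝ ∞ (fun e => M e i j) t)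
    (hdet : ∀ e ∈ t, (M e).det ≠ 0) (i j : Fin r) :
    ContDiffOn ℝ ∞ (fun e => (M e)⁻¹ i j) t := by
  have : (fun e => (M e)⁻¹ i j)
      = fun e => ((M e).det)⁻¹ * (M e).adjugate i j := by
    funext e
    rw [Matrix.inv_def, Ring.inverse_eq_inv, Matrix.smul_apply, smul_eq_mul]
  rw [this]
  exact ((contDiffOn_det h).inv hdet).mul (contDiffOn_adjugate h i j)

lemma contDiffOn_pd {g : (Fin r → ℝ) → ℝ} {t : Set (Fin r → ℝ)} (ht : IsOpen t)
    (hg : ContDiffOn ℝ ∞ g t) (k : Fin r) :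
    ContDiffOn ℝ ∞ (fun x => pd g k x) t :=
  (hg.fderiv_of_isOpen ht (by norm_num)).clm_apply contDiffOn_const

end MatrixSmooth

section FinslerSmooth

variable {n : ℕ} {U : Set (Fin n → ℝ)} {F : (Fin n → ℝ) → (Fin n → ℝ) → ℝ}

lemma IsFinsler.omega_open (hF : IsFinsler U F) :
    IsOpen (U ×ˢ {y : Fin n → ℝ | y ≠ 0}) :=
  hF.isOpen.prod isOpen_ne

lemma IsFinsler.fsq_cd (hF : IsFinsler U F) :
    ContDiffOn ℝ ∞ (fun q : (Fin n → ℝ) × (Fin n → ℝ) => (F q.1 q.2) ^ 2)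
      (U ×ˢ {y : Fin n → ℝ | y ≠ 0}) :=
  (hF.smooth.of_le (by simp)).pow 2

lemma IsFinsler.gF_cd (hF : IsFinsler U F) (i j : Fin n) :
    ContDiffOn ℝ ∞ (fun q : (Fin n → ℝ) × (Fin n → ℝ) => gF F i j q.1 q.2)
      (U ×ˢ {y : Fin n → ℝ | y ≠ 0}) := by
  exact contDiffOn_const.mul
    (contDiffOn_pd_snd hF.omega_open (contDiffOn_pd_snd hF.omega_open hF.fsq_cd j) i)

lemma IsFinsler.gInv_cd (hF : IsFinsler U F) (i j : Fin n) :
    ContDiffOn ℝ ∞ (fun q : (Fin n → ℝ) × (Fin n → ℝ) => gInv F i j q.1 q.2)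
      (U ×ˢ {y : Fin n → ℝ | y ≠ 0}) := by
  refine contDiffOn_inv_entry (M := fun q : (Fin n → ℝ) × (Fin n → ℝ) => gMat F q.1 q.2)
    (fun a b => hF.gF_cd a b) (fun q hq => ?_) i j
  simp only [Set.mem_prod, Set.mem_setOf_eq] at hq
  exact (hF.posdef q.1 hq.1 q.2 hq.2).det_pos.ne'

lemma IsFinsler.spray_cd (hF : IsFinsler U F) (i : Fin n) :
    ContDiffOn ℝ ∞ (fun q : (Fin n → ℝ) × (Fin n → ℝ) => spray F i q.1 q.2)
      (U ×ˢ {y : Fin n → ℝ | y ≠ 0}) := by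
  refine contDiffOn_const.mul (ContDiffOn.sum fun h _ => (hF.gInv_cd i h).mul (ContDiffOn.sub ?_ ?_))
  · refine ContDiffOn.sum fun k _ => ContDiffOn.mul ?_ ?_
    · exact contDiffOn_pd_fst hF.omega_open (contDiffOn_pd_snd hF.omega_open hF.fsq_cd h) k
    · exact ((ContinuousLinearMap.proj k : ((Fin n → ℝ)) →L[ℝ] ℝ).contDiff.comp
        contDiff_snd).contDiffOn
  · exact contDiffOn_pd_fst hF.omega_open hF.fsq_cd h

lemma IsFinsler.nCart_cd (hF : IsFinsler U F) (i j : Fin n) :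
    ContDiffOn ℝ ∞ (fun q : (Fin n → ℝ) × (Fin n → ℝ) => nCart F i j q.1 q.2)
      (U ×ˢ {y : Fin n → ℝ | y ≠ 0}) := by
  exact contDiffOn_pd_snd hF.omega_open (hF.spray_cd i) j

lemma IsFinsler.hder_cd (hF : IsFinsler U F) (i : Fin n)
    {h : (Fin n → ℝ) → (Fin n → ℝ) → ℝ}
    (hh : ContDiffOn ℝ ∞ (fun q : (Fin n → ℝ) × (Fin n → ℝ) => h q.1 q.2)
      (U ×ˢ {y : Fin n → ℝ | y ≠ 0})) :
    ContDiffOn ℝ ∞ (fun q : (Fin n → ℝ) × (Fin n → ℝ) => hder F i h q.1 q.2)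
      (U ×ˢ {y : Fin n → ℝ | y ≠ 0}) := by
  exact (contDiffOn_pd_fst hF.omega_open hh i).sub
    (ContDiffOn.sum fun j _ => (hF.nCart_cd j i).mul (contDiffOn_pd_snd hF.omega_open hh j))

end FinslerSmooth

section RiemannSmooth

variable {m : ℕ} {Ut : Set (Fin m → ℝ)} {gt : (Fin m → ℝ) → Matrix (Fin m) (Fin m) ℝ}

lemma IsRiemann.gt_cd (hg : IsRiemann Ut gt) (i j : Fin m) :
    ContDiffOn ℝ ∞ (fun x => gt x i j) Ut := (hg.smooth i j).of_le (by simp)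

lemma IsRiemann.christ_cd (hg : IsRiemann Ut gt) (i j k : Fin m) :
    ContDiffOn ℝ ∞ (fun x => christ gt i j k x) Ut := by
  refine contDiffOn_const.mul (ContDiffOn.sum fun h _ => ContDiffOn.mul ?_ ?_)
  · exact contDiffOn_inv_entry (fun a b => hg.gt_cd a b)
      (fun x hx => (hg.posdef x hx).det_pos.ne') i h
  · exact ((contDiffOn_pd hg.isOpen (hg.gt_cd h j) k).add
      (contDiffOn_pd hg.isOpen (hg.gt_cd h k) j)).sub
      (contDiffOn_pd hg.isOpen (hg.gt_cd j k) h)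

end RiemannSmooth

section PullSmooth

variable {n m : ℕ} {U : Set (Fin n → ℝ)} {F : (Fin n → ℝ) → (Fin n → ℝ) → ℝ}
  {Ut : Set (Fin m → ℝ)} {gt : (Fin m → ℝ) → Matrix (Fin m) (Fin m) ℝ}
  {φ : (Fin n → ℝ) → Fin m → ℝ}

lemma pullDer_cd (hF : IsFinsler U F) (hg : IsRiemann Ut gt)
    (hφ : ∀ α, ContDiffOn ℝ (⊤ : ℕ∞) (fun x => φ x α) U) (hmap : ∀ x ∈ U, φ x ∈ Ut)
    {σ : (Fin n → ℝ) → (Fin n → ℝ) → Fin m → ℝ}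
    (hσ : ∀ γ, ContDiffOn ℝ ∞ (fun q : (Fin n → ℝ) × (Fin n → ℝ) => σ q.1 q.2 γ)
      (U ×ˢ {y : Fin n → ℝ | y ≠ 0}))
    (i : Fin n) (α : Fin m) :
    ContDiffOn ℝ ∞ (fun q : (Fin n → ℝ) × (Fin n → ℝ) => pullDer F gt φ i σ q.1 q.2 α)
      (U ×ˢ {y : Fin n → ℝ | y ≠ 0}) := by
  refine (hF.hder_cd i (hσ α)).add
    (ContDiffOn.sum fun β _ => ContDiffOn.sum fun γ _ => (ContDiffOn.mul ?_ ?_).mul (hσ γ))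
  · exact (hg.christ_cd α β γ).comp
      ((contDiffOn_pi.mpr fun b => ((hφ b).of_le (by simp)).comp contDiffOn_fst
        (fun q hq => hq.1)))
      (fun q hq => hmap q.1 hq.1)
  · exact (contDiffOn_pd hF.isOpen ((hφ β).of_le (by simp)) i).comp contDiffOn_fst
      (fun q hq => hq.1)

lemma sliceL_diff {h : ((Fin n → ℝ) × (Fin n → ℝ)) → ℝ}
    {Ω : Set ((Fin n → ℝ) × (Fin n → ℝ))} (hΩ : IsOpen Ω)
    (hh : ContDiffOn ℝ ∞ h Ω) {p : (Fin n → ℝ) × (Fin n → ℝ)} (hp : p ∈ Ω) :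
    DifferentiableAt ℝ (fun u => h (u, p.2)) p.1 :=
  (((hh p hp).contDiffAt (hΩ.mem_nhds hp)).sliceL).differentiableAt (by simp)

lemma sliceR_diff {h : ((Fin n → ℝ) × (Fin n → ℝ)) → ℝ}
    {Ω : Set ((Fin n → ℝ) × (Fin n → ℝ))} (hΩ : IsOpen Ω)
    (hh : ContDiffOn ℝ ∞ h Ω) {p : (Fin n → ℝ) × (Fin n → ℝ)} (hp : p ∈ Ω) :
    DifferentiableAt ℝ (fun v => h (p.1, v)) p.2 :=
  (((hh p hp).contDiffAt (hΩ.mem_nhds hp)).sliceR).differentiableAt (by simp)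

end PullSmooth

section MetricCompat

variable {m : ℕ} {Ut : Set (Fin m → ℝ)} {gt : (Fin m → ℝ) → Matrix (Fin m) (Fin m) ℝ}

lemma IsRiemann.pd_symm (hg : IsRiemann Ut gt) {x : Fin m → ℝ} (hx : x ∈ Ut)
    (c d e : Fin m) :
    pd (fun x' => gt x' c d) e x = pd (fun x' => gt x' d c) e x := by
  have hev : (fun x' => gt x' c d) =ᶠ[nhds x] (fun x' => gt x' d c) := by
    filter_upwards [hg.isOpen.mem_nhds hx] with z hz
    exact ((hg.symm z hz).apply d c).symm ▸ rfl
  unfold pd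
  rw [hev.fderiv_eq]

lemma IsRiemann.metric_compat (hg : IsRiemann Ut gt) {x : Fin m → ℝ} (hx : x ∈ Ut)
    (μ a b : Fin m) :
    pd (fun x' => gt x' a b) μ x
      = (∑ γ, gt x γ b * christ gt γ μ a x) + ∑ γ, gt x a γ * christ gt γ μ b x := by
  have hdet : IsUnit (gt x).det := (hg.posdef x hx).det_pos.ne'.isUnit
  have hunit : gt x * (gt x)⁻¹ = 1 := Matrix.mul_nonsing_inv _ hdet
  have hdelta : ∀ c h : Fin m, (∑ γ, gt x c γ * (gt x)⁻¹ γ h) = if c = h then 1 else 0 := by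
    intro c h
    have := congrArg (fun M : Matrix (Fin m) (Fin m) ℝ => M c h) hunit
    simpa [Matrix.mul_apply, Matrix.one_apply] using this
  have key : ∀ c d : Fin m, (∑ γ, gt x c γ * christ gt γ μ d x)
      = (1/2) * (pd (fun x' => gt x' c μ) d x + pd (fun x' => gt x' c d) μ x
          - pd (fun x' => gt x' μ d) c x) := by
    intro c d
    have e1 : ∀ γ : Fin m, gt x c γ * christ gt γ μ d x
        = ∑ h, (gt x c γ * (gt x)⁻¹ γ h) *
            ((1/2) * (pd (fun x' => gt x' h μ) d x + pd (fun x' => gt x' h d) μ x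
              - pd (fun x' => gt x' μ d) h x)) := by
      intro γ
      simp only [christ, Finset.mul_sum]
      exact Finset.sum_congr rfl fun h _ => by ring
    rw [Finset.sum_congr rfl fun γ _ => e1 γ, Finset.sum_comm]
    have e2 : ∀ h : Fin m, (∑ γ, (gt x c γ * (gt x)⁻¹ γ h) *
            ((1/2) * (pd (fun x' => gt x' h μ) d x + pd (fun x' => gt x' h d) μ x
              - pd (fun x' => gt x' μ d) h x)))
        = (if c = h then 1 else 0) *
            ((1/2) * (pd (fun x' => gt x' h μ) d x + pd (fun x' => gt x' h d) μ x
              - pd (fun x' => gt x' μ d) h x)) := by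
      intro h
      rw [← Finset.sum_mul, hdelta c h]
    rw [Finset.sum_congr rfl fun h _ => e2 h]
    simp [Finset.sum_ite_eq]
  have h1 : (∑ γ, gt x γ b * christ gt γ μ a x) = ∑ γ, gt x b γ * christ gt γ μ a x := by
    exact Finset.sum_congr rfl fun γ _ => by rw [(hg.symm x hx).apply b γ]
  rw [h1, key b a, key a b, hg.pd_symm hx b μ a, hg.pd_symm hx b a μ, hg.pd_symm hx μ a b]
  ring

end MetricCompat

section Swaps

variable {A B C D : Type*} [Fintype A] [Fintype B] [Fintype C] [Fintype D]

lemma swap3 (g : B → C → D → ℝ) :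
    ∑ b, ∑ c, ∑ d, g b c d = ∑ d, ∑ b, ∑ c, g b c d := by
  calc ∑ b, ∑ c, ∑ d, g b c d = ∑ b, ∑ d, ∑ c, g b c d :=
        Finset.sum_congr rfl fun b _ => Finset.sum_comm
    _ = ∑ d, ∑ b, ∑ c, g b c d := Finset.sum_comm

lemma swap3_13 (g : B → C → D → ℝ) :
    ∑ b, ∑ c, ∑ d, g b c d = ∑ d, ∑ c, ∑ b, g b c d := by
  rw [swap3]
  exact Finset.sum_congr rfl fun d _ => Finset.sum_comm

lemma swap4_14 (f : A → B → C → D → ℝ) :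
    ∑ a, ∑ b, ∑ c, ∑ d, f a b c d = ∑ d, ∑ b, ∑ c, ∑ a, f a b c d := by
  calc ∑ a, ∑ b, ∑ c, ∑ d, f a b c d
      = ∑ a, ∑ d, ∑ b, ∑ c, f a b c d :=
        Finset.sum_congr rfl fun a _ => swap3 _
    _ = ∑ d, ∑ a, ∑ b, ∑ c, f a b c d := Finset.sum_comm
    _ = ∑ d, ∑ b, ∑ c, ∑ a, f a b c d :=
        Finset.sum_congr rfl fun d _ => (swap3 (fun b c a => f a b c d)).symm

lemma swap4_24 (f : A → B → C → D → ℝ) :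
    ∑ a, ∑ b, ∑ c, ∑ d, f a b c d = ∑ a, ∑ d, ∑ c, ∑ b, f a b c d :=
  Finset.sum_congr rfl fun a _ => swap3_13 _

end Swaps

lemma compat_alg {n m : ℕ} (G : Fin m → Fin m → ℝ) (Γ : Fin m → Fin m → Fin m → ℝ)
    (Φ : Fin m → ℝ) (S R DSx DRx : Fin m → ℝ) (DSy DRy : Fin n → Fin m → ℝ)
    (N : Fin n → ℝ) :
    (∑ a, ∑ b, ((∑ k, ((∑ γ, G γ b * Γ γ k a) + ∑ γ, G a γ * Γ γ k b) * Φ k) * S a * R b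
        + G a b * DSx a * R b + G a b * S a * DRx b))
      - ∑ j, N j * (∑ a, ∑ b, (G a b * DSy j a * R b + G a b * S a * DRy j b))
    = (∑ a, ∑ b, G a b * ((DSx a - ∑ j, N j * DSy j a)
          + ∑ β, ∑ γ, Γ a β γ * Φ β * S γ) * R b)
      + (∑ a, ∑ b, G a b * S a * ((DRx b - ∑ j, N j * DRy j b)
          + ∑ β, ∑ γ, Γ b β γ * Φ β * R γ)) := by
  -- atoms
  set A1 := ∑ a, ∑ b, ∑ k, ∑ γ, G γ b * Γ γ k a * Φ k * S a * R b with hA1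
  set A2 := ∑ a, ∑ b, ∑ k, ∑ γ, G a γ * Γ γ k b * Φ k * S a * R b with hA2
  set A3 := ∑ a, ∑ b, G a b * DSx a * R b with hA3
  set A4 := ∑ a, ∑ b, G a b * S a * DRx b with hA4
  set B1 := ∑ a, ∑ b, G a b * (∑ j, N j * DSy j a) * R b with hB1
  set B2 := ∑ a, ∑ b, G a b * S a * (∑ j, N j * DRy j b) with hB2
  set C1 := ∑ a, ∑ b, G a b * (∑ β, ∑ γ, Γ a β γ * Φ β * S γ) * R b with hC1
  set C2 := ∑ a, ∑ b, G a b * S a * (∑ β, ∑ γ, Γ b β γ * Φ β * R γ) with hC2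
  -- flatten C1 and C2
  have hC1' : C1 = ∑ a, ∑ b, ∑ β, ∑ γ, G a b * Γ a β γ * Φ β * S γ * R b := by
    rw [hC1]
    refine Finset.sum_congr rfl fun a _ => Finset.sum_congr rfl fun b _ => ?_
    rw [Finset.mul_sum, Finset.sum_mul]
    refine Finset.sum_congr rfl fun β _ => ?_
    rw [Finset.mul_sum, Finset.sum_mul]
    exact Finset.sum_congr rfl fun γ _ => by ring
  have hC2' : C2 = ∑ a, ∑ b, ∑ β, ∑ γ, G a b * Γ b β γ * Φ β * S a * R γ := by
    rw [hC2]
    refine Finset.sum_congr rfl fun a _ => Finset.sum_congr rfl fun b _ => ?_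
    rw [Finset.mul_sum]
    refine Finset.sum_congr rfl fun β _ => ?_
    rw [Finset.mul_sum]
    exact Finset.sum_congr rfl fun γ _ => by ring
  -- the two reindexing identities
  have hi : A1 = C1 := by
    rw [hA1, hC1', swap4_14]
  have hii : A2 = C2 := by
    rw [hA2, hC2', swap4_24]
  -- the N-sum identity
  have hiii : (∑ j, N j * (∑ a, ∑ b, (G a b * DSy j a * R b + G a b * S a * DRy j b)))
      = B1 + B2 := by
    have l1 : (∑ j, N j * (∑ a, ∑ b, (G a b * DSy j a * R b + G a b * S a * DRy j b)))
        = ∑ j, ∑ a, ∑ b, (G a b * (N j * DSy j a) * R b + G a b * S a * (N j * DRy j b)) := by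
      refine Finset.sum_congr rfl fun j _ => ?_
      rw [Finset.mul_sum]
      refine Finset.sum_congr rfl fun a _ => ?_
      rw [Finset.mul_sum]
      exact Finset.sum_congr rfl fun b _ => by ring
    rw [l1, (swap3 (fun a b j => G a b * (N j * DSy j a) * R b
        + G a b * S a * (N j * DRy j b))).symm]
    rw [hB1, hB2, ← Finset.sum_add_distrib]
    refine Finset.sum_congr rfl fun a _ => ?_
    rw [← Finset.sum_add_distrib]
    refine Finset.sum_congr rfl fun b _ => ?_
    rw [Finset.sum_add_distrib, Finset.mul_sum, Finset.sum_mul, Finset.mul_sum]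
  -- flatten the first LHS chunk
  have hL : (∑ a, ∑ b, ((∑ k, ((∑ γ, G γ b * Γ γ k a) + ∑ γ, G a γ * Γ γ k b) * Φ k) * S a * R b
        + G a b * DSx a * R b + G a b * S a * DRx b))
      = A1 + A2 + A3 + A4 := by
    have hab : ∀ a b : Fin m,
        (∑ k, ((∑ γ, G γ b * Γ γ k a) + ∑ γ, G a γ * Γ γ k b) * Φ k) * S a * R b
        = (∑ k, ∑ γ, G γ b * Γ γ k a * Φ k * S a * R b)
          + ∑ k, ∑ γ, G a γ * Γ γ k b * Φ k * S a * R b := by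
      intro a b
      have e1 : (∑ k, ((∑ γ, G γ b * Γ γ k a) + ∑ γ, G a γ * Γ γ k b) * Φ k)
          = (∑ k, ∑ γ, G γ b * Γ γ k a * Φ k) + ∑ k, ∑ γ, G a γ * Γ γ k b * Φ k := by
        rw [← Finset.sum_add_distrib]
        refine Finset.sum_congr rfl fun k _ => ?_
        rw [add_mul, Finset.sum_mul, Finset.sum_mul]
      rw [e1, add_mul, add_mul]
      congr 1
      · rw [Finset.sum_mul, Finset.sum_mul]
        refine Finset.sum_congr rfl fun k _ => ?_
        rw [Finset.sum_mul, Finset.sum_mul]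
      · rw [Finset.sum_mul, Finset.sum_mul]
        refine Finset.sum_congr rfl fun k _ => ?_
        rw [Finset.sum_mul, Finset.sum_mul]
    calc (∑ a, ∑ b, ((∑ k, ((∑ γ, G γ b * Γ γ k a) + ∑ γ, G a γ * Γ γ k b) * Φ k) * S a * R b
        + G a b * DSx a * R b + G a b * S a * DRx b))
        = ∑ a, ∑ b, (((∑ k, ∑ γ, G γ b * Γ γ k a * Φ k * S a * R b)
            + ∑ k, ∑ γ, G a γ * Γ γ k b * Φ k * S a * R b)
          + G a b * DSx a * R b + G a b * S a * DRx b) := by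
          exact Finset.sum_congr rfl fun a _ => Finset.sum_congr rfl fun b _ => by rw [hab a b]
      _ = A1 + A2 + A3 + A4 := by
          rw [hA1, hA2, hA3, hA4]
          simp only [← Finset.sum_add_distrib]
  -- flatten the RHS
  have hR1 : (∑ a, ∑ b, G a b * ((DSx a - ∑ j, N j * DSy j a)
          + ∑ β, ∑ γ, Γ a β γ * Φ β * S γ) * R b)
      = A3 - B1 + C1 := by
    rw [hA3, hB1, hC1]
    conv_rhs => rw [← Finset.sum_sub_distrib, ← Finset.sum_add_distrib]
    refine Finset.sum_congr rfl fun a _ => ?_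
    conv_rhs => rw [← Finset.sum_sub_distrib, ← Finset.sum_add_distrib]
    exact Finset.sum_congr rfl fun b _ => by ring
  have hR2 : (∑ a, ∑ b, G a b * S a * ((DRx b - ∑ j, N j * DRy j b)
          + ∑ β, ∑ γ, Γ b β γ * Φ β * R γ))
      = A4 - B2 + C2 := by
    rw [hA4, hB2, hC2]
    conv_rhs => rw [← Finset.sum_sub_distrib, ← Finset.sum_add_distrib]
    refine Finset.sum_congr rfl fun a _ => ?_
    conv_rhs => rw [← Finset.sum_sub_distrib, ← Finset.sum_add_distrib]
    exact Finset.sum_congr rfl fun b _ => by ring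
  rw [hL, hiii, hR1, hR2, ← hi, ← hii]
  ring

section CompatHder

variable {n m : ℕ} {Ut : Set (Fin m → ℝ)} {gt : (Fin m → ℝ) → Matrix (Fin m) (Fin m) ℝ}
  {F : (Fin n → ℝ) → (Fin n → ℝ) → ℝ} {φ : (Fin n → ℝ) → Fin m → ℝ}

lemma compat_hder (hg : IsRiemann Ut gt)
    {x y : Fin n → ℝ} (hxt : φ x ∈ Ut) (hφd : DifferentiableAt ℝ φ x)
    {σ ρ : (Fin n → ℝ) → (Fin n → ℝ) → Fin m → ℝ}
    (hσx : ∀ a, DifferentiableAt ℝ (fun u => σ u y a) x)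
    (hσy : ∀ a, DifferentiableAt ℝ (fun v => σ x v a) y)
    (hρx : ∀ a, DifferentiableAt ℝ (fun u => ρ u y a) x)
    (hρy : ∀ a, DifferentiableAt ℝ (fun v => ρ x v a) y)
    (i : Fin n) :
    hder F i (fun u v => fInner gt φ σ ρ u v) x y
      = (∑ a, ∑ b, gt (φ x) a b * pullDer F gt φ i σ x y a * ρ x y b)
        + ∑ a, ∑ b, gt (φ x) a b * σ x y a * pullDer F gt φ i ρ x y b := by
  have hgt : ∀ a b, DifferentiableAt ℝ (fun x' => gt x' a b) (φ x) := fun a b =>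
    (((hg.gt_cd a b) (φ x) hxt).contDiffAt (hg.isOpen.mem_nhds hxt)).differentiableAt (by simp)
  have hgφ : ∀ a b, DifferentiableAt ℝ (fun u => gt (φ u) a b) x := fun a b =>
    (hgt a b).comp x hφd
  have hpdx : pd (fun x' => fInner gt φ σ ρ x' y) i x
      = ∑ a, ∑ b, (pd (fun u => gt (φ u) a b) i x * σ x y a * ρ x y b
          + gt (φ x) a b * pd (fun u => σ u y a) i x * ρ x y b
          + gt (φ x) a b * σ x y a * pd (fun u => ρ u y b) i x) := by
    simp only [fInner]
    rw [pd_sum (A := fun a u => ∑ b, gt (φ u) a b * σ u y a * ρ u y b)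
      (fun a _ => DifferentiableAt.fun_sum fun b _ => ((hgφ a b).mul (hσx a)).mul (hρx b)) i]
    refine Finset.sum_congr rfl fun a _ => ?_
    rw [pd_sum (A := fun b u => gt (φ u) a b * σ u y a * ρ u y b)
      (fun b _ => ((hgφ a b).mul (hσx a)).mul (hρx b)) i]
    refine Finset.sum_congr rfl fun b _ => ?_
    rw [pd_mul ((hgφ a b).fun_mul (hσx a)) (hρx b) i, pd_mul (hgφ a b) (hσx a) i]
    ring
  have hpdy : ∀ j, pd (fun y' => fInner gt φ σ ρ x y') j y
      = ∑ a, ∑ b, (gt (φ x) a b * pd (fun v => σ x v a) j y * ρ x y b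
          + gt (φ x) a b * σ x y a * pd (fun v => ρ x v b) j y) := by
    intro j
    simp only [fInner]
    rw [pd_sum (A := fun a v => ∑ b, gt (φ x) a b * σ x v a * ρ x v b)
      (fun a _ => DifferentiableAt.fun_sum fun b _ =>
        ((differentiableAt_const _).mul (hσy a)).mul (hρy b)) j]
    refine Finset.sum_congr rfl fun a _ => ?_
    rw [pd_sum (A := fun b v => gt (φ x) a b * σ x v a * ρ x v b)
      (fun b _ => ((differentiableAt_const _).mul (hσy a)).mul (hρy b)) j]
    refine Finset.sum_congr rfl fun b _ => ?_
    rw [pd_mul ((differentiableAt_const _).fun_mul (hσy a)) (hρy b) j,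
      pd_const_mul (hσy a) (gt (φ x) a b) j]
  have hchain : ∀ a b : Fin m, pd (fun u => gt (φ u) a b) i x
      = ∑ k, ((∑ γ, gt (φ x) γ b * christ gt γ k a (φ x))
          + ∑ γ, gt (φ x) a γ * christ gt γ k b (φ x)) * pd (fun u => φ u k) i x := by
    intro a b
    rw [pd_comp (hgt a b) hφd i]
    exact Finset.sum_congr rfl fun k _ => by rw [hg.metric_compat hxt k a b]
  simp only [hder, pullDer]
  rw [hpdx]
  simp only [hpdy, hchain]
  exact compat_alg (fun a b => gt (φ x) a b)
    (fun c k e => christ gt c k e (φ x))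
    (fun k => pd (fun u => φ u k) i x)
    (fun a => σ x y a) (fun b => ρ x y b)
    (fun a => pd (fun u => σ u y a) i x) (fun b => pd (fun u => ρ u y b) i x)
    (fun j a => pd (fun v => σ x v a) j y) (fun j b => pd (fun v => ρ x v b) j y)
    (fun j => nCart F j i x y)

end CompatHder

section HderHelpers

variable {n : ℕ} {F : (Fin n → ℝ) → (Fin n → ℝ) → ℝ}

lemma hder_congr_pt {i : Fin n} {f g : (Fin n → ℝ) → (Fin n → ℝ) → ℝ} {x y : Fin n → ℝ}
    (h1 : (fun u => f u y) =ᶠ[nhds x] fun u => g u y)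
    (h2 : (fun v => f x v) =ᶠ[nhds y] fun v => g x v) :
    hder F i f x y = hder F i g x y := by
  unfold hder pd
  rw [h1.fderiv_eq, h2.fderiv_eq]

lemma hder_const_mul {i : Fin n} {w : (Fin n → ℝ) → (Fin n → ℝ) → ℝ} {x y : Fin n → ℝ}
    (hwx : DifferentiableAt ℝ (fun u => w u y) x)
    (hwy : DifferentiableAt ℝ (fun v => w x v) y) (c : ℝ) :
    hder F i (fun u v => c * w u v) x y = c * hder F i w x y := by
  unfold hder
  rw [pd_const_mul hwx c i]
  have h2 : ∀ j, pd (fun y' => c * w x y') j y = c * pd (fun y' => w x y') j y :=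
    fun j => pd_const_mul hwy c j
  simp only [h2]
  rw [mul_sub, Finset.mul_sum]
  congr 1
  exact Finset.sum_congr rfl fun j _ => by ring

end HderHelpers

section MoreSwaps

variable {A B C D : Type*} [Fintype A] [Fintype B] [Fintype C] [Fintype D]

lemma rot3 (g : B → C → D → ℝ) :
    ∑ b, ∑ c, ∑ d, g b c d = ∑ c, ∑ d, ∑ b, g b c d := by
  calc ∑ b, ∑ c, ∑ d, g b c d = ∑ c, ∑ b, ∑ d, g b c d := Finset.sum_comm
    _ = ∑ c, ∑ d, ∑ b, g b c d := Finset.sum_congr rfl fun c _ => Finset.sum_comm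

lemma swap4_pairs (f : A → B → C → D → ℝ) :
    ∑ a, ∑ b, ∑ c, ∑ d, f a b c d = ∑ c, ∑ d, ∑ a, ∑ b, f a b c d := by
  calc ∑ a, ∑ b, ∑ c, ∑ d, f a b c d
      = ∑ a, ∑ c, ∑ d, ∑ b, f a b c d := Finset.sum_congr rfl fun a _ => rot3 _
    _ = ∑ c, ∑ a, ∑ d, ∑ b, f a b c d := Finset.sum_comm
    _ = ∑ c, ∑ d, ∑ a, ∑ b, f a b c d := Finset.sum_congr rfl fun c _ => Finset.sum_comm

end MoreSwaps

lemma final_alg {n m : ℕ} (gI : Fin n → Fin n → ℝ) (Ch : Fin n → Fin n → Fin n → ℝ)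
    (P : Fin n → ℝ) (G : Fin m → Fin m → ℝ)
    (T : Fin m → ℝ) (D : Fin n → Fin m → ℝ) (DD : Fin n → Fin n → Fin m → ℝ) :
    (1/2 : ℝ) * ∑ i, ∑ j, gI i j *
        (2 * ((∑ a, ∑ b, G a b * DD i j a * T b) + ∑ a, ∑ b, G a b * D i a * D j b)
          - (∑ k, Ch k i j * (2 * ∑ a, ∑ b, G a b * D k a * T b))
          - P i * (2 * ∑ a, ∑ b, G a b * D j a * T b))
    = -(∑ a, ∑ b, G a b * (∑ i, ∑ j, gI i j *
          (-DD i j a + ∑ k, Ch k i j * D k a + P i * D j a)) * T b)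
      + ∑ i, ∑ j, gI i j * (∑ a, ∑ b, G a b * D i a * D j b) := by
  have hR : (∑ a, ∑ b, G a b * (∑ i, ∑ j, gI i j *
          (-DD i j a + ∑ k, Ch k i j * D k a + P i * D j a)) * T b)
      = ∑ i, ∑ j, gI i j * (-(∑ a, ∑ b, G a b * DD i j a * T b)
          + (∑ k, Ch k i j * (∑ a, ∑ b, G a b * D k a * T b))
          + P i * (∑ a, ∑ b, G a b * D j a * T b)) := by
    have l1 : (∑ a, ∑ b, G a b * (∑ i, ∑ j, gI i j *
            (-DD i j a + ∑ k, Ch k i j * D k a + P i * D j a)) * T b)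
        = ∑ a, ∑ b, ∑ i, ∑ j, gI i j *
            (G a b * (-DD i j a + ∑ k, Ch k i j * D k a + P i * D j a) * T b) := by
      refine Finset.sum_congr rfl fun a _ => Finset.sum_congr rfl fun b _ => ?_
      rw [Finset.mul_sum, Finset.sum_mul]
      refine Finset.sum_congr rfl fun i _ => ?_
      rw [Finset.mul_sum, Finset.sum_mul]
      exact Finset.sum_congr rfl fun j _ => by ring
    rw [l1, swap4_pairs]
    refine Finset.sum_congr rfl fun i _ => Finset.sum_congr rfl fun j _ => ?_
    -- per (i,j) : Σ_a Σ_b gI i j * (G * M * T) = gI i j * (-X + ΣChZ + PZ)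
    have e0 : ∀ a b, G a b * (-DD i j a + ∑ k, Ch k i j * D k a + P i * D j a) * T b
        = -(G a b * DD i j a * T b) + (∑ k, Ch k i j * (G a b * D k a * T b))
          + P i * (G a b * D j a * T b) := by
      intro a b
      have e1 : G a b * (∑ k, Ch k i j * D k a) * T b
          = ∑ k, Ch k i j * (G a b * D k a * T b) := by
        rw [Finset.mul_sum, Finset.sum_mul]
        exact Finset.sum_congr rfl fun k _ => by ring
      rw [← e1]; ring
    calc (∑ a, ∑ b, gI i j * (G a b * (-DD i j a + ∑ k, Ch k i j * D k a + P i * D j a) * T b))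
        = gI i j * ∑ a, ∑ b, (G a b * (-DD i j a + ∑ k, Ch k i j * D k a + P i * D j a) * T b) := by
          rw [Finset.mul_sum]
          exact Finset.sum_congr rfl fun a _ => by rw [Finset.mul_sum]
      _ = gI i j * (-(∑ a, ∑ b, G a b * DD i j a * T b)
            + (∑ k, Ch k i j * (∑ a, ∑ b, G a b * D k a * T b))
            + P i * (∑ a, ∑ b, G a b * D j a * T b)) := by
          congr 1
          calc (∑ a, ∑ b, (G a b * (-DD i j a + ∑ k, Ch k i j * D k a + P i * D j a) * T b))
              = ∑ a, ∑ b, (-(G a b * DD i j a * T b)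
                  + (∑ k, Ch k i j * (G a b * D k a * T b))
                  + P i * (G a b * D j a * T b)) := by
                exact Finset.sum_congr rfl fun a _ => Finset.sum_congr rfl fun b _ => e0 a b
            _ = -(∑ a, ∑ b, G a b * DD i j a * T b)
                  + (∑ a, ∑ b, ∑ k, Ch k i j * (G a b * D k a * T b))
                  + P i * (∑ a, ∑ b, G a b * D j a * T b) := by
                simp only [Finset.sum_add_distrib, Finset.sum_neg_distrib, Finset.mul_sum]
            _ = -(∑ a, ∑ b, G a b * DD i j a * T b)
                  + (∑ k, Ch k i j * (∑ a, ∑ b, G a b * D k a * T b))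
                  + P i * (∑ a, ∑ b, G a b * D j a * T b) := by
                congr 2
                rw [swap3 (fun a b k => Ch k i j * (G a b * D k a * T b))]
                refine Finset.sum_congr rfl fun k _ => ?_
                rw [Finset.mul_sum]
                exact Finset.sum_congr rfl fun a _ => by rw [Finset.mul_sum]
  rw [hR]
  have hcollapse : ∀ i j : Fin n, (∑ k, Ch k i j * (2 * ∑ a, ∑ b, G a b * D k a * T b))
      = 2 * ∑ k, Ch k i j * (∑ a, ∑ b, G a b * D k a * T b) := by
    intro i j
    rw [Finset.mul_sum]
    exact Finset.sum_congr rfl fun k _ => by ring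
  simp only [hcollapse]
  conv_lhs => rw [Finset.mul_sum]
  conv_rhs => rw [neg_add_eq_sub, ← Finset.sum_sub_distrib]
  refine Finset.sum_congr rfl fun i _ => ?_
  conv_lhs => rw [Finset.mul_sum]
  conv_rhs => rw [← Finset.sum_sub_distrib]
  refine Finset.sum_congr rfl fun j _ => ?_
  ring
/-- the Weitzenböck-type identity
`(1/2) g^{ij}( δ_iδ_j f − Γ^k_{ij} δ_k f − P_i δ_j f ) = −⟨Δτ,τ⟩ + g^{ij}⟨D_iτ,D_jτ⟩`
for `f := ⟨τ,τ⟩`. -/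
theorem weitzenboeck_identity {n m : ℕ}
    (U : Set (Fin n → ℝ)) (F : (Fin n → ℝ) → (Fin n → ℝ) → ℝ) (hF : IsFinsler U F)
    (Ut : Set (Fin m → ℝ)) (gt : (Fin m → ℝ) → Matrix (Fin m) (Fin m) ℝ)
    (hg : IsRiemann Ut gt)
    (φ : (Fin n → ℝ) → Fin m → ℝ) (hφ : ∀ α, ContDiffOn ℝ (⊤ : ℕ∞) (fun x => φ x α) U)
    (hmap : ∀ x ∈ U, φ x ∈ Ut)
    (τ : (Fin n → ℝ) → (Fin n → ℝ) → Fin m → ℝ)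
    (hτ : ∀ α, ContDiffOn ℝ (⊤ : ℕ∞)
      (fun p : (Fin n → ℝ) × (Fin n → ℝ) => τ p.1 p.2 α) (U ×ˢ {y | y ≠ 0})) :
    ∀ x ∈ U, ∀ y : Fin n → ℝ, y ≠ 0 →
      (1 / 2) * ∑ i, ∑ j, gInv F i j x y *
          (hder F i (fun u v => hder F j (fun w z => fInner gt φ τ τ w z) u v) x y
            - (∑ k, chern F k i j x y * hder F k (fun u v => fInner gt φ τ τ u v) x y)
            - pOne F i x y * hder F j (fun u v => fInner gt φ τ τ u v) x y)
      = -(∑ α, ∑ β, gt (φ x) α β * roughLap F gt φ τ x y α * τ x y β)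
        + ∑ i, ∑ j, gInv F i j x y *
            (∑ α, ∑ β, gt (φ x) α β * pullDer F gt φ i τ x y α
              * pullDer F gt φ j τ x y β) := by
  intro x hx y hy
  have hΩ : IsOpen (U ×ˢ {v : Fin n → ℝ | v ≠ 0}) := hF.omega_open
  have hp : ((x, y) : (Fin n → ℝ) × (Fin n → ℝ)) ∈ U ×ˢ {v : Fin n → ℝ | v ≠ 0} :=
    ⟨hx, hy⟩
  have hτ' : ∀ a, ContDiffOn ℝ ∞ (fun q : (Fin n → ℝ) × (Fin n → ℝ) => τ q.1 q.2 a)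
      (U ×ˢ {v : Fin n → ℝ | v ≠ 0}) := fun a => (hτ a).of_le (by simp)
  have hDτcd : ∀ (j : Fin n) (a : Fin m), ContDiffOn ℝ ∞
      (fun q : (Fin n → ℝ) × (Fin n → ℝ) => pullDer F gt φ j τ q.1 q.2 a)
      (U ×ˢ {v : Fin n → ℝ | v ≠ 0}) := fun j a => pullDer_cd hF hg hφ hmap hτ' j a
  have hφdAt : ∀ u ∈ U, DifferentiableAt ℝ φ u := fun u hu =>
    ((contDiffAt_pi.2 fun b => (((hφ b).of_le (by simp)) u hu).contDiffAt
      (hF.isOpen.mem_nhds hu)).differentiableAt (by simp : (∞ : WithTop ℕ∞) ≠ 0))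
  have hτsliceL : ∀ (u v : Fin n → ℝ), u ∈ U → v ≠ 0 → ∀ a : Fin m,
      DifferentiableAt ℝ (fun u' => τ u' v a) u := fun u v hu hv a =>
    sliceL_diff hΩ (hτ' a) (Set.mk_mem_prod hu hv)
  have hτsliceR : ∀ (u v : Fin n → ℝ), u ∈ U → v ≠ 0 → ∀ a : Fin m,
      DifferentiableAt ℝ (fun v' => τ u v' a) v := fun u v hu hv a =>
    sliceR_diff hΩ (hτ' a) (Set.mk_mem_prod hu hv)
  have hstep1 : ∀ u ∈ U, ∀ v : Fin n → ℝ, v ≠ 0 → ∀ j : Fin n,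
      hder F j (fun w z => fInner gt φ τ τ w z) u v
        = 2 * ∑ a, ∑ b, gt (φ u) a b * pullDer F gt φ j τ u v a * τ u v b := by
    intro u hu v hv j
    rw [compat_hder hg (hmap u hu) (hφdAt u hu) (fun a => hτsliceL u v hu hv a)
      (fun a => hτsliceR u v hu hv a) (fun a => hτsliceL u v hu hv a)
      (fun a => hτsliceR u v hu hv a) j]
    have hsw : (∑ a, ∑ b, gt (φ u) a b * τ u v a * pullDer F gt φ j τ u v b)
        = ∑ a, ∑ b, gt (φ u) a b * pullDer F gt φ j τ u v a * τ u v b := by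
      rw [Finset.sum_comm]
      refine Finset.sum_congr rfl fun a _ => Finset.sum_congr rfl fun b _ => ?_
      rw [(hg.symm _ (hmap u hu)).apply a b]
      ring
    rw [hsw]; ring
  have hfirst : ∀ k : Fin n, hder F k (fun u v => fInner gt φ τ τ u v) x y
      = 2 * ∑ a, ∑ b, gt (φ x) a b * pullDer F gt φ k τ x y a * τ x y b :=
    fun k => hstep1 x hx y hy k
  have hDτx : ∀ (j : Fin n) (a : Fin m),
      DifferentiableAt ℝ (fun u => pullDer F gt φ j τ u y a) x :=
    fun j a => sliceL_diff hΩ (hDτcd j a) hp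
  have hDτy : ∀ (j : Fin n) (a : Fin m),
      DifferentiableAt ℝ (fun v => pullDer F gt φ j τ x v a) y :=
    fun j a => sliceR_diff hΩ (hDτcd j a) hp
  have hGφx : ∀ a b : Fin m, DifferentiableAt ℝ (fun u => gt (φ u) a b) x := fun a b =>
    ((((hg.gt_cd a b) (φ x) (hmap x hx)).contDiffAt
      (hg.isOpen.mem_nhds (hmap x hx))).differentiableAt (by simp)).comp x (hφdAt x hx)
  have hGswap : ∀ S R : Fin m → ℝ,
      (∑ a, ∑ b, gt (φ x) a b * S a * R b) = ∑ a, ∑ b, gt (φ x) a b * R a * S b := by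
    intro S R
    rw [Finset.sum_comm]
    refine Finset.sum_congr rfl fun a _ => Finset.sum_congr rfl fun b _ => ?_
    rw [(hg.symm _ (hmap x hx)).apply a b]
    ring
  have hsecond : ∀ i j : Fin n,
      hder F i (fun u v => hder F j (fun w z => fInner gt φ τ τ w z) u v) x y
        = 2 * ((∑ a, ∑ b, gt (φ x) a b *
              pullDer F gt φ i (fun u v β => pullDer F gt φ j τ u v β) x y a * τ x y b)
            + ∑ a, ∑ b, gt (φ x) a b * pullDer F gt φ i τ x y a
                * pullDer F gt φ j τ x y b) := by
    intro i j
    have h1 : (fun u => hder F j (fun w z => fInner gt φ τ τ w z) u y) =ᶠ[nhds x]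
        (fun u => 2 * ∑ a, ∑ b, gt (φ u) a b * pullDer F gt φ j τ u y a * τ u y b) := by
      filter_upwards [hF.isOpen.mem_nhds hx] with u hu
      exact hstep1 u hu y hy j
    have h2 : (fun v => hder F j (fun w z => fInner gt φ τ τ w z) x v) =ᶠ[nhds y]
        (fun v => 2 * ∑ a, ∑ b, gt (φ x) a b * pullDer F gt φ j τ x v a * τ x v b) := by
      filter_upwards [isOpen_ne.mem_nhds hy] with v hv
      exact hstep1 x hx v hv j
    have hwx : DifferentiableAt ℝ
        (fun u => ∑ a, ∑ b, gt (φ u) a b * pullDer F gt φ j τ u y a * τ u y b) x :=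
      DifferentiableAt.fun_sum fun a _ => DifferentiableAt.fun_sum fun b _ =>
        ((hGφx a b).mul (hDτx j a)).mul (hτsliceL x y hx hy b)
    have hwy : DifferentiableAt ℝ
        (fun v => ∑ a, ∑ b, gt (φ x) a b * pullDer F gt φ j τ x v a * τ x v b) y :=
      DifferentiableAt.fun_sum fun a _ => DifferentiableAt.fun_sum fun b _ =>
        ((differentiableAt_const _).mul (hDτy j a)).mul (hτsliceR x y hx hy b)
    calc hder F i (fun u v => hder F j (fun w z => fInner gt φ τ τ w z) u v) x y
        = hder F i (fun u v => 2 * ∑ a, ∑ b, gt (φ u) a b *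
            pullDer F gt φ j τ u v a * τ u v b) x y := hder_congr_pt h1 h2
      _ = 2 * hder F i (fun u v => ∑ a, ∑ b, gt (φ u) a b *
            pullDer F gt φ j τ u v a * τ u v b) x y := hder_const_mul hwx hwy 2
      _ = 2 * ((∑ a, ∑ b, gt (φ x) a b *
              pullDer F gt φ i (fun u v β => pullDer F gt φ j τ u v β) x y a * τ x y b)
            + ∑ a, ∑ b, gt (φ x) a b *
              pullDer F gt φ j τ x y a * pullDer F gt φ i τ x y b) := by
          have hc := compat_hder (F := F) hg (hmap x hx) (hφdAt x hx)
            (σ := fun u v β => pullDer F gt φ j τ u v β) (ρ := τ)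
            (fun a => hDτx j a) (fun a => hDτy j a)
            (fun a => hτsliceL x y hx hy a) (fun a => hτsliceR x y hx hy a) i
          exact congrArg (fun t => 2 * t) hc
      _ = 2 * ((∑ a, ∑ b, gt (φ x) a b *
              pullDer F gt φ i (fun u v β => pullDer F gt φ j τ u v β) x y a * τ x y b)
            + ∑ a, ∑ b, gt (φ x) a b * pullDer F gt φ i τ x y a
                * pullDer F gt φ j τ x y b) := by
          rw [hGswap (fun a => pullDer F gt φ j τ x y a)
            (fun a => pullDer F gt φ i τ x y a)]
  simp only [hsecond, hfirst, roughLap]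
  exact final_alg (fun i j => gInv F i j x y) (fun k i j => chern F k i j x y)
    (fun i => pOne F i x y) (fun a b => gt (φ x) a b) (fun b => τ x y b)
    (fun k a => pullDer F gt φ k τ x y a)
    (fun i j a => pullDer F gt φ i (fun u v β => pullDer F gt φ j τ u v β) x y a)
end
end

section
/- Let (V, ⟨·,·⟩) be a finite-dimensional real inner product space and R : V × V × V → V a trilinear map satisfying the curvature symmetries ⟨R(X,Y)Z,W⟩ = −⟨R(Y,X)Z,W⟩ = −⟨R(X,Y)W,Z⟩ and ⟨R(X,Y)Z,W⟩ = ⟨R(Z,W)X,Y⟩ for all X,Y,Z,W ∈ V. Assume R has strictly negative sectional curvature, i.e. ⟨R(X,Y)Y,X⟩ < 0 whenever X, Y ∈ V are linearly independent. Let (g^{ij}) be a symmetric positive definite real n×n matrix, τ ∈ V, and X₁,…,Xₙ ∈ V with Σ_{i,j} g^{ij} ⟨R(X_i, τ)τ, X_j⟩ = 0. Then either τ = 0 or every X_i lies in the span of τ; in particular, if the span of {X₁,…,Xₙ} has dimension at least 2, then τ = 0. (This is the pointwise step in the proof that a biharmonic map of constant tension norm and rank ≥ 2 into a target of strictly negative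 sectional curvature is harmonic.) -/
/-!
For fixed `τ`, the symmetries of `R` make `q(u, v) = ⟪R u τ τ, v⟫` a symmetric bilinear form, and
negative sectional curvature makes it negative semidefinite with `q(v, v) = 0` only for
`v ∈ ℝ ∙ τ` (when `τ ≠ 0`). Hence the Gram matrix `N = (-q(X i, X j))` is positive semidefinite,
and the hypothesis says `tr (g N) = 0` for the positive definite `g`. Writing `g = √g √g`, this is
the trace of the positive semidefinite matrix `√g N √g`, which therefore vanishes; as `√g` is
invertible, `N = 0`, so `q(X i, X i) = 0` and every `X i` lies on the line through `τ`.
-/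

open scoped RealInnerProductSpace

namespace Matrix

open scoped MatrixOrder ComplexOrder in
theorem PosSemidef.eq_zero_of_trace_mul_eq_zero {n 𝕜 : Type*} [Fintype n] [RCLike 𝕜]
    {g M : Matrix n n 𝕜} (hg : g.PosDef) (hM : M.PosSemidef) (h : (g * M).trace = 0) : M = 0 := by
  classical
  set S := CFC.sqrt g
  have hS_unit : IsUnit S :=
    CFC.isUnit_sqrt_iff_isStrictlyPositive.2 (isStrictlyPositive_iff_posDef.2 hg)
  have hS_herm : Sᴴ = S := (nonneg_iff_posSemidef.1 (CFC.sqrt_nonneg g)).isHermitian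
  have hSMS : (Sᴴ * M * S).PosSemidef := hM.conjTranspose_mul_mul_same S
  have htrace : (Sᴴ * M * S).trace = 0 := by
    rw [hS_herm, trace_mul_cycle, CFC.sqrt_mul_sqrt_self g hg.posSemidef.nonneg, h]
  rw [hSMS.trace_eq_zero_iff, hS_herm, Matrix.mul_assoc, hS_unit.mul_right_eq_zero] at htrace
  exact hS_unit.mul_left_eq_zero.1 htrace

theorem posSemidef_of_bilinForm {ι M : Type*} [Fintype ι] [AddCommGroup M] [Module ℝ M]
    (B : LinearMap.BilinForm ℝ M) (hsymm : ∀ u v, B u v = B v u) (hnonneg : ∀ v, 0 ≤ B v v)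
    (X : ι → M) : (of fun i j => B (X i) (X j)).PosSemidef := by
  refine .of_dotProduct_mulVec_nonneg (IsHermitian.ext fun i j => hsymm _ _) fun x => ?_
  refine (hnonneg (∑ i, x i • X i)).trans_eq ?_
  simp only [star_trivial, dotProduct, mulVec, of_apply, map_sum, map_smul, LinearMap.sum_apply,
    LinearMap.smul_apply, smul_eq_mul, Finset.mul_sum]
  exact Finset.sum_comm.trans
    (Finset.sum_congr rfl fun _ _ => Finset.sum_congr rfl fun _ _ => by ring)

end Matrix

section Curvature

variable {V : Type*} [NormedAddCommGroup V] [InnerProductSpace ℝ V]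
  (R : V →ₗ[ℝ] V →ₗ[ℝ] V →ₗ[ℝ] V)

noncomputable def curvatureForm (τ : V) : LinearMap.BilinForm ℝ V := innerₗ V ∘ₗ (R.flip τ).flip τ

@[simp]
theorem curvatureForm_apply (τ u v : V) : curvatureForm R τ u v = ⟪R u τ τ, v⟫ := rfl

variable {R}

theorem inner_curvature_swap (hskew₁ : ∀ X Y Z W : V, ⟪R X Y Z, W⟫ = -⟪R Y X Z, W⟫)
    (hskew₂ : ∀ X Y Z W : V, ⟪R X Y Z, W⟫ = -⟪R X Y W, Z⟫)
    (hpair : ∀ X Y Z W : V, ⟪R X Y Z, W⟫ = ⟪R Z W X, Y⟫) (u a b v : V) :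
    ⟪R u a b, v⟫ = ⟪R v b a, u⟫ := by
  rw [hpair, hskew₁ b, hskew₂ v, neg_neg]

theorem inner_curvature_self_nonpos (hskew₁ : ∀ X Y Z W : V, ⟪R X Y Z, W⟫ = -⟪R Y X Z, W⟫)
    (hsec : ∀ X Y : V, LinearIndependent ℝ ![X, Y] → ⟪R X Y Y, X⟫ < 0) (v τ : V) :
    ⟪R v τ τ, v⟫ ≤ 0 := by
  by_cases hind : LinearIndependent ℝ ![v, τ]
  · exact (hsec v τ hind).le
  obtain rfl | ⟨a, rfl⟩ : τ = 0 ∨ ∃ a : ℝ, a • τ = v := by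
    simpa [linearIndependent_fin2, or_iff_not_imp_left] using hind
  · simp
  · have hτ : ⟪R τ τ τ, τ⟫ = 0 := by linarith [hskew₁ τ τ τ τ]
    simp [real_inner_smul_left, real_inner_smul_right, hτ]

theorem mem_span_singleton_of_inner_curvature_self_eq_zero
    (hsec : ∀ X Y : V, LinearIndependent ℝ ![X, Y] → ⟪R X Y Y, X⟫ < 0) {v τ : V} (hτ : τ ≠ 0)
    (hv : ⟪R v τ τ, v⟫ = 0) : v ∈ ℝ ∙ τ := by
  by_contra hspan
  refine (hsec v τ (linearIndependent_fin2.2 ⟨hτ, fun a ha => hspan ?_⟩)).ne hv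
  exact Submodule.mem_span_singleton.2 ⟨a, ha⟩

end Curvature

theorem Submodule.finrank_span_range_le_one {K V ι : Type*} [DivisionRing K] [AddCommGroup V]
    [Module K V] {X : ι → V} {τ : V} (h : ∀ i, X i ∈ K ∙ τ) :
    Module.finrank K (span K (Set.range X)) ≤ 1 :=
  (finrank_mono (span_le.2 (Set.range_subset_iff.2 h))).trans <| by
    simpa using finrank_span_le_card (R := K) ({τ} : Set V)

theorem curvature_term_zero_of_neg_curvature_general {V : Type*} [NormedAddCommGroup V]
    [InnerProductSpace ℝ V]
    (R : V →ₗ[ℝ] V →ₗ[ℝ] V →ₗ[ℝ] V)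
    (hskew₁ : ∀ X Y Z W : V, ⟪R X Y Z, W⟫ = -⟪R Y X Z, W⟫)
    (hskew₂ : ∀ X Y Z W : V, ⟪R X Y Z, W⟫ = -⟪R X Y W, Z⟫)
    (hpair : ∀ X Y Z W : V, ⟪R X Y Z, W⟫ = ⟪R Z W X, Y⟫)
    (hsec : ∀ X Y : V, LinearIndependent ℝ ![X, Y] → ⟪R X Y Y, X⟫ < 0)
    {n : ℕ} (g : Matrix (Fin n) (Fin n) ℝ) (hpd : g.PosDef)
    (τ : V) (X : Fin n → V)
    (hzero : ∑ i, ∑ j, g i j * ⟪R (X i) τ τ, X j⟫ = 0) :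
    (τ = 0 ∨ ∀ i, X i ∈ Submodule.span ℝ ({τ} : Set V)) ∧
      (2 ≤ Module.finrank ℝ (Submodule.span ℝ (Set.range X)) → τ = 0) := by
  have hswap := inner_curvature_swap hskew₁ hskew₂ hpair
  set N := Matrix.of fun i j => (-curvatureForm R τ) (X i) (X j)
  have hN : N.PosSemidef := Matrix.posSemidef_of_bilinForm _ (fun u v => by simp [hswap u])
    (fun v => by simpa using inner_curvature_self_nonpos hskew₁ hsec v τ) X
  have htrace : (g * N).trace = -∑ i, ∑ j, g i j * ⟪R (X i) τ τ, X j⟫ := by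
    simp only [N, Matrix.trace, Matrix.diag, Matrix.mul_apply, Matrix.of_apply,
      LinearMap.neg_apply, curvatureForm_apply, ← Finset.sum_neg_distrib]
    refine Finset.sum_congr rfl fun i _ => Finset.sum_congr rfl fun j _ => ?_
    rw [hswap (X j)]
    ring
  rw [hzero, neg_zero] at htrace
  have hdiag (i : Fin n) : ⟪R (X i) τ τ, X i⟫ = 0 := by
    simpa [N] using congrFun₂ (hN.eq_zero_of_trace_mul_eq_zero hpd htrace) i i
  have hspan (hτ : τ ≠ 0) (i : Fin n) : X i ∈ ℝ ∙ τ :=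
    mem_span_singleton_of_inner_curvature_self_eq_zero hsec hτ (hdiag i)
  refine ⟨or_iff_not_imp_left.2 hspan, fun hrank => by_contra fun hτ => ?_⟩
  have := Submodule.finrank_span_range_le_one (hspan hτ)
  omega

/-- if a trilinear map `R` with the algebraic symmetries of a Riemann
curvature tensor has strictly negative sectional curvature, `(g^{ij})` is symmetric
positive definite and `Σ g^{ij} ⟨R(X_i,τ)τ, X_j⟩ = 0`, then either `τ = 0` or every
`X_i` lies in the span of `τ`; in particular, if the span of the `X_i` has dimension
at least `2`, then `τ = 0`. -/
theorem curvature_term_zero_of_neg_curvature {V : Type*} [NormedAddCommGroup V]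
    [InnerProductSpace ℝ V] [FiniteDimensional ℝ V]
    (R : V →ₗ[ℝ] V →ₗ[ℝ] V →ₗ[ℝ] V)
    (hskew₁ : ∀ X Y Z W : V, ⟪R X Y Z, W⟫ = -⟪R Y X Z, W⟫)
    (hskew₂ : ∀ X Y Z W : V, ⟪R X Y Z, W⟫ = -⟪R X Y W, Z⟫)
    (hpair : ∀ X Y Z W : V, ⟪R X Y Z, W⟫ = ⟪R Z W X, Y⟫)
    (hsec : ∀ X Y : V, LinearIndependent ℝ ![X, Y] → ⟪R X Y Y, X⟫ < 0)
    {n : ℕ} (g : Matrix (Fin n) (Fin n) ℝ) (hsymm : g.IsSymm) (hpd : g.PosDef)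
    (τ : V) (X : Fin n → V)
    (hzero : ∑ i, ∑ j, g i j * ⟪R (X i) τ τ, X j⟫ = 0) :
    (τ = 0 ∨ ∀ i, X i ∈ Submodule.span ℝ ({τ} : Set V)) ∧
      (2 ≤ Module.finrank ℝ (Submodule.span ℝ (Set.range X)) → τ = 0) :=
  curvature_term_zero_of_neg_curvature_general R hskew₁ hskew₂ hpair hsec g hpd τ X hzero
end
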